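/- arXiv:1210.7128 — 10 statements merged into one kernel-verified Lean document; each statement's English description precedes it below -/
import Mathlib

section
/- Let n ≥ 2 and r ≥ 1, and let A, M be r×r matrices over ℚ with Aᵗ = −A; set N = −Mᵗ. Assume A − N is invertible, set X = (A−N)⁻¹(A−M), and assume I − X is invertible. Then det H(A,M;n,r) = det((M − N·Xⁿ)·(I − X)⁻¹) · (det(A − N))^(n−1). -/
open Matrix Finset

private def blk {n r : ℕ} (f : Fin n → Fin n → Matrix (Fin r) (Fin r) ℚ) :
    Matrix (Fin n × Fin r) (Fin n × Fin r) ℚ :=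
  Matrix.of fun p q => f p.1 q.1 p.2 q.2

private lemma blk_apply {n r : ℕ} (f : Fin n → Fin n → Matrix (Fin r) (Fin r) ℚ)
    (p q : Fin n × Fin r) : blk f p q = f p.1 q.1 p.2 q.2 := rfl

private lemma blk_mul {n r : ℕ} (f g : Fin n → Fin n → Matrix (Fin r) (Fin r) ℚ) :
    blk f * blk g = blk fun α β => ∑ γ, f α γ * g γ β := by
  ext p q
  rw [Matrix.mul_apply, blk_apply, Matrix.sum_apply, Fintype.sum_prod_type]
  refine Finset.sum_congr rfl fun γ _ => ?_
  rw [Matrix.mul_apply]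
  rfl

private lemma det_blk_upper {n r : ℕ} (hr : 0 < r) (f : Fin n → Fin n → Matrix (Fin r) (Fin r) ℚ)
    (hf : ∀ α β : Fin n, β < α → f α β = 0) :
    (blk f).det = ∏ α, (f α α).det := by
  have hbt : (blk f).BlockTriangular Prod.fst := by
    intro p q h
    rw [blk_apply, hf _ _ h, Matrix.zero_apply]
  rw [hbt.det]
  have himg : (univ : Finset (Fin n × Fin r)).image Prod.fst = univ :=
    Finset.eq_univ_of_forall fun α => Finset.mem_image.mpr ⟨(α, ⟨0, hr⟩), Finset.mem_univ _, rfl⟩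
  rw [himg]
  refine Finset.prod_congr rfl fun a _ => ?_
  let e : {p : Fin n × Fin r // p.1 = a} ≃ Fin r :=
    { toFun := fun p => p.1.2
      invFun := fun j => ⟨(a, j), rfl⟩
      left_inv := by rintro ⟨⟨x, y⟩, rfl⟩; rfl
      right_inv := fun j => rfl }
  have hsq : (blk f).toSquareBlock Prod.fst a = (f a a).submatrix e e := by
    ext p q
    have hp : p.1.1 = a := p.2
    have hq : q.1.1 = a := q.2
    simp only [Matrix.toSquareBlock_def, Matrix.of_apply, Matrix.submatrix_apply, blk_apply]
    rw [hp, hq]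
    rfl
  rw [hsq, Matrix.det_submatrix_equiv_self]

private lemma sum_pred {n : ℕ} {Mt : Type} [AddCommMonoid Mt] (β : Fin n) (f : Fin n → Mt) :
    (∑ γ : Fin n, if ((γ : ℕ) + 1 = (β : ℕ)) then f γ else 0)
      = if h : 0 < (β : ℕ) then f ⟨(β : ℕ) - 1, lt_of_le_of_lt (Nat.sub_le _ _) β.isLt⟩
        else 0 := by
  split_ifs with h
  · rw [Finset.sum_eq_single (⟨(β : ℕ) - 1, lt_of_le_of_lt (Nat.sub_le _ _) β.isLt⟩ : Fin n)]
    · rw [if_pos (by simp only [Fin.val_mk]; omega)]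
    · intro b _ hb
      refine if_neg fun hc => hb (Fin.ext ?_)
      simp only [Fin.val_mk]
      omega
    · exact fun h => absurd (Finset.mem_univ _) h
  · exact Finset.sum_eq_zero fun γ _ => if_neg (by omega)

private def Pp {r : ℕ} (X : Matrix (Fin r) (Fin r) ℚ) (k : ℕ) : Matrix (Fin r) (Fin r) ℚ :=
  ∑ i ∈ Finset.range k, X ^ i

private lemma Pp_eq {r : ℕ} (X : Matrix (Fin r) (Fin r) ℚ) (k : ℕ) :
    Pp X k = ∑ i ∈ Finset.range k, X ^ i := rfl

/-- the block pattern of `H` -/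
private def hbP {r : ℕ} (n : ℕ) (A M N : Matrix (Fin r) (Fin r) ℚ) :
    Fin n → Fin n → Matrix (Fin r) (Fin r) ℚ :=
  fun α β => if α = β then A else if α < β then M else N

/-- the block pattern of `T = F * V`  -/
private def tb {r : ℕ} (n : ℕ) (A M N : Matrix (Fin r) (Fin r) ℚ) :
    Fin n → Fin n → Matrix (Fin r) (Fin r) ℚ :=
  fun γ β => if (γ : ℕ) = n - 1 then (if γ = β then A else N)
    else if γ = β then A - N else if (γ : ℕ) + 1 = (β : ℕ) then M - A else 0

/-- all-identities upper unitriangular block pattern `E` -/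
private def eb (n r : ℕ) : Fin n → Fin n → Matrix (Fin r) (Fin r) ℚ :=
  fun α β => if α ≤ β then 1 else 0

/-- lower unitriangular block pattern `F`, nontrivial only in the last row -/
private def fb {r : ℕ} (n : ℕ) (G : Fin n → Matrix (Fin r) (Fin r) ℚ) :
    Fin n → Fin n → Matrix (Fin r) (Fin r) ℚ :=
  fun γ δ => if γ = δ then 1 else if (γ : ℕ) = n - 1 then G δ else 0

/-- upper bidiagonal block pattern `V` -/
private def vb {r : ℕ} (n : ℕ) (AN Bd MA : Matrix (Fin r) (Fin r) ℚ) :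
    Fin n → Fin n → Matrix (Fin r) (Fin r) ℚ :=
  fun δ β => if δ = β then (if (δ : ℕ) = n - 1 then Bd else AN)
    else if (δ : ℕ) + 1 = (β : ℕ) then MA else 0

/-- determinant of the block matrix `H(A,M;n,r)`:
`det H = det((M - N·Xⁿ)(I - X)⁻¹) · det(A - N)^(n-1)`. -/
theorem stmt_0 (n r : ℕ) (hn : 2 ≤ n) (hr : 1 ≤ r)
    (A M N X : Matrix (Fin r) (Fin r) ℚ)
    (hA : Aᵀ = -A) (hN : N = -Mᵀ)
    (hAN : IsUnit (A - N).det)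
    (hX : X = (A - N)⁻¹ * (A - M))
    (hIX : IsUnit (1 - X).det)
    (H : Matrix (Fin n × Fin r) (Fin n × Fin r) ℚ)
    (hH : ∀ (α β : Fin n) (j k : Fin r),
      H (α, j) (β, k) = if α = β then A j k else if α < β then M j k else N j k) :
    H.det = ((M - N * X ^ n) * (1 - X)⁻¹).det * (A - N).det ^ (n - 1) := by
  have hl' : n - 1 < n := by omega
  set l : Fin n := ⟨n - 1, hl'⟩ with hldef
  have hlval : (l : ℕ) = n - 1 := rfl
  -- basic algebraic identities
  have hANinv : (A - N) * (A - N)⁻¹ = 1 := Matrix.mul_nonsing_inv _ hAN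
  have hinvAN : (A - N)⁻¹ * (A - N) = 1 := Matrix.nonsing_inv_mul _ hAN
  have hANX : (A - N) * X = A - M := by rw [hX, ← mul_assoc, hANinv, one_mul]
  have hinvMA : (A - N)⁻¹ * (M - A) = -X := by rw [hX]; noncomm_ring
  have hcommS : ∀ k, X * (∑ i ∈ Finset.range k, X ^ i) = (∑ i ∈ Finset.range k, X ^ i) * X := by
    intro k
    rw [Finset.mul_sum, Finset.sum_mul]
    exact Finset.sum_congr rfl fun i _ => by rw [← pow_succ', pow_succ]
  have hcomm : ∀ k, X * Pp X k = Pp X k * X := fun k => by rw [Pp_eq]; exact hcommS k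
  have hPone : Pp X 1 = 1 := by simp [Pp_eq]
  have hPsucc : ∀ k, Pp X (k + 1) = 1 + Pp X k * X := by
    intro k
    simp only [Pp_eq, geom_sum_succ]
    rw [hcommS k]
    abel
  have hgeomP : Pp X (n - 1) * (1 - X) = 1 - X ^ (n - 1) := by
    have h := geom_sum_mul X (n - 1)
    rw [Pp_eq]
    calc (∑ i ∈ Finset.range (n - 1), X ^ i) * (1 - X)
        = -((∑ i ∈ Finset.range (n - 1), X ^ i) * (X - 1)) := by noncomm_ring
      _ = -(X ^ (n - 1) - 1) := by rw [h]
      _ = 1 - X ^ (n - 1) := by noncomm_ring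
  set B : Matrix (Fin r) (Fin r) ℚ := A + N * (X * Pp X (n - 1)) with hBdef
  set G : Fin n → Matrix (Fin r) (Fin r) ℚ :=
    fun δ => N * Pp X ((δ : ℕ) + 1) * (A - N)⁻¹ with hGdef
  have hGAN : ∀ k : ℕ, N * Pp X k * (A - N)⁻¹ * (A - N) = N * Pp X k := by
    intro k; rw [mul_assoc, hinvAN, mul_one]
  have hGMA : ∀ k : ℕ, N * Pp X k * (A - N)⁻¹ * (M - A) = -(N * (Pp X k * X)) := by
    intro k; rw [mul_assoc, hinvMA]; noncomm_ring
  -- B = (M - N X^n)(1-X)⁻¹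
  have hB1 : B * (1 - X) = M - N * X ^ n := by
    have hnn : n - 1 + 1 = n := by omega
    calc B * (1 - X) = A * (1 - X) + N * X * (Pp X (n - 1) * (1 - X)) := by
          rw [hBdef]; noncomm_ring
      _ = A * (1 - X) + N * X * (1 - X ^ (n - 1)) := by rw [hgeomP]
      _ = (A - (A - N) * X) - N * (X * X ^ (n - 1)) := by noncomm_ring
      _ = (A - (A - M)) - N * X ^ (n - 1 + 1) := by rw [hANX, ← pow_succ']
      _ = M - N * X ^ n := by rw [hnn]; noncomm_ring
  have hB2 : B = (M - N * X ^ n) * (1 - X)⁻¹ := by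
    have h1 : (1 - X) * (1 - X)⁻¹ = 1 := Matrix.mul_nonsing_inv _ hIX
    calc B = B * ((1 - X) * (1 - X)⁻¹) := by rw [h1, mul_one]
      _ = (B * (1 - X)) * (1 - X)⁻¹ := by rw [mul_assoc]
      _ = (M - N * X ^ n) * (1 - X)⁻¹ := by rw [hB1]
  -- F * V = T at block level
  have hFV : ∀ γ β : Fin n,
      (∑ δ, fb n G γ δ * vb n (A - N) B (M - A) δ β) = tb n A M N γ β := by
    intro γ β
    have hγlt := γ.isLt
    have hβlt := β.isLt
    by_cases hγ : (γ : ℕ) = n - 1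
    · -- last block row
      have h1 : ∀ δ : Fin n, fb n G γ δ * vb n (A - N) B (M - A) δ β
          = (if δ = γ then vb n (A - N) B (M - A) γ β - G γ * vb n (A - N) B (M - A) γ β
              else 0) + G δ * vb n (A - N) B (M - A) δ β := by
        intro δ
        by_cases h : δ = γ
        · subst h
          have hf : fb n G δ δ = 1 := if_pos rfl
          rw [hf, one_mul, if_pos rfl]
          abel
        · have h' : ¬γ = δ := fun hh => h hh.symm
          have hf : fb n G γ δ = G δ := by
            simp only [fb]
            rw [if_neg h', if_pos hγ]
          rw [hf, if_neg h, zero_add]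
      rw [Finset.sum_congr rfl fun δ _ => h1 δ, Finset.sum_add_distrib,
        Finset.sum_ite_eq' Finset.univ γ, if_pos (Finset.mem_univ _)]
      have h2 : ∀ δ : Fin n, G δ * vb n (A - N) B (M - A) δ β
          = (if δ = β then G δ * (if (δ : ℕ) = n - 1 then B else A - N) else 0)
            + (if (δ : ℕ) + 1 = (β : ℕ) then G δ * (M - A) else 0) := by
        intro δ
        by_cases h : δ = β
        · have hne : ¬((δ : ℕ) + 1 = (β : ℕ)) := by rw [h]; omega
          rw [if_pos h, if_neg hne, add_zero]
          simp only [vb]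
          rw [if_pos h]
        · by_cases h' : (δ : ℕ) + 1 = (β : ℕ) <;> simp [vb, h, h']
      rw [Finset.sum_congr rfl fun δ _ => h2 δ, Finset.sum_add_distrib,
        Finset.sum_ite_eq' Finset.univ β, if_pos (Finset.mem_univ _), sum_pred]
      by_cases hβ : γ = β
      · -- β is also the last index
        subst hβ
        have hβ0 : 0 < (γ : ℕ) := by omega
        rw [dif_pos hβ0]
        have hv : vb n (A - N) B (M - A) γ γ = B := by
          simp [vb, hγ]
        have ht : tb n A M N γ γ = A := by
          simp [tb, hγ]
        have hGpred : G ⟨(γ : ℕ) - 1, lt_of_le_of_lt (Nat.sub_le _ _) γ.isLt⟩ * (M - A)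
            = -(N * (X * Pp X (n - 1))) := by
          simp only [hGdef, Fin.val_mk]
          rw [show (γ : ℕ) - 1 + 1 = n - 1 by omega, hGMA (n - 1), hcomm (n - 1)]
        rw [hv, ht, if_pos hγ, hGpred, hBdef]
        abel
      · -- β is not the last index
        have hβn : ¬(β : ℕ) = n - 1 := fun hc => hβ (Fin.ext (by omega))
        have hv0 : vb n (A - N) B (M - A) γ β = 0 := by
          simp only [vb]
          rw [if_neg hβ, if_neg (by omega)]
        have ht : tb n A M N γ β = N := by
          simp only [tb]; rw [if_pos hγ, if_neg hβ]
        rw [hv0, mul_zero, sub_zero, if_neg hβn, ht]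
        have hdiag : G β * (A - N) = N * Pp X ((β : ℕ) + 1) := by
          simp only [hGdef]; exact hGAN _
        by_cases hβ0 : 0 < (β : ℕ)
        · rw [dif_pos hβ0, hdiag]
          have hGpred : G ⟨(β : ℕ) - 1, lt_of_le_of_lt (Nat.sub_le _ _) β.isLt⟩ * (M - A)
              = -(N * (Pp X (β : ℕ) * X)) := by
            simp only [hGdef, Fin.val_mk]
            rw [show (β : ℕ) - 1 + 1 = (β : ℕ) by omega, hGMA]
          rw [hGpred, hPsucc]
          noncomm_ring
        · rw [dif_neg hβ0, hdiag, show (β : ℕ) + 1 = 1 by omega, hPone, mul_one]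
          abel
    · -- not the last block row
      have h1 : ∀ δ : Fin n, fb n G γ δ * vb n (A - N) B (M - A) δ β
          = if γ = δ then vb n (A - N) B (M - A) δ β else 0 := by
        intro δ; by_cases h : γ = δ <;> simp [fb, h, hγ]
      rw [Finset.sum_congr rfl fun δ _ => h1 δ, Finset.sum_ite_eq Finset.univ γ,
        if_pos (Finset.mem_univ _)]
      simp only [vb, tb, hγ, if_false]
  -- E * T = H at block level
  have hET : ∀ α β : Fin n,
      (∑ γ, eb n r α γ * tb n A M N γ β) = hbP n A M N α β := by
    intro α β
    have hαlt := α.isLt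
    have hβlt := β.isLt
    have key : ∀ γ : Fin n, eb n r α γ * tb n A M N γ β
        = (if γ = l then (if l = β then A else N) else 0)
          + (if γ = β then (if (β : ℕ) = n - 1 then 0 else if α ≤ β then A - N else 0) else 0)
          + (if (γ : ℕ) + 1 = (β : ℕ) then (if α ≤ γ then M - A else 0) else 0) := by
      intro γ
      have hγlt := γ.isLt
      simp only [eb, tb, Fin.ext_iff, Fin.le_def, Fin.lt_def, hlval, ite_mul, one_mul, zero_mul]
      split_ifs <;> first | abel1 | (exfalso; omega)
    rw [Finset.sum_congr rfl fun γ _ => key γ, Finset.sum_add_distrib, Finset.sum_add_distrib,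
      Finset.sum_ite_eq' Finset.univ l, if_pos (Finset.mem_univ _),
      Finset.sum_ite_eq' Finset.univ β, if_pos (Finset.mem_univ _), sum_pred]
    by_cases hβ0 : 0 < (β : ℕ)
    · rw [dif_pos hβ0]
      simp only [hbP, Fin.ext_iff, Fin.le_def, Fin.lt_def, Fin.val_mk, hlval]
      split_ifs <;> first | abel1 | (exfalso; omega)
    · rw [dif_neg hβ0]
      simp only [hbP, Fin.ext_iff, Fin.le_def, Fin.lt_def, hlval]
      split_ifs <;> first | abel1 | (exfalso; omega)
  -- assemble the factorization
  have hHb : H = blk (hbP n A M N) := by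
    ext p q
    obtain ⟨α, j⟩ := p
    obtain ⟨β, k⟩ := q
    rw [hH, blk_apply]
    simp only [hbP]
    split_ifs <;> rfl
  have hFVb : blk (fb n G) * blk (vb n (A - N) B (M - A)) = blk (tb n A M N) := by
    rw [blk_mul]
    exact congrArg blk (funext fun γ => funext fun β => hFV γ β)
  have hETb : blk (eb n r) * blk (tb n A M N) = blk (hbP n A M N) := by
    rw [blk_mul]
    exact congrArg blk (funext fun α => funext fun β => hET α β)
  have hfact : H = blk (eb n r) * (blk (fb n G) * blk (vb n (A - N) B (M - A))) := by
    rw [hFVb, hETb, hHb]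
  -- determinants of the factors
  have hdetE : (blk (eb n r)).det = 1 := by
    have h0 : ∀ α β : Fin n, β < α → eb n r α β = 0 := fun α β h => if_neg (not_le.mpr h)
    rw [det_blk_upper hr (eb n r) h0]
    simp [eb]
  have hdetF : (blk (fb n G)).det = 1 := by
    have htr : (blk (fb n G))ᵀ = blk (fun α β => (fb n G β α)ᵀ) := by
      ext p q; rfl
    have h0 : ∀ α β : Fin n, β < α → (fb n G β α)ᵀ = 0 := by
      intro α β h
      have hβα : (β : ℕ) < (α : ℕ) := h
      have hf : fb n G β α = 0 := by
        simp only [fb]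
        rw [if_neg (fun hc => absurd (Fin.ext_iff.mp hc) (by omega)),
          if_neg (by have := α.isLt; omega)]
      rw [hf, Matrix.transpose_zero]
    rw [← Matrix.det_transpose, htr, det_blk_upper hr (fun α β => (fb n G β α)ᵀ) h0]
    simp [fb]
  have hdetV : (blk (vb n (A - N) B (M - A))).det = B.det * (A - N).det ^ (n - 1) := by
    have hv0 : ∀ α β : Fin n, β < α → vb n (A - N) B (M - A) α β = 0 := by
      intro α β h
      have hβα : (β : ℕ) < (α : ℕ) := h
      simp only [vb]
      rw [if_neg (fun hc => absurd (Fin.ext_iff.mp hc) (by omega)), if_neg (by omega)]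
    rw [det_blk_upper hr (vb n (A - N) B (M - A)) hv0]
    have hdiag : ∀ α : Fin n, (vb n (A - N) B (M - A) α α).det
        = if α = l then B.det else (A - N).det := by
      intro α
      have hva : vb n (A - N) B (M - A) α α = if (α : ℕ) = n - 1 then B else A - N :=
        if_pos rfl
      by_cases h : α = l
      · have hval : (α : ℕ) = n - 1 := by rw [h]
        rw [hva, if_pos hval, if_pos h]
      · have hval : ¬(α : ℕ) = n - 1 := fun hc => h (Fin.ext (by rw [hc, hlval]))
        rw [hva, if_neg hval, if_neg h]
    rw [Finset.prod_congr rfl fun α _ => hdiag α,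
      ← Finset.mul_prod_erase univ _ (Finset.mem_univ l), if_pos rfl]
    congr 1
    rw [Finset.prod_congr rfl (fun α hα => if_neg (Finset.mem_erase.mp hα).1),
      Finset.prod_const, Finset.card_erase_of_mem (Finset.mem_univ _), Finset.card_univ,
      Fintype.card_fin]
  rw [hfact, Matrix.det_mul, Matrix.det_mul, hdetE, hdetF, hdetV, one_mul, one_mul, hB2]
end

section
/- Let n ≥ 2 and r ≥ 2. Then: (1) det H_D = det F_D, where F_D = N_r·(X_r + X_r² + ⋯ + X_r^(n−1)); (2) det H_S = 2^((r−1)(n−1)) · det F_S, where F_S = (I + S_rⁿ)·(I − S_r)⁻¹ (over ℚ; I − S_r is invertible); (3) det H_CI = det F_CI, where F_CI = M_r·(I + X_r⁻¹ + X_r⁻² + ⋯ + X_r⁻ⁿ) with X_r⁻¹ = X_rʳ; (4) det H_CII = (−1)^(r(n−1)) · det F_CII, where F_CII = N_r·(I + X_r + X_r² + ⋯ + X_rⁿ). -/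
/-!
Each of the four matrices is an `n × n` block matrix with a constant block `a` on the diagonal,
`b` above it and `c` below it. If `(a - c) Y = a - b`, subtracting from every block row the next
one and then multiplying on the right by the unitriangular block matrix `(Y ^ (β - α))_{α ≤ β}`
leaves a block lower triangular matrix with diagonal `a - c, …, a - c, a + c (Y + ⋯ + Y ^ (n-1))`,
so `det H = det (a - c) ^ (n - 1) * det (a + c ∑ Y ^ i)`.

The four cases use `Y = X, S, X ^ r, X` respectively, through the identities `N X = M`,
`(M + N) S = M + N + S + 1`, `X ^ (r + 1) = 1` and `S ^ r = -1`. The last two are checked on the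
first row only: `X` and `S` send the standard row vector `eᵢ` to `eᵢ₊₁` for `i < r - 1`, so a
matrix commuting with either of them is determined by its first row. Finally `det N = (-1) ^ r`, `det M = 1`, and
`det (1 - (M + N)) = 2 ^ (r - 1)` is the same block reduction with `1 × 1` blocks and `Y = 0`.
-/

open Matrix Finset

section BlockTriangular

variable {R : Type*} [CommRing R] {ι : Type*} [Fintype ι] [DecidableEq ι]
  {α : Type*} [Fintype α] [LinearOrder α]

def fstFiberEquiv (k : α) : {p : α × ι // p.1 = k} ≃ ι where
  toFun p := p.1.2
  invFun i := ⟨(k, i), rfl⟩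
  left_inv := by rintro ⟨⟨_, i⟩, rfl⟩; rfl
  right_inv _ := rfl

theorem det_comp_of_isUpperTriangular {M : Matrix α α (Matrix ι ι R)}
    (h : M.IsUpperTriangular) : (comp α α ι ι R M).det = ∏ k, (M k k).det := by
  rw [h.comp.det_fintype]
  refine prod_congr rfl fun k _ => ?_
  have : (comp α α ι ι R M).toSquareBlock (fun p => id p.1) k =
      (M k k).submatrix (fstFiberEquiv k) (fstFiberEquiv k) := by
    ext ⟨⟨a, i⟩, rfl⟩ ⟨⟨b, j⟩, hb⟩
    obtain rfl : b = a := hb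
    rfl
  rw [this, det_submatrix_equiv_self]

theorem det_comp_of_isLowerTriangular {M : Matrix α α (Matrix ι ι R)}
    (h : M.IsLowerTriangular) : (comp α α ι ι R M).det = ∏ k, (M k k).det := by
  rw [← det_transpose, transpose_comp, det_comp_of_isUpperTriangular]
  · simp only [map_apply, transpose_apply, det_transpose]
  · intro i j hij
    simp [h hij]

end BlockTriangular

section BlockReduction

variable {A : Type*}

def diagAboveBelow (n : ℕ) (a b c : A) : Matrix (Fin n) (Fin n) A :=
  of fun α β => if α = β then a else if α < β then b else c

def superShift [Zero A] [One A] (n : ℕ) : Matrix (Fin n) (Fin n) A :=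
  of fun α β => if (β : ℕ) = α + 1 then 1 else 0

def geomUpper [Monoid A] [Zero A] (n : ℕ) (Y : A) : Matrix (Fin n) (Fin n) A :=
  of fun α β => if α ≤ β then Y ^ ((β : ℕ) - α) else 0

theorem eq_comp_diagAboveBelow {ι : Type*} {n : ℕ} {a b c : Matrix ι ι A}
    {H : Matrix (Fin n × ι) (Fin n × ι) A}
    (h : ∀ α β j k, H (α, j) (β, k) = if α = β then a j k else if α < β then b j k else c j k) :
    H = comp _ _ ι ι A (diagAboveBelow n a b c) := by
  ext ⟨α, j⟩ ⟨β, k⟩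
  rw [h]
  simp only [comp_apply, diagAboveBelow, of_apply]
  split_ifs <;> rfl

variable [Ring A] {m : ℕ}

def rowDiff (n : ℕ) : Matrix (Fin n) (Fin n) A := 1 - superShift n

def reducedDiagAboveBelow (n : ℕ) (a b c Y : A) : Matrix (Fin n) (Fin n) A :=
  rowDiff n * diagAboveBelow n a b c * geomUpper n Y

theorem superShift_row_castSucc (i : Fin m) :
    superShift (A := A) (m + 1) i.castSucc = Pi.single i.succ 1 := by
  ext β
  simp [superShift, Pi.single_apply, Fin.ext_iff]

theorem superShift_row_last : superShift (A := A) (m + 1) (Fin.last m) = 0 := by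
  ext β
  simp only [superShift, of_apply, Fin.val_last, Pi.zero_apply, ite_eq_right_iff]
  omega

theorem rowDiff_mul_row_castSucc (N : Matrix (Fin (m + 1)) (Fin (m + 1)) A) (i : Fin m) :
    (rowDiff (m + 1) * N : Matrix _ _ A) i.castSucc = N i.castSucc - N i.succ := by
  rw [rowDiff, sub_mul, one_mul]
  change N _ - (superShift (m + 1) * N : Matrix _ _ A) _ = _
  rw [mul_apply_eq_vecMul, superShift_row_castSucc, single_one_vecMul]
  rfl

theorem rowDiff_mul_row_last (N : Matrix (Fin (m + 1)) (Fin (m + 1)) A) :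
    (rowDiff (m + 1) * N : Matrix _ _ A) (Fin.last m) = N (Fin.last m) := by
  rw [rowDiff, sub_mul, one_mul]
  change N _ - (superShift (m + 1) * N : Matrix _ _ A) _ = _
  rw [mul_apply_eq_vecMul, superShift_row_last, zero_vecMul, sub_zero]

theorem rowDiff_isUpperTriangular (n : ℕ) : (rowDiff (A := A) n).IsUpperTriangular := by
  intro α β (h : β < α)
  simp only [rowDiff, superShift, Matrix.sub_apply, one_apply_ne h.ne', of_apply]
  rw [if_neg (by omega), sub_zero]

theorem geomUpper_isUpperTriangular (n : ℕ) (Y : A) : (geomUpper n Y).IsUpperTriangular := by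
  intro α β (h : β < α)
  simp [geomUpper, h]

theorem diagAboveBelow_row_castSucc_sub_succ (a b c : A) (i : Fin m) :
    diagAboveBelow (m + 1) a b c i.castSucc - diagAboveBelow (m + 1) a b c i.succ =
      Pi.single i.castSucc (a - c) + Pi.single i.succ (b - a) := by
  ext β
  simp only [diagAboveBelow, of_apply, Pi.sub_apply, Pi.add_apply, Pi.single_apply, Fin.ext_iff,
    Fin.lt_def, Fin.val_castSucc, Fin.val_succ]
  split_ifs <;> first | omega | abel

theorem sum_fin_pow_sub_eq_sum_Icc (Y : A) (m : ℕ) :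
    ∑ i : Fin m, Y ^ (m - i) = ∑ j ∈ Icc 1 m, Y ^ j := by
  rw [Fin.sum_univ_eq_sum_range (fun i => Y ^ (m - i)), ← Nat.Ico_zero_eq_range,
    sum_Ico_reflect (fun j => Y ^ j) 0 (Nat.le_succ m), Nat.add_sub_cancel_left, Nat.sub_zero,
    Ico_add_one_right_eq_Icc]

variable {a b c Y : A}

theorem geomUpper_row_combination (hY : (a - c) * Y = a - b) (i : Fin m) :
    (a - c) • geomUpper (m + 1) Y i.castSucc + (b - a) • geomUpper (m + 1) Y i.succ =
      Pi.single i.castSucc (a - c) := by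
  ext β
  simp only [geomUpper, of_apply, Pi.add_apply, Pi.smul_apply, smul_eq_mul, Pi.single_apply,
    Fin.ext_iff, Fin.le_def, Fin.val_castSucc, Fin.val_succ]
  split_ifs <;> try omega
  · obtain ⟨k, hk⟩ : ∃ k, (β : ℕ) - i = k + 1 := ⟨(β : ℕ) - (i + 1), by omega⟩
    rw [hk, show (β : ℕ) - (i + 1) = k by omega, pow_succ', ← mul_assoc, hY, ← add_mul]
    simp
  · simp [show (β : ℕ) = i by omega]
  · simp

theorem reducedDiagAboveBelow_row_castSucc (hY : (a - c) * Y = a - b) (i : Fin m) :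
    reducedDiagAboveBelow (m + 1) a b c Y i.castSucc = Pi.single i.castSucc (a - c) := by
  rw [reducedDiagAboveBelow, mul_apply_eq_vecMul, rowDiff_mul_row_castSucc,
    diagAboveBelow_row_castSucc_sub_succ, add_vecMul, single_vecMul, single_vecMul,
    ← geomUpper_row_combination hY i]
  rfl

theorem reducedDiagAboveBelow_last_last :
    reducedDiagAboveBelow (m + 1) a b c Y (Fin.last m) (Fin.last m) =
      a + c * ∑ i ∈ Icc 1 m, Y ^ i := by
  rw [reducedDiagAboveBelow, mul_apply_eq_vecMul, rowDiff_mul_row_last, vecMul, dotProduct,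
    Fin.sum_univ_castSucc, ← sum_fin_pow_sub_eq_sum_Icc, mul_sum, add_comm]
  simp [diagAboveBelow, geomUpper, (Fin.castSucc_lt_last _).ne', not_lt_of_ge (Fin.le_last _),
    (Fin.castSucc_lt_last _).le]

theorem reducedDiagAboveBelow_isLowerTriangular (hY : (a - c) * Y = a - b) :
    (reducedDiagAboveBelow (m + 1) a b c Y).IsLowerTriangular := by
  intro α β (h : α < β)
  obtain ⟨i, rfl⟩ := Fin.exists_castSucc_eq.mpr (h.trans_le (Fin.le_last β)).ne
  rw [reducedDiagAboveBelow_row_castSucc hY, Pi.single_eq_of_ne h.ne']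

end BlockReduction

theorem det_comp_diagAboveBelow {R : Type*} [CommRing R] {ι : Type*} [Fintype ι] [DecidableEq ι]
    {m : ℕ} {a b c Y : Matrix ι ι R} (hY : (a - c) * Y = a - b) :
    (comp _ _ ι ι R (diagAboveBelow (m + 1) a b c)).det =
      (a - c).det ^ m * (a + c * ∑ i ∈ Icc 1 m, Y ^ i).det := by
  have hP : (comp _ _ ι ι R (rowDiff (m + 1))).det = 1 := by
    rw [det_comp_of_isUpperTriangular (rowDiff_isUpperTriangular _)]
    simp [rowDiff, superShift]
  have hQ : (comp _ _ ι ι R (geomUpper (m + 1) Y)).det = 1 := by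
    rw [det_comp_of_isUpperTriangular (geomUpper_isUpperTriangular _ _)]
    simp [geomUpper]
  calc (comp _ _ ι ι R (diagAboveBelow (m + 1) a b c)).det
      = (comp _ _ ι ι R (rowDiff (m + 1))).det *
          (comp _ _ ι ι R (diagAboveBelow (m + 1) a b c)).det *
          (comp _ _ ι ι R (geomUpper (m + 1) Y)).det := by rw [hP, hQ, one_mul, mul_one]
    _ = (comp _ _ ι ι R (reducedDiagAboveBelow (m + 1) a b c Y)).det := by
      simp only [reducedDiagAboveBelow, ← det_mul, ← compRingEquiv_apply, map_mul]
    _ = ∏ k, (reducedDiagAboveBelow (m + 1) a b c Y k k).det :=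
      det_comp_of_isLowerTriangular (reducedDiagAboveBelow_isLowerTriangular hY)
    _ = (a - c).det ^ m * (a + c * ∑ i ∈ Icc 1 m, Y ^ i).det := by
      simp [Fin.prod_univ_castSucc, reducedDiagAboveBelow_row_castSucc hY,
        reducedDiagAboveBelow_last_last]

theorem det_diagAboveBelow {R : Type*} [CommRing R] {m : ℕ} {a b c Y : R}
    (hY : (a - c) * Y = a - b) :
    (diagAboveBelow (m + 1) a b c).det = (a - c) ^ m * (a + c * ∑ i ∈ Icc 1 m, Y ^ i) := by
  let s := scalar Unit (α := R)
  have hdet (x : R) : (s x).det = x := by simp [s, det_unique]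
  have hs : (s a - s c) * s Y = s a - s b := by simp only [← map_sub, ← map_mul, hY]
  have : diagAboveBelow (m + 1) a b c =
      (comp _ _ Unit Unit R (diagAboveBelow (m + 1) (s a) (s b) (s c))).submatrix
        (Equiv.prodPUnit _).symm (Equiv.prodPUnit _).symm := by
    ext α β
    simp only [diagAboveBelow, submatrix_apply, comp_apply, of_apply, Equiv.prodPUnit_symm_apply]
    split_ifs <;> simp [s]
  rw [this, det_submatrix_equiv_self, det_comp_diagAboveBelow hs, ← map_sub, hdet]
  simp only [← map_pow, ← map_sum, ← map_mul, ← map_add, hdet]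

theorem one_sub_diagAboveBelow {A : Type*} [Ring A] (n : ℕ) (a b c : A) :
    1 - diagAboveBelow n a b c = diagAboveBelow n (1 - a) (-b) (-c) := by
  ext α β
  simp only [diagAboveBelow, Matrix.sub_apply, one_apply, of_apply]
  split_ifs <;> simp

section GeomSum

variable {A : Type*} [Ring A]

theorem sum_Icc_one_pow_eq_mul_geom_sum (Y : A) (m : ℕ) :
    ∑ i ∈ Icc 1 m, Y ^ i = Y * ∑ i ∈ range m, Y ^ i := by
  rw [← Ico_add_one_right_eq_Icc, sum_Ico_eq_sum_range, mul_sum, Nat.add_sub_cancel]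
  simp only [add_comm 1, pow_succ']

theorem mul_geom_sum_eq_add_mul_sum_Icc {P Q Y : A} (hPQ : P * Y = Q) (m : ℕ) :
    P * ∑ i ∈ range (m + 1 + 1), Y ^ i = P + Q + Q * ∑ i ∈ Icc 1 m, Y ^ i := by
  rw [geom_sum_succ, geom_sum_succ, sum_Icc_one_pow_eq_mul_geom_sum]
  simp only [mul_add, mul_one, ← mul_assoc, hPQ]
  abel

theorem neg_add_neg_one_mul_sum_Icc_mul_one_sub {D S : A} (hDS : D * S = D + S + 1) (m : ℕ) :
    (-D + -1 * ∑ i ∈ Icc 1 m, S ^ i) * (1 - S) = 1 + S ^ (m + 1) := by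
  rw [sum_Icc_one_pow_eq_mul_geom_sum, add_mul, neg_mul, mul_sub, mul_one, hDS, neg_one_mul,
    neg_mul, mul_assoc, geom_sum_mul_neg, mul_sub, mul_one, ← pow_succ']
  abel

end GeomSum

section Inverse

variable {K : Type*} [Field K] {ι : Type*} [Fintype ι] [DecidableEq ι]

theorem isUnit_det_one_sub_of_pow_eq_neg_one (h2 : (2 : K) ≠ 0) {S : Matrix ι ι K} {r : ℕ}
    (hS : S ^ r = -1) : IsUnit (1 - S).det := by
  refine isUnit_det_of_right_inverse (B := (2⁻¹ : K) • ∑ i ∈ range r, S ^ i) ?_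
  rw [Matrix.mul_smul, mul_neg_geom_sum, hS, sub_neg_eq_add, smul_add, ← add_smul,
    ← two_mul, mul_inv_cancel₀ h2, one_smul]

theorem neg_add_neg_one_mul_sum_Icc_eq_mul_inv (h2 : (2 : K) ≠ 0) {D S : Matrix ι ι K} {r : ℕ}
    (hS : S ^ r = -1) (hDS : D * S = D + S + 1) (m : ℕ) :
    -D + -1 * ∑ i ∈ Icc 1 m, S ^ i = (1 + S ^ (m + 1)) * (1 - S)⁻¹ := by
  rw [← neg_add_neg_one_mul_sum_Icc_mul_one_sub hDS]
  exact (mul_nonsing_inv_cancel_right _ _ (isUnit_det_one_sub_of_pow_eq_neg_one h2 hS)).symm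

end Inverse

section CyclicVector

variable {R : Type*} [Ring R] {r : ℕ} [NeZero r] {A : Matrix (Fin r) (Fin r) R}

theorem pow_row_zero_of_shift (hA : ∀ i j : Fin r, (i : ℕ) + 1 = j → A i = Pi.single j 1)
    (k : ℕ) (hk : k < r) : (A ^ k) 0 = Pi.single ⟨k, hk⟩ 1 := by
  induction k with
  | zero =>
    ext j
    simp [one_apply, Pi.single_apply, eq_comm]
  | succ k ih =>
    rw [pow_succ, mul_apply_eq_vecMul, ih (by omega), single_one_vecMul]
    exact hA _ _ rfl

theorem pow_succ_row_zero_of_shift (hA : ∀ i j : Fin r, (i : ℕ) + 1 = j → A i = Pi.single j 1)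
    (k : ℕ) (hk : k < r) : (A ^ (k + 1)) 0 = A ⟨k, hk⟩ := by
  rw [pow_succ, mul_apply_eq_vecMul, pow_row_zero_of_shift hA k hk, single_one_vecMul]
  rfl

theorem eq_of_commute_of_row_zero (hA : ∀ i j : Fin r, (i : ℕ) + 1 = j → A i = Pi.single j 1)
    {C D : Matrix (Fin r) (Fin r) R} (hC : Commute A C) (hD : Commute A D) (h0 : C 0 = D 0) :
    C = D := by
  have row_eq (E : Matrix (Fin r) (Fin r) R) (hE : Commute A E) (i : Fin r) :
      E i = E 0 ᵥ* A ^ (i : ℕ) := by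
    rw [← mul_apply_eq_vecMul, ← (hE.pow_left i).eq, mul_apply_eq_vecMul,
      pow_row_zero_of_shift hA i i.isLt, single_one_vecMul]
    rfl
  funext i
  rw [row_eq C hC, row_eq D hD, h0]

end CyclicVector

section PaperMatrices

variable (R : Type*) [Ring R] (r : ℕ)

/-- The paper's `N_r`; its `M_r` is `-(negUpperOnes R r)ᵀ`. -/
def negUpperOnes : Matrix (Fin r) (Fin r) R :=
  of fun i j => if i ≤ j then -1 else 0

/-- The paper's `S_r`. -/
def negCyclicShift : Matrix (Fin r) (Fin r) R :=
  of fun i j => if (i : ℕ) + 1 = j then 1 else if (i : ℕ) = r - 1 ∧ (j : ℕ) = 0 then -1 else 0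

/-- The paper's `X_r`, the companion matrix of `1 + x + ⋯ + x ^ r`. -/
def geomCompanion : Matrix (Fin r) (Fin r) R :=
  of fun i j => if (i : ℕ) = r - 1 then -1 else if (i : ℕ) + 1 = j then 1 else 0

variable {R r}

theorem negCyclicShift_row_of_val_add_one_eq (i j : Fin r) (h : (i : ℕ) + 1 = j) :
    negCyclicShift R r i = Pi.single j 1 := by
  ext k
  have := j.is_lt
  have := k.is_lt
  simp only [negCyclicShift, of_apply, Pi.single_apply, Fin.ext_iff]
  split_ifs <;> first | rfl | omega

theorem geomCompanion_row_of_val_add_one_eq (i j : Fin r) (h : (i : ℕ) + 1 = j) :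
    geomCompanion R r i = Pi.single j 1 := by
  ext k
  have := j.is_lt
  have := k.is_lt
  simp only [geomCompanion, of_apply, Pi.single_apply, Fin.ext_iff]
  split_ifs <;> first | rfl | omega

theorem neg_transpose_add_negUpperOnes :
    -(negUpperOnes R r)ᵀ + negUpperOnes R r = diagAboveBelow r 0 (-1) 1 := by
  ext i k
  simp only [negUpperOnes, diagAboveBelow, of_apply, Matrix.add_apply, Matrix.neg_apply,
    transpose_apply, Fin.le_iff_val_le_val, Fin.lt_def, Fin.ext_iff]
  split_ifs <;> first | omega | simp

variable [NeZero r]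

theorem negCyclicShift_pow_self : negCyclicShift R r ^ r = -1 := by
  refine eq_of_commute_of_row_zero negCyclicShift_row_of_val_add_one_eq
    (Commute.self_pow _ _) (Commute.neg_one_right _) ?_
  obtain ⟨s, rfl⟩ : ∃ s, r = s + 1 := ⟨r - 1, (Nat.sub_add_cancel NeZero.one_le).symm⟩
  rw [pow_succ_row_zero_of_shift negCyclicShift_row_of_val_add_one_eq s s.lt_add_one]
  ext k
  rw [Matrix.neg_apply, Matrix.one_apply]
  simp only [negCyclicShift, of_apply, Fin.ext_iff, Fin.val_zero]
  split_ifs <;> first | rfl | exact neg_zero.symm | omega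

theorem sum_range_geomCompanion_pow : ∑ t ∈ range (r + 1), geomCompanion R r ^ t = 0 := by
  have hX := geomCompanion_row_of_val_add_one_eq (R := R) (r := r)
  refine eq_of_commute_of_row_zero hX
    (Commute.sum_right _ _ _ fun t _ => Commute.self_pow _ t) (Commute.zero_right _) ?_
  obtain ⟨s, rfl⟩ : ∃ s, r = s + 1 := ⟨r - 1, (Nat.sub_add_cancel NeZero.one_le).symm⟩
  ext k
  rw [Matrix.sum_apply, sum_range_succ, pow_succ_row_zero_of_shift hX s s.lt_add_one,
    ← Fin.sum_univ_eq_sum_range (fun t => (geomCompanion R (s + 1) ^ t) 0 k)]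
  simp_rw [pow_row_zero_of_shift hX _ (Fin.is_lt _)]
  simp [geomCompanion]

theorem geomCompanion_pow_succ_self : geomCompanion R r ^ (r + 1) = 1 := by
  rw [← sub_eq_zero, ← geom_sum_mul, sum_range_geomCompanion_pow, zero_mul]

theorem mul_negCyclicShift_apply (M : Matrix (Fin r) (Fin r) R) (i k : Fin r) :
    (M * negCyclicShift R r) i k =
      if (k : ℕ) = 0 then -M i ⟨r - 1, by have := NeZero.pos r; omega⟩
      else M i ⟨k - 1, by omega⟩ := by
  have hcol : (fun l => negCyclicShift R r l k) =
      if (k : ℕ) = 0 then -Pi.single ⟨r - 1, by have := NeZero.pos r; omega⟩ 1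
      else Pi.single ⟨k - 1, by omega⟩ 1 := by
    ext l
    have := l.is_lt
    simp only [negCyclicShift, of_apply, ite_apply, Pi.neg_apply, Pi.single_apply, Fin.ext_iff]
    split_ifs <;> first | omega | simp
  rw [mul_apply', hcol]
  split_ifs <;> simp

theorem mul_geomCompanion_apply (M : Matrix (Fin r) (Fin r) R) (i k : Fin r) :
    (M * geomCompanion R r) i k =
      (if (k : ℕ) = 0 then 0 else M i ⟨k - 1, by omega⟩) -
        M i ⟨r - 1, by have := NeZero.pos r; omega⟩ := by
  have hcol : (fun l => geomCompanion R r l k) =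
      (if (k : ℕ) = 0 then 0 else Pi.single ⟨k - 1, by omega⟩ 1) -
        Pi.single ⟨r - 1, by have := NeZero.pos r; omega⟩ 1 := by
    ext l
    have := l.is_lt
    simp only [geomCompanion, of_apply, ite_apply, Pi.sub_apply, Pi.zero_apply, Pi.single_apply,
      Fin.ext_iff]
    split_ifs <;> first | omega | simp
  rw [mul_apply', hcol, dotProduct_sub]
  split_ifs <;> simp

theorem negUpperOnes_mul_geomCompanion :
    negUpperOnes R r * geomCompanion R r = -(negUpperOnes R r)ᵀ := by
  ext i k
  rw [mul_geomCompanion_apply]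
  simp only [negUpperOnes, of_apply, Matrix.neg_apply, transpose_apply, Fin.le_iff_val_le_val]
  split_ifs <;> first | omega | simp

theorem neg_transpose_negUpperOnes_mul_geomCompanion_pow :
    -(negUpperOnes R r)ᵀ * geomCompanion R r ^ r = negUpperOnes R r := by
  rw [← negUpperOnes_mul_geomCompanion, mul_assoc, ← pow_succ', geomCompanion_pow_succ_self,
    mul_one]

theorem diagAboveBelow_mul_negCyclicShift :
    diagAboveBelow r (0 : R) (-1) 1 * negCyclicShift R r =
      diagAboveBelow r 0 (-1) 1 + negCyclicShift R r + 1 := by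
  ext i k
  rw [mul_negCyclicShift_apply]
  have := i.is_lt
  simp only [diagAboveBelow, negCyclicShift, of_apply, Matrix.add_apply, one_apply, Fin.ext_iff,
    Fin.lt_def]
  split_ifs <;> first | omega | simp

end PaperMatrices

section PaperDeterminants

variable {R : Type*} [CommRing R] {r : ℕ}

theorem det_negUpperOnes : (negUpperOnes R r).det = (-1) ^ r := by
  rw [det_of_isUpperTriangular]
  · simp [negUpperOnes]
  · intro i j (h : j < i)
    simp [negUpperOnes, not_le.mpr h]

theorem det_neg_negUpperOnes : (-negUpperOnes R r).det = 1 := by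
  rw [det_neg, det_negUpperOnes, Fintype.card_fin, ← mul_pow, neg_one_mul, neg_neg, one_pow]

theorem det_neg_transpose_negUpperOnes : (-(negUpperOnes R r)ᵀ).det = 1 := by
  rw [← transpose_neg, det_transpose, det_neg_negUpperOnes]

theorem det_one_sub_diagAboveBelow_zero_neg_one_one [NeZero r] :
    (1 - diagAboveBelow r (0 : R) (-1) 1).det = 2 ^ (r - 1) := by
  obtain ⟨s, rfl⟩ : ∃ s, r = s + 1 := ⟨r - 1, (Nat.sub_add_cancel NeZero.one_le).symm⟩
  rw [one_sub_diagAboveBelow, det_diagAboveBelow (Y := 0) (by simp)]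
  simp [sum_Icc_one_pow_eq_mul_geom_sum, one_add_one_eq_two]

end PaperDeterminants

/-- determinant reductions `det H = (unit factor) · det F` for the
Dipper–Donkin, FRT, Combined I and Combined II matrices. -/
theorem stmt_2 (n r : ℕ) (hn : 2 ≤ n) (hr : 2 ≤ r)
    (Nr Mr Sr Xr : Matrix (Fin r) (Fin r) ℚ)
    (hNr : ∀ i j : Fin r, Nr i j = if i ≤ j then -1 else 0)
    (hMr : Mr = -Nrᵀ)
    (hSr : ∀ i j : Fin r, Sr i j =
      if (i : ℕ) + 1 = (j : ℕ) then 1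
      else if (i : ℕ) = r - 1 ∧ (j : ℕ) = 0 then -1 else 0)
    (hXr : ∀ i j : Fin r, Xr i j =
      if (i : ℕ) = r - 1 then -1
      else if (i : ℕ) + 1 = (j : ℕ) then 1 else 0)
    (HD HS HCI HCII : Matrix (Fin n × Fin r) (Fin n × Fin r) ℚ)
    (hHD : ∀ (α β : Fin n) (j k : Fin r), HD (α, j) (β, k) =
      if α = β then 0 else if α < β then Mr j k else Nr j k)
    (hHS : ∀ (α β : Fin n) (j k : Fin r), HS (α, j) (β, k) =
      if α = β then (-(Mr + Nr)) j k
      else if α < β then (1 : Matrix (Fin r) (Fin r) ℚ) j k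
      else (-1 : Matrix (Fin r) (Fin r) ℚ) j k)
    (hHCI : ∀ (α β : Fin n) (j k : Fin r), HCI (α, j) (β, k) =
      if α = β then (Mr + Nr) j k else if α < β then Mr j k else Nr j k)
    (hHCII : ∀ (α β : Fin n) (j k : Fin r), HCII (α, j) (β, k) =
      if α = β then (Mr + Nr) j k else if α < β then Nr j k else Mr j k) :
    HD.det = (Nr * ∑ i ∈ Finset.Icc 1 (n - 1), Xr ^ i).det ∧
    HS.det = 2 ^ ((r - 1) * (n - 1)) * ((1 + Sr ^ n) * (1 - Sr)⁻¹).det ∧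
    HCI.det = (Mr * ∑ i ∈ Finset.range (n + 1), (Xr ^ r) ^ i).det ∧
    HCII.det = (-1 : ℚ) ^ (r * (n - 1)) * (Nr * ∑ i ∈ Finset.range (n + 1), Xr ^ i).det := by
  obtain ⟨m, rfl⟩ : ∃ m, n = m + 1 := ⟨n - 1, by omega⟩
  have : NeZero r := ⟨by omega⟩
  obtain rfl : Nr = negUpperOnes ℚ r := Matrix.ext hNr
  obtain rfl : Sr = negCyclicShift ℚ r := Matrix.ext hSr
  obtain rfl : Xr = geomCompanion ℚ r := Matrix.ext hXr
  subst hMr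
  have hNX := negUpperOnes_mul_geomCompanion (R := ℚ) (r := r)
  have hMX := neg_transpose_negUpperOnes_mul_geomCompanion_pow (R := ℚ) (r := r)
  have hDS := diagAboveBelow_mul_negCyclicShift (R := ℚ) (r := r)
  simp only [Nat.add_sub_cancel]
  refine ⟨?_, ?_, ?_, ?_⟩
  · rw [eq_comp_diagAboveBelow (a := 0) hHD, det_comp_diagAboveBelow
      (by rw [zero_sub, zero_sub, neg_mul, hNX]), zero_sub, det_neg_negUpperOnes, one_pow,
      one_mul, zero_add]
  · rw [eq_comp_diagAboveBelow hHS, neg_transpose_add_negUpperOnes, det_comp_diagAboveBelow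
      (by rw [sub_neg_eq_add, add_mul, neg_mul, hDS, one_mul]; abel), sub_neg_eq_add,
      neg_add_eq_sub, det_one_sub_diagAboveBelow_zero_neg_one_one, ← pow_mul,
      neg_add_neg_one_mul_sum_Icc_eq_mul_inv two_ne_zero negCyclicShift_pow_self hDS]
  · rw [eq_comp_diagAboveBelow hHCI, det_comp_diagAboveBelow
      (by rw [add_sub_cancel_right, add_sub_cancel_left, hMX]), add_sub_cancel_right,
      det_neg_transpose_negUpperOnes, one_pow, one_mul, mul_geom_sum_eq_add_mul_sum_Icc hMX]
  · rw [eq_comp_diagAboveBelow hHCII, det_comp_diagAboveBelow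
      (by rw [add_sub_cancel_left, add_sub_cancel_right, hNX]), add_sub_cancel_left,
      det_negUpperOnes, ← pow_mul, mul_geom_sum_eq_add_mul_sum_Icc hNX, add_comm (-_)]
end

section
/- Let n ≥ 2, r ≥ 2, and let s = gcd(n−1, r+1). Then the rank of H_D over ℚ equals nr − (s − 1); equivalently, the corank of H_D is gcd(n−1, r+1) − 1. -/
/-!
Write `y a j` for the entries of a vector `x` in the kernel. Subtracting consecutive rows of
`H_D x = 0` shows that `y` is constant along the diagonals `a - j` and that any `r + 1`
consecutive diagonal values sum to zero, so `y a j = G (a - j)` for some `G : ZMod (r + 1) → ℚ`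
with zero sum. The last row then says that any `n - 1` consecutive values of `G` sum to zero,
i.e. `G` is invariant under translation by `n - 1`, hence by `s = gcd (n - 1) (r + 1)`. So the
kernel consists exactly of the vectors `f (a - j)` with `f : ZMod s → ℚ` of zero sum, an
`(s - 1)`-dimensional space.
-/

open Matrix Finset

section ZModSums

variable {M : Type*} [AddCommMonoid M] {m : ℕ} [NeZero m]

theorem ZMod.sum_range_natCast (g : ZMod m → M) : ∑ i ∈ range m, g i = ∑ c, g c := by
  obtain ⟨k, rfl⟩ : ∃ k, m = k + 1 := Nat.exists_eq_succ_of_ne_zero (NeZero.ne m)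
  rw [← Fin.sum_univ_eq_sum_range (fun i => g i)]
  exact sum_congr rfl fun c _ => congrArg g (Fin.cast_val_eq_self c)

theorem ZMod.sum_range_mul_add (f : ZMod m → M) (t : ZMod m) (k : ℕ) :
    ∑ i ∈ range (k * m), f (t + i) = k • ∑ c, f c := by
  induction k with
  | zero => simp
  | succ k ih =>
    rw [Nat.succ_mul, sum_range_add, ih, succ_nsmul]
    congr 1
    simp only [Nat.cast_add, Nat.cast_mul, ZMod.natCast_self, mul_zero, zero_add]
    rw [ZMod.sum_range_natCast (fun c => f (t + c))]
    exact Equiv.sum_comp (Equiv.addLeft t) f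

theorem ZMod.sum_range_mul_sub (f : ZMod m → M) (t : ZMod m) (k : ℕ) :
    ∑ i ∈ range (k * m), f (t - i) = k • ∑ c, f c := by
  have h := ZMod.sum_range_mul_add (fun c => f (t - c)) 0 k
  simp only [zero_add] at h
  rw [h]
  congr 1
  exact Equiv.sum_comp (Equiv.subLeft t) f

end ZModSums

section ZModSucc

variable {r : ℕ}

theorem ZMod.neg_natCast_ne_one {j : ℕ} (hj : j < r) : -(j : ZMod (r + 1)) ≠ 1 := by
  intro h
  have h' : ((j + 1 : ℕ) : ZMod (r + 1)) = 0 := by push_cast; linear_combination -h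
  have := Nat.le_of_dvd (Nat.succ_pos j) ((ZMod.natCast_eq_zero_iff _ _).1 h')
  omega

theorem ZMod.eq_one_or_eq_neg_natCast (c : ZMod (r + 1)) : c = 1 ∨ ∃ j < r, c = -j := by
  refine or_iff_not_imp_left.2 fun h => ⟨(-c).val, ?_, by rw [ZMod.natCast_zmod_val, neg_neg]⟩
  have hlt := ZMod.val_lt (-c)
  refine lt_of_le_of_ne (Nat.lt_succ_iff.1 hlt) fun hv => h ?_
  have hr : ((r + 1 : ℕ) : ZMod (r + 1)) = 0 := ZMod.natCast_self _
  have hc := ZMod.natCast_zmod_val (-c)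
  rw [hv] at hc
  push_cast at hr
  linear_combination hc - hr

theorem ZMod.sum_eq_add_sum_range_neg {M : Type*} [AddCommMonoid M] (H : ZMod (r + 1) → M) :
    ∑ c, H c = H 1 + ∑ j ∈ range r, H (-j) := by
  rw [← one_smul ℕ (∑ c, H c), ← ZMod.sum_range_mul_sub H 1 1, one_mul, sum_range_succ',
    add_comm]
  simp only [Nat.cast_zero, sub_zero, Nat.cast_succ, sub_add_eq_sub_sub, sub_sub_cancel_left]

end ZModSucc

theorem Fin.sum_univ_ite_eq_sum_filter_range {M : Type*} [AddCommMonoid M] {n : ℕ}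
    (p : ℕ → Prop) [DecidablePred p] (g : ℕ → M) :
    ∑ i : Fin n, (if p i then g i else 0) = ∑ i ∈ (range n).filter p, g i := by
  rw [sum_filter, Fin.sum_univ_eq_sum_range (fun i => if p i then g i else 0)]

instance Nat.gcd_neZero_right {a b : ℕ} [NeZero b] : NeZero (Nat.gcd a b) :=
  ⟨(Nat.gcd_pos_of_pos_right a (NeZero.pos b)).ne'⟩

theorem Function.Periodic.exists_eq_comp_intCast {α : Type*} {m d : ℕ} [NeZero m]
    {G : ZMod m → α} (hG : Function.Periodic G (d : ZMod m)) :
    ∃ f : ZMod (Nat.gcd d m) → α, ∀ u : ℤ, G u = f u := by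
  have hgcd : ((Nat.gcd d m : ℤ) : ZMod m) = Nat.gcdA d m * d := by
    rw [Nat.gcd_eq_gcd_ab d m]
    push_cast
    rw [ZMod.natCast_self]
    ring
  have hperiodic : Function.Periodic (fun u : ℤ => G u) (Nat.gcd d m) := fun u => by
    simp only [Int.cast_add, hgcd]
    exact hG.int_mul _ _
  refine ⟨fun c => G (c.val : ℤ), fun u => ?_⟩
  have h := hperiodic.int_mul (u / Nat.gcd d m) (u % Nat.gcd d m)
  simp only [Int.cast_id, mul_comm (u / _), Int.emod_add_mul_ediv] at h
  rw [h]
  dsimp only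
  rw [ZMod.val_intCast]

theorem finrank_ker_sum_proj {K ι : Type*} [Field K] [Fintype ι] [Nonempty ι] :
    Module.finrank K (LinearMap.ker (∑ i : ι, LinearMap.proj i : (ι → K) →ₗ[K] K)) =
      Fintype.card ι - 1 := by
  classical
  have hsurj : LinearMap.range (∑ i : ι, LinearMap.proj i : (ι → K) →ₗ[K] K) = ⊤ := by
    refine LinearMap.range_eq_top.2 fun q => ⟨Pi.single (Classical.arbitrary ι) q, ?_⟩
    simp
  have h := LinearMap.finrank_range_add_finrank_ker (∑ i : ι, LinearMap.proj i : (ι → K) →ₗ[K] K)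
  rw [hsurj, finrank_top, Module.finrank_self, Module.finrank_fintype_fun_eq_card] at h
  omega

def lowerOnes (r : ℕ) : Matrix (Fin r) (Fin r) ℚ := fun i j => if j ≤ i then 1 else 0

def dipperDonkin (n r : ℕ) : Matrix (Fin n × Fin r) (Fin n × Fin r) ℚ := fun p q =>
  if p.1 = q.1 then 0 else if p.1 < q.1 then lowerOnes r p.2 q.2 else (-(lowerOnes r)ᵀ) p.2 q.2

def rowSum (n r : ℕ) (y : ℕ → ℕ → ℚ) (a j : ℕ) : ℚ :=
  ∑ b ∈ Ico (a + 1) n, ∑ k ∈ range (j + 1), y b k - ∑ b ∈ range a, ∑ k ∈ Ico j r, y b k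

theorem dipperDonkin_mulVec_apply {n r : ℕ} {x : Fin n × Fin r → ℚ} {y : ℕ → ℕ → ℚ}
    (hy : ∀ (b : Fin n) (k : Fin r), y b k = x (b, k)) (α : Fin n) (j : Fin r) :
    (dipperDonkin n r *ᵥ x) (α, j) = rowSum n r y α j := by
  have hfilter : ∀ a m : ℕ, a < m → ((range m).filter (· ≤ a) = range (a + 1) ∧
      (range m).filter (a ≤ ·) = Ico a m ∧ (range m).filter (a < ·) = Ico (a + 1) m ∧
      (range m).filter (· < a) = range a) := by
    intro a m h
    refine ⟨?_, ?_, ?_, ?_⟩ <;> ext <;> simp only [mem_filter, mem_range, mem_Ico] <;> omega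
  obtain ⟨hj₁, hj₂, -, -⟩ := hfilter j r j.isLt
  obtain ⟨-, -, hα₁, hα₂⟩ := hfilter α n α.isLt
  have inner : ∀ β : Fin n, ∑ k : Fin r, dipperDonkin n r (α, j) (β, k) * x (β, k) =
      (if (α : ℕ) < β then ∑ k ∈ range (j + 1), y β k else 0) -
        (if (β : ℕ) < α then ∑ k ∈ Ico (j : ℕ) r, y β k else 0) := by
    intro β
    simp only [dipperDonkin, lowerOnes, Matrix.neg_apply, transpose_apply, ← hy, ite_mul, one_mul,
      zero_mul, neg_mul, Fin.ext_iff, Fin.lt_def]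
    split_ifs <;> try omega
    all_goals simp only [Fin.le_iff_val_le_val, sum_const_zero, sub_zero, zero_sub,
      sum_neg_distrib, Fin.sum_univ_ite_eq_sum_filter_range (fun k => k ≤ (j : ℕ)) (y β),
      Fin.sum_univ_ite_eq_sum_filter_range (fun k => (j : ℕ) ≤ k) (y β), hj₁, hj₂]
  simp only [mulVec, dotProduct, Fintype.sum_prod_type, inner, sum_sub_distrib, rowSum,
    Fin.sum_univ_ite_eq_sum_filter_range (fun b => (α : ℕ) < b)
      (fun b => ∑ k ∈ range (j + 1), y b k),
    Fin.sum_univ_ite_eq_sum_filter_range (fun b => b < (α : ℕ))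
      (fun b => ∑ k ∈ Ico (j : ℕ) r, y b k), hα₁, hα₂]

/-- The entries `y (a + 1) k` (`k ≤ j`) and `y a k` (`j ≤ k`) lie on the `r + 1` consecutive
diagonals `a + 1 - r, …, a + 1`. -/
def hookSum (r : ℕ) (y : ℕ → ℕ → ℚ) (a j : ℕ) : ℚ :=
  ∑ k ∈ range (j + 1), y (a + 1) k + ∑ k ∈ Ico j r, y a k

section RowSums

variable {n r : ℕ} {y : ℕ → ℕ → ℚ}

theorem rowSum_eq_rowSum_succ_add_hookSum {a : ℕ} (ha : a + 1 < n) (j : ℕ) :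
    rowSum n r y a j = rowSum n r y (a + 1) j + hookSum r y a j := by
  rw [rowSum, rowSum, hookSum, sum_eq_sum_Ico_succ_bot ha,
    sum_range_succ (fun b => ∑ k ∈ Ico j r, y b k) a]
  ring

theorem rowSum_last (j : ℕ) :
    rowSum n r y (n - 1) j = -∑ k ∈ Ico j r, ∑ b ∈ range (n - 1), y b k := by
  rw [rowSum, Ico_eq_empty_of_le (by omega), sum_empty, zero_sub, sum_comm]

theorem hookSum_eq_zero_of_rowSum_eq_zero (hE : ∀ a < n, ∀ j < r, rowSum n r y a j = 0)
    {a j : ℕ} (ha : a + 1 < n) (hj : j < r) : hookSum r y a j = 0 := by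
  have h := rowSum_eq_rowSum_succ_add_hookSum (r := r) (y := y) ha j
  rw [hE a (by omega) j hj, hE (a + 1) ha j hj, zero_add] at h
  exact h.symm

theorem sum_range_eq_zero_of_rowSum_eq_zero (hn : 0 < n)
    (hE : ∀ a < n, ∀ j < r, rowSum n r y a j = 0) {k : ℕ} (hk : k < r) :
    ∑ b ∈ range (n - 1), y b k = 0 := by
  have h₁ := rowSum_last (n := n) (r := r) (y := y) k
  rw [hE (n - 1) (by omega) k hk, sum_eq_sum_Ico_succ_bot hk] at h₁
  have h₂ : rowSum n r y (n - 1) (k + 1) = 0 := by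
    rcases (show k + 1 ≤ r from hk).lt_or_eq with hk' | hk'
    · exact hE (n - 1) (by omega) (k + 1) hk'
    · rw [rowSum_last, hk', Ico_self, sum_empty, neg_zero]
  rw [rowSum_last] at h₂
  linarith

theorem rowSum_eq_zero_of_hookSum_eq_zero
    (hhook : ∀ a j, a + 1 < n → j < r → hookSum r y a j = 0)
    (hcol : ∀ k < r, ∑ b ∈ range (n - 1), y b k = 0) :
    ∀ a < n, ∀ j < r, rowSum n r y a j = 0 := by
  intro a ha j hj
  obtain ⟨d, hd⟩ : ∃ d, a + d = n - 1 := ⟨n - 1 - a, by omega⟩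
  induction d generalizing a with
  | zero =>
    obtain rfl : a = n - 1 := by omega
    rw [rowSum_last, sum_eq_zero fun k hk => hcol k (mem_Ico.1 hk).2, neg_zero]
  | succ d ih =>
    rw [rowSum_eq_rowSum_succ_add_hookSum (by omega), ih (a + 1) (by omega) (by omega),
      hhook a j (by omega) hj, add_zero]

theorem eq_of_hookSum_eq_zero (hhook : ∀ a j, a + 1 < n → j < r → hookSum r y a j = 0)
    {a j : ℕ} (ha : a + 1 < n) (hj : j + 1 < r) : y (a + 1) (j + 1) = y a j := by
  have h₁ := hhook a j ha (by omega)
  have h₂ := hhook a (j + 1) ha hj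
  rw [hookSum, sum_eq_sum_Ico_succ_bot (by omega : j < r)] at h₁
  rw [hookSum, sum_range_succ] at h₂
  linarith

end RowSums

theorem hookSum_comp_sub {R : Type*} [CommRing R] (F : R → ℚ) {r a j : ℕ} (hj : j < r) :
    hookSum r (fun b k => F (b - k)) a j = ∑ i ∈ range (r + 1), F (a + 1 - i) := by
  rw [hookSum, show r + 1 = (j + 1) + (r - j) by omega,
    sum_range_add (fun i => F (a + 1 - i)), sum_Ico_eq_sum_range]
  congr 1 <;> refine sum_congr rfl fun i _ => congrArg F ?_ <;> push_cast <;> ring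

theorem rowSum_comp_sub_eq_zero {n r s : ℕ} [NeZero s] (hs₁ : s ∣ n - 1) (hs₂ : s ∣ r + 1)
    {f : ZMod s → ℚ} (hf : ∑ c, f c = 0) :
    ∀ a < n, ∀ j < r, rowSum n r (fun b k => f (b - k)) a j = 0 := by
  obtain ⟨p, hp⟩ := hs₁
  obtain ⟨q, hq⟩ := hs₂
  refine rowSum_eq_zero_of_hookSum_eq_zero (fun a j _ hj => ?_) fun k _ => ?_
  · rw [hookSum_comp_sub f hj, hq, mul_comm, ZMod.sum_range_mul_sub, hf, smul_zero]
  · simp_rw [sub_eq_neg_add (b := ((k : ℕ) : ZMod s))]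
    rw [hp, mul_comm, ZMod.sum_range_mul_add, hf, smul_zero]

/-- The diagonal `-j` (for `j < r`) is read off at `y 0 j`, the remaining class `1` at `y 1 0`. -/
def diagonalProfile (r : ℕ) (y : ℕ → ℕ → ℚ) : ZMod (r + 1) → ℚ :=
  fun c => if c = 1 then y 1 0 else y 0 (-c).val

section DiagonalProfile

variable {n r : ℕ} {y : ℕ → ℕ → ℚ}

theorem diagonalProfile_neg_natCast {j : ℕ} (hj : j < r) : diagonalProfile r y (-j) = y 0 j := by
  rw [diagonalProfile, if_neg (ZMod.neg_natCast_ne_one hj), neg_neg,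
    ZMod.val_natCast_of_lt (by omega)]

theorem sum_diagonalProfile (hn : 2 ≤ n) (hr : 0 < r)
    (hhook : ∀ a j, a + 1 < n → j < r → hookSum r y a j = 0) :
    ∑ c, diagonalProfile r y c = 0 := by
  rw [← hhook 0 0 (by omega) hr, ZMod.sum_eq_add_sum_range_neg, hookSum, sum_range_one,
    Nat.Ico_zero_eq_range, diagonalProfile, if_pos rfl]
  exact congrArg _ (sum_congr rfl fun j hj => diagonalProfile_neg_natCast (mem_range.1 hj))

theorem eq_diagonalProfile (hn : 2 ≤ n) (hr : 0 < r)
    (hhook : ∀ a j, a + 1 < n → j < r → hookSum r y a j = 0) :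
    ∀ a < n, ∀ j < r, y a j = diagonalProfile r y (a - j) := by
  intro a
  induction a with
  | zero =>
    intro _ j hj
    rw [Nat.cast_zero, zero_sub, diagonalProfile_neg_natCast hj]
  | succ a ih =>
    intro ha j hj
    cases j with
    | succ j =>
      rw [eq_of_hookSum_eq_zero hhook ha hj, ih (by omega) j (by omega)]
      congr 1
      push_cast
      ring
    | zero =>
      have hwin := ZMod.sum_range_mul_sub (diagonalProfile r y) (a + 1) 1
      rw [one_mul, one_smul, sum_diagonalProfile hn hr hhook, sum_range_succ'] at hwin
      have hh := hhook a 0 ha hr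
      rw [hookSum, sum_range_one, Nat.Ico_zero_eq_range] at hh
      have hrow : ∑ k ∈ range r, y a k =
          ∑ i ∈ range r, diagonalProfile r y ((a + 1 : ZMod (r + 1)) - (i + 1 : ℕ)) :=
        sum_congr rfl fun i hi => by
          rw [ih (by omega) i (mem_range.1 hi)]
          congr 1
          push_cast
          ring
      rw [← hrow] at hwin
      simp only [Nat.cast_zero, sub_zero] at hwin
      rw [Nat.cast_succ, Nat.cast_zero, sub_zero]
      linarith

theorem diagonalProfile_periodic (hn : 2 ≤ n) (hr : 0 < r)
    (hhook : ∀ a j, a + 1 < n → j < r → hookSum r y a j = 0)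
    (hcol : ∀ k < r, ∑ b ∈ range (n - 1), y b k = 0) :
    Function.Periodic (diagonalProfile r y) ((n - 1 : ℕ) : ZMod (r + 1)) := by
  set G := diagonalProfile r y
  set W : ZMod (r + 1) → ℚ := fun t => ∑ i ∈ range (n - 1), G (t + i)
  have hW_neg : ∀ j < r, W (-j) = 0 := fun j hj => by
    rw [← hcol j hj]
    refine sum_congr rfl fun b hb => ?_
    rw [eq_diagonalProfile hn hr hhook b (by have := mem_range.1 hb; omega) j hj, neg_add_eq_sub]
  have hW_sum : ∑ t, W t = 0 := by
    have hshift : ∀ i : ℕ, ∑ t, G (t + i) = ∑ t, G t :=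
      fun i => Equiv.sum_comp (Equiv.addRight (i : ZMod (r + 1))) G
    simp only [W]
    rw [sum_comm]
    have hG : ∑ t, G t = 0 := sum_diagonalProfile hn hr hhook
    simp only [hshift, hG, sum_const_zero]
  have hW : ∀ t, W t = 0 := by
    rw [ZMod.sum_eq_add_sum_range_neg, sum_eq_zero fun j hj => hW_neg j (mem_range.1 hj),
      add_zero] at hW_sum
    intro t
    rcases ZMod.eq_one_or_eq_neg_natCast t with rfl | ⟨j, hj, rfl⟩
    exacts [hW_sum, hW_neg j hj]
  intro t
  have h₀ : ∑ i ∈ range (n - 1), G (t + i) = 0 := hW t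
  have h₁ : ∑ i ∈ range (n - 1), G (t + (i + 1 : ℕ)) = 0 := by
    rw [← hW (t + 1)]
    exact sum_congr rfl fun i _ => by push_cast; ring_nf
  have h := sum_range_succ' (fun i : ℕ => G (t + i)) (n - 1)
  rwa [sum_range_succ, h₀, h₁, zero_add, zero_add, Nat.cast_zero, add_zero] at h

end DiagonalProfile

def diagonalClass (n r s : ℕ) (p : Fin n × Fin r) : ZMod s :=
  ((p.1 : ℕ) : ZMod s) - ((p.2 : ℕ) : ZMod s)

theorem diagonalClass_surjective {n r s : ℕ} [NeZero s] (hs : s ≤ n) (hr : 0 < r) :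
    Function.Surjective (diagonalClass n r s) := fun c =>
  ⟨(⟨c.val, (ZMod.val_lt c).trans_le hs⟩, ⟨0, hr⟩), by simp [diagonalClass]⟩

theorem exists_eq_of_rowSum_eq_zero {n r : ℕ} {y : ℕ → ℕ → ℚ} (hn : 2 ≤ n) (hr : 0 < r)
    (hE : ∀ a < n, ∀ j < r, rowSum n r y a j = 0) :
    ∃ f : ZMod (Nat.gcd (n - 1) (r + 1)) → ℚ,
      ∑ c, f c = 0 ∧ ∀ a < n, ∀ j < r, y a j = f (a - j) := by
  have hhook : ∀ a j, a + 1 < n → j < r → hookSum r y a j = 0 :=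
    fun _ _ => hookSum_eq_zero_of_rowSum_eq_zero hE
  have hcol : ∀ k < r, ∑ b ∈ range (n - 1), y b k = 0 :=
    fun _ => sum_range_eq_zero_of_rowSum_eq_zero (by omega) hE
  obtain ⟨f, hf⟩ := (diagonalProfile_periodic hn hr hhook hcol).exists_eq_comp_intCast
  refine ⟨f, ?_, fun a ha j hj => ?_⟩
  · have hsum := sum_diagonalProfile hn hr hhook
    rw [← ZMod.sum_range_natCast] at hsum
    have hblocks := ZMod.sum_range_mul_add f 0 ((r + 1) / Nat.gcd (n - 1) (r + 1))
    rw [Nat.div_mul_cancel (Nat.gcd_dvd_right _ _)] at hblocks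
    have hfi : ∀ i : ℕ, diagonalProfile r y i = f (0 + i) := fun i => by simpa using hf i
    rw [sum_congr rfl fun i _ => hfi i, hblocks] at hsum
    refine (smul_eq_zero.1 hsum).resolve_left (Nat.div_pos ?_ (NeZero.pos _)).ne'
    exact Nat.gcd_le_right _ r.succ_pos
  · rw [eq_diagonalProfile hn hr hhook a ha j hj]
    have := hf ((a : ℤ) - j)
    push_cast at this
    exact this

theorem ker_mulVecLin_dipperDonkin {n r : ℕ} (hn : 2 ≤ n) (hr : 0 < r) :
    LinearMap.ker (dipperDonkin n r).mulVecLin =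
      (LinearMap.ker (∑ c, LinearMap.proj c : (ZMod (Nat.gcd (n - 1) (r + 1)) → ℚ) →ₗ[ℚ] ℚ)).map
        (LinearMap.funLeft ℚ ℚ (diagonalClass n r _)) := by
  ext x
  simp only [LinearMap.mem_ker, mulVecLin_apply, Submodule.mem_map, LinearMap.sum_apply,
    LinearMap.proj_apply]
  constructor
  · intro hx
    let y : ℕ → ℕ → ℚ := fun b k => if h : b < n ∧ k < r then x (⟨b, h.1⟩, ⟨k, h.2⟩) else 0
    have hy : ∀ (b : Fin n) (k : Fin r), y b k = x (b, k) := fun b k => dif_pos ⟨b.isLt, k.isLt⟩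
    obtain ⟨f, hf, hfy⟩ := exists_eq_of_rowSum_eq_zero (y := y) hn hr fun a ha j hj => by
      rw [← dipperDonkin_mulVec_apply hy ⟨a, ha⟩ ⟨j, hj⟩, hx, Pi.zero_apply]
    refine ⟨f, hf, funext fun p => ?_⟩
    rw [LinearMap.funLeft_apply, diagonalClass, ← hy, hfy _ p.1.isLt _ p.2.isLt]
  · rintro ⟨f, hf, rfl⟩
    funext p
    rw [dipperDonkin_mulVec_apply (y := fun b k => f (b - k)) (fun _ _ => rfl) p.1 p.2]
    exact rowSum_comp_sub_eq_zero (Nat.gcd_dvd_left _ _) (Nat.gcd_dvd_right _ _) hf _ p.1.isLt _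
      p.2.isLt

theorem rank_dipperDonkin {n r : ℕ} (hn : 2 ≤ n) (hr : 0 < r) :
    (dipperDonkin n r).rank = n * r - (Nat.gcd (n - 1) (r + 1) - 1) := by
  have hsurj := diagonalClass_surjective (n := n) (s := Nat.gcd (n - 1) (r + 1))
    ((Nat.gcd_le_left _ (by omega)).trans (Nat.sub_le n 1)) hr
  have h := LinearMap.finrank_range_add_finrank_ker (dipperDonkin n r).mulVecLin
  rw [ker_mulVecLin_dipperDonkin hn hr, ← LinearEquiv.finrank_eq (Submodule.equivMapOfInjective _
    (LinearMap.funLeft_injective_of_surjective _ _ _ hsurj) _), finrank_ker_sum_proj, ZMod.card,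
    Module.finrank_fintype_fun_eq_card, Fintype.card_prod, Fintype.card_fin, Fintype.card_fin] at h
  rw [Matrix.rank]
  omega

/-- the corank of the Dipper–Donkin matrix `H_D` is
`gcd(n-1, r+1) - 1`, i.e. its rank is `nr - (gcd(n-1,r+1) - 1)`. -/
theorem stmt_3 (n r : ℕ) (hn : 2 ≤ n) (hr : 2 ≤ r)
    (Mr Nr : Matrix (Fin r) (Fin r) ℚ)
    (hMr : ∀ i j : Fin r, Mr i j = if j ≤ i then 1 else 0)
    (hNr : Nr = -Mrᵀ)
    (HD : Matrix (Fin n × Fin r) (Fin n × Fin r) ℚ)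
    (hHD : ∀ (α β : Fin n) (j k : Fin r), HD (α, j) (β, k) =
      if α = β then 0 else if α < β then Mr j k else Nr j k) :
    HD.rank = n * r - (Nat.gcd (n - 1) (r + 1) - 1) := by
  obtain rfl : Mr = lowerOnes r := Matrix.ext hMr
  subst hNr
  obtain rfl : HD = dipperDonkin n r := Matrix.ext fun p q => hHD p.1 q.1 p.2 q.2
  exact rank_dipperDonkin hn (by omega)
end

section
/- Let n ≥ 2, r ≥ 2, and let s = gcd(n+1, r+1). Then the rank of H_CI over ℚ equals nr − (s−1), and the rank of H_CII over ℚ also equals nr − (s−1); i.e., corank(H_CI) = s − 1 = corank(H_CII). -/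
/-!
Write `U` for the upper unitriangular all-ones matrix. After reversing the order of the blocks of
`H_CII`, both matrices equal `K - Kᵀ` with `K = U ⊗ Uᵀ`. The Kronecker factor `Kᵀ = Uᵀ ⊗ U` is
invertible and `Kᵀ (A ⊗ B) = K` for the explicit matrices `A = (Uᵀ)⁻¹ U` and `B = U⁻¹ Uᵀ`, so the
rank is that of `A ⊗ B - 1`. A fixed vector of `A ⊗ B` is constant along antidiagonals,
`v (i, j) = u (i + j)` with `u` a function on `ℤ/(r+1)` of sum zero, and the first block row of the
equation says that all sums of `n + 1` cyclically consecutive values of `u` vanish. Hence `u` is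
also `(n + 1)`-periodic, so it factors through `ℤ/s` as a function of sum zero; these form a space
of dimension `s - 1`.
-/

open Matrix Finset Function
open scoped Kronecker

namespace ZMod

variable {M : Type*} {N : ℕ}

lemma sum_range_natCast_s5 [NeZero N] [AddCommMonoid M] (f : ZMod N → M) :
    ∑ i ∈ range N, f i = ∑ x, f x := by
  refine sum_nbij' (fun i => (i : ZMod N)) val (fun _ _ => mem_univ _)
    (fun x _ => mem_range.mpr x.val_lt) (fun i hi => val_cast_of_lt (mem_range.mp hi))
    (fun x _ => natCast_zmod_val x) (fun _ _ => rfl)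

lemma sum_range_add [NeZero N] [AddCommMonoid M] (f : ZMod N → M) (t : ZMod N) :
    ∑ i ∈ range N, f (t + i) = ∑ x, f x := by
  rw [sum_range_natCast_s5 fun x => f (t + x)]
  exact Equiv.sum_comp (Equiv.addLeft t) f

lemma sum_range_mul_add_s5 [NeZero N] [AddCommMonoid M] (f : ZMod N → M) (t : ZMod N) (q : ℕ) :
    ∑ i ∈ range (q * N), f (t + i) = q • ∑ x, f x := by
  induction q with
  | zero => simp
  | succ q ih =>
    rw [add_mul, one_mul, Finset.sum_range_add, ih, succ_nsmul, ← sum_range_add f t]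
    simp

lemma sum_sum_range_add [NeZero N] [AddCommMonoid M] (f : ZMod N → M) (L : ℕ) :
    ∑ t, ∑ i ∈ range L, f (t + i) = L • ∑ x, f x := by
  calc ∑ t, ∑ i ∈ range L, f (t + i) = ∑ i ∈ range L, ∑ x, f x :=
        sum_comm.trans <| sum_congr rfl fun i _ => Equiv.sum_comp (Equiv.addRight (i : ZMod N)) f
    _ = L • ∑ x, f x := by rw [sum_const, card_range]

lemma periodic_gcd {β : Type*} {f : ZMod N → β} {a : ℕ} (h : Periodic f a) :
    Periodic f (Nat.gcd a N) := by
  have : (Nat.gcd a N : ZMod N) = Nat.gcdA a N • (a : ZMod N) := by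
    have := congrArg (Int.cast : ℤ → ZMod N) (Nat.gcd_eq_gcd_ab a N)
    push_cast [natCast_self] at this
    rw [this, zsmul_eq_mul]; ring
  rw [this]
  exact h.zsmul _

lemma eq_comp_castHom_of_periodic [NeZero N] {β : Type*} {d : ℕ} [NeZero d] (hd : d ∣ N)
    {f : ZMod N → β} (h : Periodic f d) :
    f = (fun b : ZMod d => f (cast b)) ∘ castHom hd (ZMod d) := by
  funext x
  simp only [Function.comp_apply, castHom_apply, cast_eq_val, val_natCast]
  conv_lhs => rw [← natCast_zmod_val x, ← Nat.mod_add_div x.val d, Nat.cast_add, Nat.cast_mul,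
    mul_comm]
  exact h.nat_mul _ _

lemma sum_comp_castHom [NeZero N] [AddCommMonoid M] {d : ℕ} [NeZero d] (hd : d ∣ N)
    (g : ZMod d → M) :
    ∑ x : ZMod N, g (castHom hd (ZMod d) x) = (N / d) • ∑ b, g b := by
  rw [← sum_range_natCast_s5, ← sum_range_mul_add_s5 g 0, Nat.div_mul_cancel hd]
  simp

end ZMod

lemma Function.periodic_of_sum_range_add_eq_zero {α M : Type*} [AddCommMonoidWithOne α]
    [AddCommGroup M] {f : α → M} {L : ℕ} (h : ∀ t, ∑ i ∈ range L, f (t + i) = 0) :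
    Periodic f L := by
  intro t
  have h₁ := sum_range_succ (fun i : ℕ => f (t + i)) L
  have h₂ := sum_range_succ' (fun i : ℕ => f (t + i)) L
  simp only [h, Nat.cast_succ, ← add_assoc, add_right_comm t _ 1, Nat.cast_zero, add_zero,
    zero_add] at h₁ h₂
  exact h₁.symm.trans h₂

section Factorization

variable {R : Type*} [CommRing R]

def upperOnes (m : ℕ) : Matrix (Fin m) (Fin m) R := of fun i j => if i ≤ j then 1 else 0

/-- `(Uᵀ)⁻¹ * U` for `U = upperOnes (m + 1)`: ones in the first row, `-1` on the subdiagonal. -/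
def sumShift (m : ℕ) : Matrix (Fin (m + 1)) (Fin (m + 1)) R :=
  of fun i j => Fin.cases 1 (fun i' => if j = i'.castSucc then -1 else 0) i

def sumShiftRev (m : ℕ) : Matrix (Fin (m + 1)) (Fin (m + 1)) R :=
  (sumShift m).submatrix Fin.rev Fin.rev

variable {m : ℕ}

lemma det_upperOnes : (upperOnes m : Matrix (Fin m) (Fin m) R).det = 1 := by
  have h : (upperOnes m : Matrix (Fin m) (Fin m) R).IsUpperTriangular :=
    fun _ _ hij => if_neg (not_le.mpr hij)
  rw [det_of_isUpperTriangular h]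
  simp [upperOnes]

lemma upperOnes_submatrix_rev :
    (upperOnes m : Matrix (Fin m) (Fin m) R).submatrix Fin.rev Fin.rev = (upperOnes m)ᵀ := by
  ext i j
  simp [upperOnes]

lemma upperOnes_transpose_mul_sumShift :
    (upperOnes (m + 1))ᵀ * sumShift m = (upperOnes (m + 1) : Matrix _ _ R) := by
  ext i k
  induction k using Fin.lastCases with
  | last =>
    simp [upperOnes, sumShift, mul_apply, Fin.sum_univ_succ, (Fin.castSucc_ne_last _).symm,
      Fin.le_last]
  | cast k =>
    simp only [upperOnes, sumShift, transpose_apply, mul_apply, of_apply, Fin.sum_univ_succ,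
      Fin.cases_zero, Fin.cases_succ, Fin.zero_le, Fin.castSucc_inj, Fin.le_castSucc_iff]
    rw [Fintype.sum_eq_single k fun j hj => by simp [Ne.symm hj]]
    by_cases h : i < k.succ <;> simp [h, ← not_lt]

lemma upperOnes_mul_sumShiftRev :
    upperOnes (m + 1) * sumShiftRev m = ((upperOnes (m + 1))ᵀ : Matrix _ _ R) := by
  have hU : ((upperOnes (m + 1))ᵀ : Matrix _ _ R).submatrix Fin.rev Fin.rev =
      upperOnes (m + 1) := by
    rw [← transpose_submatrix, upperOnes_submatrix_rev, transpose_transpose]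
  calc upperOnes (m + 1) * sumShiftRev m
      = ((upperOnes (m + 1))ᵀ : Matrix _ _ R).submatrix Fin.rev Fin.revPerm *
          (sumShift m).submatrix Fin.revPerm Fin.rev := congrArg₂ (· * ·) hU.symm rfl
    _ = ((upperOnes (m + 1))ᵀ * sumShift m : Matrix _ _ R).submatrix Fin.rev Fin.rev :=
      submatrix_mul_equiv _ _ _ _ _
    _ = _ := by rw [upperOnes_transpose_mul_sumShift, upperOnes_submatrix_rev]

lemma sumShift_mulVec_zero (y : Fin (m + 1) → R) : (sumShift m *ᵥ y) 0 = ∑ i, y i := by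
  simp [sumShift, mulVec, dotProduct]

lemma sumShift_mulVec_succ (y : Fin (m + 1) → R) (i : Fin m) :
    (sumShift m *ᵥ y) i.succ = -y i.castSucc := by
  simp [sumShift, mulVec, dotProduct]

lemma sumShiftRev_mulVec (x : Fin (m + 1) → R) :
    sumShiftRev m *ᵥ x = (sumShift m *ᵥ (x ∘ Fin.rev)) ∘ Fin.rev :=
  submatrix_mulVec_equiv (sumShift m) x Fin.rev Fin.revPerm

lemma sumShiftRev_mulVec_last (x : Fin (m + 1) → R) :
    (sumShiftRev m *ᵥ x) (Fin.last m) = ∑ j, x j := by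
  rw [sumShiftRev_mulVec, Function.comp_apply, Fin.rev_last, sumShift_mulVec_zero]
  exact Equiv.sum_comp Fin.revPerm x

lemma sumShiftRev_mulVec_castSucc (x : Fin (m + 1) → R) (j : Fin m) :
    (sumShiftRev m *ᵥ x) j.castSucc = -x j.succ := by
  rw [sumShiftRev_mulVec, Function.comp_apply, Fin.rev_castSucc, sumShift_mulVec_succ,
    Function.comp_apply, ← Fin.rev_succ, Fin.rev_rev]

lemma kronecker_mulVec_apply {l m n p : Type*} [Fintype m] [Fintype p] (A : Matrix l m R)
    (B : Matrix n p R) (v : m × p → R) (i : l) (j : n) :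
    (A ⊗ₖ B *ᵥ v) (i, j) = (A *ᵥ fun i' => (B *ᵥ fun j' => v (i', j')) j) i := by
  simp [mulVec, dotProduct, Fintype.sum_prod_type, mul_sum, mul_assoc]

lemma kronecker_upperOnes_sub_transpose (m n : ℕ) :
    upperOnes (m + 1) ⊗ₖ (upperOnes (n + 1))ᵀ - (upperOnes (m + 1) ⊗ₖ (upperOnes (n + 1))ᵀ)ᵀ =
      (upperOnes (m + 1))ᵀ ⊗ₖ upperOnes (n + 1) *
        (sumShift m ⊗ₖ sumShiftRev n - 1 : Matrix _ _ R) := by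
  rw [mul_sub, mul_one, ← mul_kronecker_mul, upperOnes_transpose_mul_sumShift,
    upperOnes_mul_sumShiftRev, ← kroneckerMap_transpose, transpose_transpose]

lemma rank_kronecker_upperOnes_sub_transpose_eq_rank (m n : ℕ) :
    (upperOnes (m + 1) ⊗ₖ (upperOnes (n + 1))ᵀ -
      (upperOnes (m + 1) ⊗ₖ (upperOnes (n + 1))ᵀ)ᵀ : Matrix _ _ R).rank =
      (sumShift m ⊗ₖ sumShiftRev n - 1 : Matrix _ _ R).rank := by
  rw [kronecker_upperOnes_sub_transpose, rank_mul_eq_right_of_isUnit_det]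
  simp [det_kronecker, det_upperOnes]

end Factorization

instance Nat.neZero_gcd_add_one_left (a b : ℕ) : NeZero (Nat.gcd (a + 1) b) :=
  ⟨(Nat.gcd_pos_of_pos_left b a.succ_pos).ne'⟩

section Kernel

variable {F : Type*} [Field F] {m n : ℕ}

def antidiagLift (N : ℕ) {a b : ℕ} : (ZMod N → F) →ₗ[F] (Fin a × Fin b → F) :=
  LinearMap.funLeft F F fun p => ((p.1 : ℕ) + (p.2 : ℕ) : ZMod N)

@[simp]
lemma antidiagLift_apply (N : ℕ) {a b : ℕ} (u : ZMod N → F) (i : Fin a) (j : Fin b) :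
    antidiagLift N u (i, j) = u ((i : ℕ) + (j : ℕ)) :=
  rfl

lemma antidiagLift_comp_castHom {N d a b : ℕ} (hd : d ∣ N) (w : ZMod d → F) :
    (antidiagLift N (w ∘ ZMod.castHom hd (ZMod d)) : Fin a × Fin b → F) = antidiagLift d w := by
  ext ⟨i, j⟩
  simp only [antidiagLift_apply, Function.comp_apply, map_add, map_natCast]

lemma antidiagLift_injective {N a b : ℕ} [NeZero N] (h : N ≤ a + b + 1) :
    Injective (antidiagLift N : (ZMod N → F) →ₗ[F] (Fin (a + 1) × Fin (b + 1) → F)) := by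
  refine LinearMap.funLeft_injective_of_surjective _ _ _ fun t => ?_
  have ht := t.val_lt
  by_cases hb : t.val ≤ b
  · refine ⟨(0, ⟨t.val, by omega⟩), ?_⟩
    simp
  · refine ⟨(⟨t.val - b, by omega⟩, Fin.last b), ?_⟩
    simp only [Fin.val_last]
    rw [← Nat.cast_add, Nat.sub_add_cancel (by omega), ZMod.natCast_zmod_val]

lemma sumShift_kronecker_mulVec_zero (v : Fin (m + 1) × Fin (n + 1) → F) (j : Fin (n + 1)) :
    (sumShift m ⊗ₖ sumShiftRev n *ᵥ v) (0, j) = ∑ i, (sumShiftRev n *ᵥ fun k => v (i, k)) j := by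
  rw [kronecker_mulVec_apply, sumShift_mulVec_zero]

lemma sumShift_kronecker_mulVec_succ (v : Fin (m + 1) × Fin (n + 1) → F) (i : Fin m)
    (j : Fin (n + 1)) :
    (sumShift m ⊗ₖ sumShiftRev n *ᵥ v) (i.succ, j) =
      -(sumShiftRev n *ᵥ fun k => v (i.castSucc, k)) j := by
  rw [kronecker_mulVec_apply, sumShift_mulVec_succ]

lemma eq_of_forall_mulVec_succ {x y : Fin (m + 1) × Fin (n + 1) → F}
    (hx : ∀ (i : Fin m) j, (sumShift m ⊗ₖ sumShiftRev n *ᵥ x) (i.succ, j) = x (i.succ, j))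
    (hy : ∀ (i : Fin m) j, (sumShift m ⊗ₖ sumShiftRev n *ᵥ y) (i.succ, j) = y (i.succ, j))
    (h₀ : ∀ j, x (0, j) = y (0, j)) : x = y := by
  suffices ∀ i j, x (i, j) = y (i, j) from funext fun p => this p.1 p.2
  intro i
  induction i using Fin.induction with
  | zero => exact h₀
  | succ i ih =>
    intro j
    rw [← hx, ← hy, sumShift_kronecker_mulVec_succ, sumShift_kronecker_mulVec_succ]
    simp only [ih]

lemma sumShiftRev_mulVec_translate {u : ZMod (n + 2) → F} (hu : ∑ x, u x = 0) (c : ZMod (n + 2))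
    (j : Fin (n + 1)) : (sumShiftRev n *ᵥ fun k : Fin (n + 1) => u (c + k)) j = -u (c + j + 1) := by
  induction j using Fin.lastCases with
  | last =>
    have h := ZMod.sum_range_add u c
    rw [hu, sum_range_succ, ← Fin.sum_univ_eq_sum_range] at h
    rw [sumShiftRev_mulVec_last, eq_neg_of_add_eq_zero_left h, Fin.val_last]
    congr 2; push_cast; ring
  | cast j =>
    rw [sumShiftRev_mulVec_castSucc, Fin.val_succ, Fin.val_castSucc]
    congr 2; push_cast; ring

lemma mulVec_antidiagLift_succ {u : ZMod (n + 2) → F} (hu : ∑ x, u x = 0) (i : Fin m)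
    (j : Fin (n + 1)) :
    (sumShift m ⊗ₖ sumShiftRev n *ᵥ antidiagLift (n + 2) u) (i.succ, j) =
      antidiagLift (n + 2) u (i.succ, j) := by
  simp only [sumShift_kronecker_mulVec_succ, antidiagLift_apply, sumShiftRev_mulVec_translate hu,
    neg_neg, Fin.val_succ, Fin.val_castSucc]
  congr 1; push_cast; ring

lemma mulVec_antidiagLift_zero {u : ZMod (n + 2) → F} (hu : ∑ x, u x = 0) (j : Fin (n + 1)) :
    (sumShift m ⊗ₖ sumShiftRev n *ᵥ antidiagLift (n + 2) u) (0, j) =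
      antidiagLift (n + 2) u ((0 : Fin (m + 1)), j) - ∑ i ∈ range (m + 2), u (j + i) := by
  simp only [sumShift_kronecker_mulVec_zero, antidiagLift_apply, sumShiftRev_mulVec_translate hu]
  have hshift (i : ℕ) : u (i + j + 1) = u (j + (i + 1 : ℕ)) := by congr 1; push_cast; ring
  rw [Fin.sum_univ_eq_sum_range (fun i => -u (i + j + 1)), sum_range_succ' _ (m + 1)]
  simp only [hshift, sum_neg_distrib, Fin.val_zero, Nat.cast_zero, zero_add, add_zero]
  ring

lemma exists_antidiagLift_eq_of_mulVec_eq {v : Fin (m + 1) × Fin (n + 1) → F}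
    (hv : sumShift m ⊗ₖ sumShiftRev n *ᵥ v = v) :
    ∃ u : ZMod (n + 2) → F, ∑ x, u x = 0 ∧ antidiagLift (n + 2) u = v := by
  let g : ℕ → F := fun k => if h : k < n + 1 then v (0, ⟨k, h⟩) else -∑ j, v (0, j)
  have hg : ∀ j : Fin (n + 1), g j = v (0, j) := fun j => dif_pos j.isLt
  have hu : ∑ x : ZMod (n + 2), g x.val = 0 := by
    rw [← ZMod.sum_range_natCast_s5, sum_range_succ, ← Fin.sum_univ_eq_sum_range,
      ZMod.val_cast_of_lt (Nat.lt_succ_self _), sum_congr rfl fun (j : Fin (n + 1)) _ => by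
        rw [ZMod.val_cast_of_lt (by have := j.isLt; omega), hg]]
    simp [g]
  refine ⟨fun t => g t.val, hu, ?_⟩
  refine eq_of_forall_mulVec_succ (fun i j => mulVec_antidiagLift_succ hu i j)
      (fun i j => congrFun hv _) fun j => ?_
  rw [antidiagLift_apply, Fin.val_zero, Nat.cast_zero, zero_add,
    ZMod.val_cast_of_lt (by have := j.isLt; omega), hg]

lemma mulVec_antidiagLift_eq_self_iff {u : ZMod (n + 2) → F} (hu : ∑ x, u x = 0) :
    sumShift m ⊗ₖ sumShiftRev n *ᵥ antidiagLift (n + 2) u = antidiagLift (n + 2) u ↔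
      ∀ t, ∑ i ∈ range (m + 2), u (t + i) = 0 := by
  constructor
  · intro h
    have hj (j : Fin (n + 1)) : ∑ i ∈ range (m + 2), u (j + i) = 0 := by
      have := congrFun h (0, j)
      rwa [mulVec_antidiagLift_zero hu, sub_eq_self] at this
    -- the one window not covered by `hj` starts at `-1`; all windows add up to `(m + 2) • ∑ u = 0`
    have hlast := ZMod.sum_sum_range_add u (m + 2)
    rw [hu, smul_zero, ← ZMod.sum_range_natCast_s5, sum_range_succ, ← Fin.sum_univ_eq_sum_range,
      sum_eq_zero fun j _ => hj j, zero_add] at hlast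
    intro t
    rw [← ZMod.natCast_zmod_val t]
    by_cases ht : t.val < n + 1
    · exact hj ⟨t.val, ht⟩
    · rwa [show t.val = n + 1 by have := t.val_lt; omega]
  · intro h
    ext ⟨i, j⟩
    induction i using Fin.cases with
    | zero => rw [mulVec_antidiagLift_zero hu, h, sub_zero]
    | succ i => exact mulVec_antidiagLift_succ hu i j

lemma mulVec_eq_self_iff [CharZero F] {v : Fin (m + 1) × Fin (n + 1) → F} :
    sumShift m ⊗ₖ sumShiftRev n *ᵥ v = v ↔
      ∃ w : ZMod (Nat.gcd (m + 2) (n + 2)) → F, ∑ b, w b = 0 ∧ antidiagLift _ w = v := by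
  set s := Nat.gcd (m + 2) (n + 2)
  have hsm : s ∣ m + 2 := Nat.gcd_dvd_left _ _
  have hsn : s ∣ n + 2 := Nat.gcd_dvd_right _ _
  have hsum (w : ZMod s → F) : ∑ x, (w ∘ ZMod.castHom hsn (ZMod s)) x = 0 ↔ ∑ b, w b = 0 := by
    rw [Function.comp_def, ZMod.sum_comp_castHom, smul_eq_zero,
      or_iff_right (Nat.div_pos (Nat.le_of_dvd (by omega) hsn) (Nat.pos_of_neZero s)).ne']
  constructor
  · intro hv
    obtain ⟨u, hu, rfl⟩ := exists_antidiagLift_eq_of_mulVec_eq hv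
    have hper : Periodic u s := ZMod.periodic_gcd
      (periodic_of_sum_range_add_eq_zero ((mulVec_antidiagLift_eq_self_iff hu).mp hv))
    rw [ZMod.eq_comp_castHom_of_periodic hsn hper] at hu ⊢
    exact ⟨_, (hsum _).mp hu, (antidiagLift_comp_castHom hsn _).symm⟩
  · rintro ⟨w, hw, rfl⟩
    have hwin (t : ZMod (n + 2)) :
        ∑ i ∈ range (m + 2), (w ∘ ZMod.castHom hsn (ZMod s)) (t + i) = 0 := by
      simp only [Function.comp_apply, map_add, map_natCast]
      rw [← Nat.div_mul_cancel hsm, ZMod.sum_range_mul_add_s5, hw, smul_zero]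
    rw [← antidiagLift_comp_castHom hsn]
    exact (mulVec_antidiagLift_eq_self_iff ((hsum w).mpr hw)).mpr hwin

lemma finrank_ker_sumShift_kronecker_sub_one [CharZero F] (hm : 1 ≤ m) :
    Module.finrank F
      (LinearMap.ker (sumShift m ⊗ₖ sumShiftRev n - 1 : Matrix _ _ F).mulVecLin) =
      Nat.gcd (m + 2) (n + 2) - 1 := by
  set s := Nat.gcd (m + 2) (n + 2)
  let σ : (ZMod s → F) →ₗ[F] F := ∑ t, LinearMap.proj t
  have hker : LinearMap.ker (sumShift m ⊗ₖ sumShiftRev n - 1 : Matrix _ _ F).mulVecLin =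
      (LinearMap.ker σ).map (antidiagLift s) := by
    ext v
    simp [sub_eq_zero, mulVec_eq_self_iff, σ, s]
  have hσ : σ ≠ 0 := fun h => by simpa [σ] using LinearMap.congr_fun h (Pi.single 0 1)
  have hs : s ≤ m + n + 1 := (Nat.le_of_dvd (by omega) (Nat.gcd_dvd_right _ _)).trans (by omega)
  rw [hker,
    ← (Submodule.equivMapOfInjective _ (antidiagLift_injective hs) (LinearMap.ker σ)).finrank_eq]
  have := Module.Dual.finrank_ker_add_one_of_ne_zero hσ
  simp only [Module.finrank_fintype_fun_eq_card, ZMod.card] at this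
  omega

end Kernel

theorem rank_kronecker_upperOnes_sub_transpose {F : Type*} [Field F] [CharZero F] {n r : ℕ}
    (hn : 2 ≤ n) (hr : 1 ≤ r) :
    (upperOnes n ⊗ₖ (upperOnes r)ᵀ - (upperOnes n ⊗ₖ (upperOnes r)ᵀ)ᵀ : Matrix _ _ F).rank =
      n * r - (Nat.gcd (n + 1) (r + 1) - 1) := by
  obtain ⟨m, rfl⟩ : ∃ m, n = m + 1 := ⟨n - 1, by omega⟩
  obtain ⟨k, rfl⟩ : ∃ k, r = k + 1 := ⟨r - 1, by omega⟩
  have := LinearMap.finrank_range_add_finrank_ker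
    (sumShift m ⊗ₖ sumShiftRev k - 1 : Matrix _ _ F).mulVecLin
  rw [finrank_ker_sumShift_kronecker_sub_one (by omega), Module.finrank_fintype_fun_eq_card,
    Fintype.card_prod, Fintype.card_fin, Fintype.card_fin] at this
  rw [rank_kronecker_upperOnes_sub_transpose_eq_rank, Matrix.rank]
  change _ = _ - (Nat.gcd (m + 2) (k + 2) - 1)
  omega

lemma eq_kronecker_upperOnes_sub_transpose {R : Type*} [CommRing R] {n r : ℕ}
    {Nr Mr : Matrix (Fin r) (Fin r) R} (hNr : ∀ i j, Nr i j = if i ≤ j then -1 else 0)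
    (hMr : Mr = -Nrᵀ) {H : Matrix (Fin n × Fin r) (Fin n × Fin r) R}
    (hH : ∀ α β j k, H (α, j) (β, k) =
      if α = β then (Mr + Nr) j k else if α < β then Mr j k else Nr j k) :
    H = upperOnes n ⊗ₖ (upperOnes r)ᵀ - (upperOnes n ⊗ₖ (upperOnes r)ᵀ)ᵀ := by
  have hM (j k : Fin r) : Mr j k = if k ≤ j then 1 else 0 := by
    rw [hMr, Matrix.neg_apply, transpose_apply, hNr]
    split_ifs <;> simp
  ext ⟨α, j⟩ ⟨β, k⟩
  simp only [hH, Matrix.add_apply, hM, hNr, Matrix.sub_apply, transpose_apply, kroneckerMap_apply,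
    upperOnes, of_apply]
  rcases lt_trichotomy α β with h | rfl | h
  · simp [h.ne, h, h.le, h.not_ge]
  · by_cases hjk : j ≤ k <;> by_cases hkj : k ≤ j <;> simp [hjk, hkj]
  · by_cases hjk : j ≤ k <;> simp [hjk, h.ne', h.not_gt, h.le, h.not_ge]

/-- with `s = gcd(n+1, r+1)`, the matrices `H_CI` and `H_CII`
both have corank `s - 1`, i.e. rank `nr - (s-1)`. -/
theorem stmt_5 (n r : ℕ) (hn : 2 ≤ n) (hr : 2 ≤ r)
    (Nr Mr : Matrix (Fin r) (Fin r) ℚ)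
    (hNr : ∀ i j : Fin r, Nr i j = if i ≤ j then -1 else 0)
    (hMr : Mr = -Nrᵀ)
    (HCI HCII : Matrix (Fin n × Fin r) (Fin n × Fin r) ℚ)
    (hHCI : ∀ (α β : Fin n) (j k : Fin r), HCI (α, j) (β, k) =
      if α = β then (Mr + Nr) j k else if α < β then Mr j k else Nr j k)
    (hHCII : ∀ (α β : Fin n) (j k : Fin r), HCII (α, j) (β, k) =
      if α = β then (Mr + Nr) j k else if α < β then Nr j k else Mr j k) :
    HCI.rank = n * r - (Nat.gcd (n + 1) (r + 1) - 1) ∧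
    HCII.rank = n * r - (Nat.gcd (n + 1) (r + 1) - 1) := by
  have hrank := rank_kronecker_upperOnes_sub_transpose (F := ℚ) hn (by omega : 1 ≤ r)
  let e : Fin n × Fin r ≃ Fin n × Fin r := Fin.revPerm.prodCongr (Equiv.refl _)
  have hCII := eq_kronecker_upperOnes_sub_transpose (H := HCII.submatrix e e) hNr hMr
    fun α β j k => by
      simp only [submatrix_apply, e, Equiv.prodCongr_apply, Prod.map, Fin.revPerm_apply,
        Equiv.refl_apply, hHCII, Fin.rev_inj, Fin.rev_lt_rev]
      rcases lt_trichotomy α β with h | rfl | h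
      · simp [h.ne, h.not_gt, h.not_ge]
      · simp
      · simp [h.ne', h, h.not_gt]
  exact ⟨by rw [eq_kronecker_upperOnes_sub_transpose hNr hMr hHCI, hrank],
    by rw [← rank_submatrix HCII e e, hCII, hrank]⟩
end

section
/- Let n ≥ 2 and r ≥ 1, and let A, M be r×r matrices over ℚ with Aᵗ = −A; set N = −Mᵗ. Assume A − N is invertible, set X = (A−N)⁻¹(A−M), assume I − X is invertible, set F = (M − N·Xⁿ)·(I − X)⁻¹, and assume the block matrix H = H(A,M;n,r) is invertible. Then F is invertible and the r×r blocks of H⁻¹ are given, for 1 ≤ α, β ≤ n, by: (H⁻¹)_{αβ} = (I − X^(n−α)·F⁻¹·N·X^(α−1))·(A−N)⁻¹ if α = β; (H⁻¹)_{αβ} = −X^(n−α)·F⁻¹·N·X^(β−1)·(A−N)⁻¹ if α > β; and (H⁻¹)_{αβ} = −((H⁻¹)_{βα})ᵗ if α < β, where the transpose is taken inside the r×r block. -/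
open Matrix Finset


section helpers
variable {r : ℕ} (X : Matrix (Fin r) (Fin r) ℚ)

lemma tele_aux (c : ℕ) : ∀ (t s : ℕ), s ≤ t → t ≤ c →
    ∑ b ∈ Finset.Ico s t, (X^(c-b) - X^(c-b-1)) = X^(c-s) - X^(c-t)
  | 0, s, hs, _ => by
      have : s = 0 := Nat.le_zero.mp hs
      simp [this]
  | (t+1), s, hs, htc => by
      rcases Nat.eq_or_lt_of_le hs with h | h
      · rw [← h]; simp
      · have hst : s ≤ t := by omega
        rw [Finset.sum_Ico_succ_top hst, tele_aux c t s hst (by omega)]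
        have h1 : c - t - 1 = c - (t+1) := by omega
        rw [h1]; abel

lemma sum_pow_reflect (n a : ℕ) (ha : a < n) :
    ∑ b ∈ Finset.range a, X^(n-1-b) = X^(n-a) * ∑ i ∈ Finset.range a, X^i := by
  rw [← Finset.sum_range_reflect (fun b => X^(n-1-b)) a, Finset.mul_sum]
  apply Finset.sum_congr rfl
  intro j hj
  rw [← pow_add]
  congr 1
  have := Finset.mem_range.mp hj
  omega

lemma sum_pow_tail (n a : ℕ) (ha : a < n) :
    ∑ b ∈ Finset.Ico (a+1) n, X^(n-1-b) = ∑ i ∈ Finset.range (n-1-a), X^i := by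
  rw [Finset.sum_Ico_eq_sum_range]
  have hm : n - (a+1) = n-1-a := by omega
  rw [hm]
  calc ∑ i ∈ Finset.range (n-1-a), X^(n-1-(a+1+i))
      = ∑ i ∈ Finset.range (n-1-a), X^((n-1-a)-1-i) := by
        apply Finset.sum_congr rfl
        intro i hi
        congr 1
        have := Finset.mem_range.mp hi
        omega
    _ = ∑ i ∈ Finset.range (n-1-a), X^i := Finset.sum_range_reflect _ _

end helpers


/-- explicit block form of the inverse of `H(A,M;n,r)`.
Block indices `α, β : Fin n` correspond to the paper's `α+1, β+1 ∈ {1,…,n}`,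
so `X^(n-α_paper) = X^(n-1-α)` and `X^(α_paper - 1) = X^α`. -/
theorem stmt_6 (n r : ℕ) (hn : 2 ≤ n) (hr : 1 ≤ r)
    (A M N X F : Matrix (Fin r) (Fin r) ℚ)
    (hA : Aᵀ = -A) (hN : N = -Mᵀ)
    (hAN : IsUnit (A - N).det)
    (hX : X = (A - N)⁻¹ * (A - M))
    (hIX : IsUnit (1 - X).det)
    (hF : F = (M - N * X ^ n) * (1 - X)⁻¹)
    (H : Matrix (Fin n × Fin r) (Fin n × Fin r) ℚ)
    (hH : ∀ (α β : Fin n) (j k : Fin r),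
      H (α, j) (β, k) = if α = β then A j k else if α < β then M j k else N j k)
    (hHunit : IsUnit H.det) :
    IsUnit F.det ∧
    ∀ (α β : Fin n) (j k : Fin r),
      (α = β →
        H⁻¹ (α, j) (β, k) =
          ((1 - X ^ (n - 1 - (α : ℕ)) * F⁻¹ * N * X ^ (α : ℕ)) * (A - N)⁻¹) j k) ∧
      (β < α →
        H⁻¹ (α, j) (β, k) =
          (-(X ^ (n - 1 - (α : ℕ)) * F⁻¹ * N * X ^ (β : ℕ)) * (A - N)⁻¹) j k) ∧
      (α < β → H⁻¹ (α, j) (β, k) = - H⁻¹ (β, k) (α, j)) := by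
  have hD : (A - N) * (A - N)⁻¹ = 1 := Matrix.mul_nonsing_inv _ hAN
  have hAM : A - M = (A - N) * X := by
    rw [hX, ← Matrix.mul_assoc, hD, Matrix.one_mul]
  have hIX1 : (1 - X)⁻¹ * (1 - X) = 1 := Matrix.nonsing_inv_mul _ hIX
  have hF1 : F * (1 - X) = M - N * X ^ n := by
    rw [hF, Matrix.mul_assoc, hIX1, Matrix.mul_one]
  have cancel : ∀ P Q : Matrix (Fin r) (Fin r) ℚ, P * (1 - X) = Q * (1 - X) → P = Q := by
    intro P Q h
    have h2 := congrArg (fun Z => Z * (1 - X)⁻¹) h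
    simpa only [Matrix.mul_assoc, Matrix.mul_nonsing_inv _ hIX, Matrix.mul_one] using h2
  -- key identity
  have keyT : ∀ a : ℕ, a < n →
      A * X^(n-1-a) + M * (∑ i ∈ Finset.range (n-1-a), X^i)
        + N * (X^(n-a) * ∑ i ∈ Finset.range a, X^i) = F := by
    intro a ha
    apply cancel
    have hp1 : X^(n-1-a) * X = X^(n-a) := by rw [← pow_succ]; congr 1; omega
    have hp2 : X^(n-a) * X^a = X^n := by rw [← pow_add]; congr 1; omega
    have h2 : (A - M) * X^(n-1-a) = (A - N) * X^(n-a) := by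
      rw [hAM, Matrix.mul_assoc]
      congr 1
      rw [← pow_succ']
      congr 1
      omega
    have g1 : (∑ i ∈ Finset.range (n-1-a), X^i) * (1 - X) = 1 - X^(n-1-a) := by
      have hg := geom_sum_mul X (n-1-a)
      calc (∑ i ∈ Finset.range (n-1-a), X^i) * (1 - X)
          = -((∑ i ∈ Finset.range (n-1-a), X^i) * (X - 1)) := by noncomm_ring
        _ = 1 - X^(n-1-a) := by rw [hg]; noncomm_ring
    have g2 : (∑ i ∈ Finset.range a, X^i) * (1 - X) = 1 - X^a := by
      have hg := geom_sum_mul X a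
      calc (∑ i ∈ Finset.range a, X^i) * (1 - X)
          = -((∑ i ∈ Finset.range a, X^i) * (X - 1)) := by noncomm_ring
        _ = 1 - X^a := by rw [hg]; noncomm_ring
    have e1 : X^(n-1-a) * (1 - X) = X^(n-1-a) - X^(n-a) := by
      rw [mul_sub, mul_one, hp1]
    have e3 : X^(n-a) * (1 - X^a) = X^(n-a) - X^n := by
      rw [mul_sub, mul_one, hp2]
    calc (A * X^(n-1-a) + M * (∑ i ∈ Finset.range (n-1-a), X^i)
        + N * (X^(n-a) * ∑ i ∈ Finset.range a, X^i)) * (1 - X)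
        = A * (X^(n-1-a) * (1-X)) + M * ((∑ i ∈ Finset.range (n-1-a), X^i) * (1-X))
          + N * (X^(n-a) * ((∑ i ∈ Finset.range a, X^i) * (1-X))) := by noncomm_ring
      _ = A * (X^(n-1-a) - X^(n-a)) + M * (1 - X^(n-1-a)) + N * (X^(n-a) - X^n) := by
          rw [e1, g1, g2, e3]
      _ = ((A-M) * X^(n-1-a) - (A-N) * X^(n-a)) + (M - N * X^n) := by noncomm_ring
      _ = M - N * X^n := by rw [h2, sub_self, zero_add]
      _ = F * (1 - X) := hF1.symm
  -- block sum identity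
  have blocksum : ∀ α : Fin n,
      (∑ β : Fin n, (if α = β then A else if α < β then M else N) * X^(n-1-(β:ℕ))) = F := by
    intro α
    have ha : (α:ℕ) < n := α.isLt
    have step1 : (∑ β : Fin n, (if α = β then A else if α < β then M else N) * X^(n-1-(β:ℕ)))
        = ∑ b ∈ Finset.range n,
            (if (α:ℕ) = b then A else if (α:ℕ) < b then M else N) * X^(n-1-b) := by
      rw [← Fin.sum_univ_eq_sum_range
        (fun b => (if (α:ℕ) = b then A else if (α:ℕ) < b then M else N) * X^(n-1-b)) n]
      apply Finset.sum_congr rfl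
      intro β _
      simp only [Fin.ext_iff, Fin.lt_def]
    rw [step1, Finset.range_eq_Ico,
      ← Finset.sum_Ico_consecutive _ (Nat.zero_le ((α:ℕ)+1)) (by omega : (α:ℕ)+1 ≤ n),
      ← Finset.range_eq_Ico, Finset.sum_range_succ]
    have e1 : ∑ b ∈ Finset.range (α:ℕ),
        (if (α:ℕ) = b then A else if (α:ℕ) < b then M else N) * X^(n-1-b)
        = N * (X^(n-(α:ℕ)) * ∑ i ∈ Finset.range (α:ℕ), X^i) := by
      rw [← sum_pow_reflect X n (α:ℕ) ha, Finset.mul_sum]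
      apply Finset.sum_congr rfl
      intro b hb
      have hb' := Finset.mem_range.mp hb
      rw [if_neg (by omega), if_neg (by omega)]
    have e2 : (if (α:ℕ) = (α:ℕ) then A else if (α:ℕ) < (α:ℕ) then M else N) * X^(n-1-(α:ℕ))
        = A * X^(n-1-(α:ℕ)) := by rw [if_pos rfl]
    have e3 : ∑ b ∈ Finset.Ico ((α:ℕ)+1) n,
        (if (α:ℕ) = b then A else if (α:ℕ) < b then M else N) * X^(n-1-b)
        = M * ∑ i ∈ Finset.range (n-1-(α:ℕ)), X^i := by
      rw [← sum_pow_tail X n (α:ℕ) ha, Finset.mul_sum]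
      apply Finset.sum_congr rfl
      intro b hb
      have hb' := Finset.mem_Ico.mp hb
      rw [if_neg (by omega), if_pos (by omega)]
    rw [e1, e2, e3, ← keyT (α:ℕ) ha]
    abel
  -- F is invertible
  have hFdet : IsUnit F.det := by
    rw [isUnit_iff_ne_zero]
    intro hdet0
    obtain ⟨v, hv0, hv⟩ := Matrix.exists_mulVec_eq_zero_iff.mpr hdet0
    have hHV : H.mulVec (fun p : Fin n × Fin r => (X^(n-1-(p.1:ℕ))).mulVec v p.2) = 0 := by
      funext p
      obtain ⟨α, j⟩ := p
      show ∑ q : Fin n × Fin r, H (α,j) q * (X^(n-1-(q.1:ℕ))).mulVec v q.2 = 0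
      rw [Fintype.sum_prod_type]
      have e : ∀ β : Fin n, ∑ k : Fin r, H (α,j) (β,k) * (X^(n-1-(β:ℕ))).mulVec v k
          = (((if α = β then A else if α < β then M else N) * X^(n-1-(β:ℕ))).mulVec v) j := by
        intro β
        rw [← Matrix.mulVec_mulVec]
        show _ = ∑ k, (if α = β then A else if α < β then M else N) j k
            * (X^(n-1-(β:ℕ))).mulVec v k
        apply Finset.sum_congr rfl
        intro k _
        rw [hH]
        split_ifs <;> rfl
      simp only [e]
      have e2 : ∑ β : Fin n,
          (((if α = β then A else if α < β then M else N) * X^(n-1-(β:ℕ))).mulVec v) j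
          = (((∑ β : Fin n, (if α = β then A else if α < β then M else N) * X^(n-1-(β:ℕ)))).mulVec v) j := by
        simp only [Matrix.mulVec, dotProduct, Matrix.sum_apply, Finset.sum_mul]
        exact Finset.sum_comm
      rw [e2, blocksum α, hv]
      rfl
    have hV0 : (fun p : Fin n × Fin r => (X^(n-1-(p.1:ℕ))).mulVec v p.2) = 0 := by
      have h3 := congrArg (fun w => (H⁻¹).mulVec w) hHV
      simpa only [Matrix.mulVec_mulVec, Matrix.nonsing_inv_mul H hHunit, Matrix.one_mulVec,
        Matrix.mulVec_zero] using h3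
    apply hv0
    funext j
    have h4 := congrFun hV0 (⟨n-1, by omega⟩, j)
    simpa [show n-1-(n-1) = 0 from by omega, Matrix.one_mulVec] using h4
  -- F * Q cancellation
  have hFQ : ∀ c : ℕ, F * (F⁻¹ * N * X^c * (A-N)⁻¹) = N * X^c * (A-N)⁻¹ := by
    intro c
    simp only [← Matrix.mul_assoc, Matrix.mul_nonsing_inv F hFdet, Matrix.one_mul]
  -- the key block identity
  have blockkey : ∀ α γ : Fin n,
      (∑ β : Fin n, (if α = β then A else if α < β then M else N) *
        ((if β = γ then (A-N)⁻¹
          else if β < γ then (X^((γ:ℕ)-(β:ℕ)) - X^((γ:ℕ)-(β:ℕ)-1)) * (A-N)⁻¹ else 0)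
         - X^(n-1-(β:ℕ)) * (F⁻¹ * N * X^(γ:ℕ) * (A-N)⁻¹)))
      = if α = γ then 1 else 0 := by
    intro α γ
    have ha : (α:ℕ) < n := α.isLt
    have hc : (γ:ℕ) < n := γ.isLt
    have hsplit : (∑ β : Fin n, (if α = β then A else if α < β then M else N) *
        ((if β = γ then (A-N)⁻¹
          else if β < γ then (X^((γ:ℕ)-(β:ℕ)) - X^((γ:ℕ)-(β:ℕ)-1)) * (A-N)⁻¹ else 0)
         - X^(n-1-(β:ℕ)) * (F⁻¹ * N * X^(γ:ℕ) * (A-N)⁻¹)))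
        = (∑ β : Fin n, (if α = β then A else if α < β then M else N) *
            (if β = γ then (A-N)⁻¹
             else if β < γ then (X^((γ:ℕ)-(β:ℕ)) - X^((γ:ℕ)-(β:ℕ)-1)) * (A-N)⁻¹ else 0))
          - (∑ β : Fin n, (if α = β then A else if α < β then M else N) * X^(n-1-(β:ℕ)))
              * (F⁻¹ * N * X^(γ:ℕ) * (A-N)⁻¹) := by
      rw [Finset.sum_mul, ← Finset.sum_sub_distrib]
      apply Finset.sum_congr rfl
      intro β _
      noncomm_ring
    rw [hsplit, blocksum α, hFQ (γ:ℕ)]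
    have stepP : (∑ β : Fin n, (if α = β then A else if α < β then M else N) *
        (if β = γ then (A-N)⁻¹
         else if β < γ then (X^((γ:ℕ)-(β:ℕ)) - X^((γ:ℕ)-(β:ℕ)-1)) * (A-N)⁻¹ else 0))
        = ∑ b ∈ Finset.range n, (if (α:ℕ) = b then A else if (α:ℕ) < b then M else N) * (if b = (γ:ℕ) then (A-N)⁻¹ else if b < (γ:ℕ) then (X^((γ:ℕ)-b) - X^((γ:ℕ)-b-1)) * (A-N)⁻¹ else 0) := by
      rw [← Fin.sum_univ_eq_sum_range (fun b => (if (α:ℕ) = b then A else if (α:ℕ) < b then M else N) * (if b = (γ:ℕ) then (A-N)⁻¹ else if b < (γ:ℕ) then (X^((γ:ℕ)-b) - X^((γ:ℕ)-b-1)) * (A-N)⁻¹ else 0)) n]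
      apply Finset.sum_congr rfl
      intro β _
      simp only [Fin.ext_iff, Fin.lt_def]
    rw [stepP]
    rcases Nat.lt_trichotomy (α:ℕ) (γ:ℕ) with hlt | heq | hgt
    · -- α < γ
      rw [if_neg (show α ≠ γ from fun h => by rw [h] at hlt; exact absurd hlt (lt_irrefl _))]
      rw [Finset.range_eq_Ico,
        ← Finset.sum_Ico_consecutive _ (Nat.zero_le ((α:ℕ)+1)) (by omega : (α:ℕ)+1 ≤ n),
        ← Finset.sum_Ico_consecutive _ (by omega : (α:ℕ)+1 ≤ (γ:ℕ)+1) (by omega : (γ:ℕ)+1 ≤ n),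
        ← Finset.range_eq_Ico, Finset.sum_range_succ,
        Finset.sum_Ico_succ_top (by omega : (α:ℕ)+1 ≤ (γ:ℕ))]
      have eLow : ∑ b ∈ Finset.range (α:ℕ), (if (α:ℕ) = b then A else if (α:ℕ) < b then M else N) * (if b = (γ:ℕ) then (A-N)⁻¹ else if b < (γ:ℕ) then (X^((γ:ℕ)-b) - X^((γ:ℕ)-b-1)) * (A-N)⁻¹ else 0)
          = N * ((X^(γ:ℕ) - X^((γ:ℕ)-(α:ℕ))) * (A-N)⁻¹) := by
        trans (∑ b ∈ Finset.range (α:ℕ), N * ((X^((γ:ℕ)-b) - X^((γ:ℕ)-b-1)) * (A-N)⁻¹))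
        · apply Finset.sum_congr rfl
          intro b hb
          have hb' := Finset.mem_range.mp hb
          rw [if_neg (by omega), if_neg (by omega), if_neg (by omega), if_pos (by omega)]
        · rw [← Finset.mul_sum, ← Finset.sum_mul, Finset.range_eq_Ico,
            tele_aux X (γ:ℕ) (α:ℕ) 0 (Nat.zero_le _) (by omega), Nat.sub_zero]
      have eA : (if (α:ℕ) = (α:ℕ) then A else if (α:ℕ) < (α:ℕ) then M else N) * (if (α:ℕ) = (γ:ℕ) then (A-N)⁻¹ else if (α:ℕ) < (γ:ℕ) then (X^((γ:ℕ)-(α:ℕ)) - X^((γ:ℕ)-(α:ℕ)-1)) * (A-N)⁻¹ else 0) = A * ((X^((γ:ℕ)-(α:ℕ)) - X^((γ:ℕ)-(α:ℕ)-1)) * (A-N)⁻¹) := by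
        rw [if_pos rfl, if_neg (by omega), if_pos hlt]
      have eM1 : ∑ b ∈ Finset.Ico ((α:ℕ)+1) (γ:ℕ), (if (α:ℕ) = b then A else if (α:ℕ) < b then M else N) * (if b = (γ:ℕ) then (A-N)⁻¹ else if b < (γ:ℕ) then (X^((γ:ℕ)-b) - X^((γ:ℕ)-b-1)) * (A-N)⁻¹ else 0)
          = M * ((X^((γ:ℕ)-(α:ℕ)-1) - 1) * (A-N)⁻¹) := by
        trans (∑ b ∈ Finset.Ico ((α:ℕ)+1) (γ:ℕ), M * ((X^((γ:ℕ)-b) - X^((γ:ℕ)-b-1)) * (A-N)⁻¹))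
        · apply Finset.sum_congr rfl
          intro b hb
          have hb' := Finset.mem_Ico.mp hb
          rw [if_neg (by omega), if_pos (by omega), if_neg (by omega), if_pos (by omega)]
        · rw [← Finset.mul_sum, ← Finset.sum_mul,
            tele_aux X (γ:ℕ) (γ:ℕ) ((α:ℕ)+1) (by omega) le_rfl, Nat.sub_self, pow_zero,
            show (γ:ℕ)-((α:ℕ)+1) = (γ:ℕ)-(α:ℕ)-1 from by omega]
      have eMg : (if (α:ℕ) = (γ:ℕ) then A else if (α:ℕ) < (γ:ℕ) then M else N) * (if (γ:ℕ) = (γ:ℕ) then (A-N)⁻¹ else if (γ:ℕ) < (γ:ℕ) then (X^((γ:ℕ)-(γ:ℕ)) - X^((γ:ℕ)-(γ:ℕ)-1)) * (A-N)⁻¹ else 0) = M * (A-N)⁻¹ := by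
        rw [if_neg (by omega), if_pos hlt, if_pos rfl]
      have eTop : ∑ b ∈ Finset.Ico ((γ:ℕ)+1) n, (if (α:ℕ) = b then A else if (α:ℕ) < b then M else N) * (if b = (γ:ℕ) then (A-N)⁻¹ else if b < (γ:ℕ) then (X^((γ:ℕ)-b) - X^((γ:ℕ)-b-1)) * (A-N)⁻¹ else 0) = 0 := by
        apply Finset.sum_eq_zero
        intro b hb
        have hb' := Finset.mem_Ico.mp hb
        rw [if_neg (show ¬(b = (γ:ℕ)) from by omega), if_neg (show ¬(b < (γ:ℕ)) from by omega), mul_zero]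
      rw [eLow, eA, eM1, eMg, eTop]
      have hpc : X * X^((γ:ℕ)-(α:ℕ)-1) = X^((γ:ℕ)-(α:ℕ)) := by
        rw [← pow_succ']
        congr 1
        omega
      have h2 : (A - M) * X^((γ:ℕ)-(α:ℕ)-1) = (A - N) * X^((γ:ℕ)-(α:ℕ)) := by
        rw [hAM, Matrix.mul_assoc, hpc]
      trans (((A-N) * X^((γ:ℕ)-(α:ℕ)) - (A-M) * X^((γ:ℕ)-(α:ℕ)-1)) * (A-N)⁻¹)
      · noncomm_ring
      · rw [h2, sub_self, zero_mul]
    · -- α = γ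
      have hag : α = γ := Fin.val_injective heq
      rw [if_pos hag]
      rw [Finset.range_eq_Ico,
        ← Finset.sum_Ico_consecutive _ (Nat.zero_le ((γ:ℕ)+1)) (by omega : (γ:ℕ)+1 ≤ n),
        ← Finset.range_eq_Ico, Finset.sum_range_succ]
      have eTop : ∑ b ∈ Finset.Ico ((γ:ℕ)+1) n, (if (α:ℕ) = b then A else if (α:ℕ) < b then M else N) * (if b = (γ:ℕ) then (A-N)⁻¹ else if b < (γ:ℕ) then (X^((γ:ℕ)-b) - X^((γ:ℕ)-b-1)) * (A-N)⁻¹ else 0) = 0 := by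
        apply Finset.sum_eq_zero
        intro b hb
        have hb' := Finset.mem_Ico.mp hb
        rw [if_neg (show ¬(b = (γ:ℕ)) from by omega), if_neg (show ¬(b < (γ:ℕ)) from by omega), mul_zero]
      have eMid : (if (α:ℕ) = (γ:ℕ) then A else if (α:ℕ) < (γ:ℕ) then M else N) * (if (γ:ℕ) = (γ:ℕ) then (A-N)⁻¹ else if (γ:ℕ) < (γ:ℕ) then (X^((γ:ℕ)-(γ:ℕ)) - X^((γ:ℕ)-(γ:ℕ)-1)) * (A-N)⁻¹ else 0) = A * (A-N)⁻¹ := by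
        rw [if_pos heq, if_pos rfl]
      have eLow : ∑ b ∈ Finset.range (γ:ℕ), (if (α:ℕ) = b then A else if (α:ℕ) < b then M else N) * (if b = (γ:ℕ) then (A-N)⁻¹ else if b < (γ:ℕ) then (X^((γ:ℕ)-b) - X^((γ:ℕ)-b-1)) * (A-N)⁻¹ else 0)
          = N * ((X^(γ:ℕ) - 1) * (A-N)⁻¹) := by
        trans (∑ b ∈ Finset.range (γ:ℕ), N * ((X^((γ:ℕ)-b) - X^((γ:ℕ)-b-1)) * (A-N)⁻¹))
        · apply Finset.sum_congr rfl
          intro b hb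
          have hb' := Finset.mem_range.mp hb
          rw [if_neg (by omega), if_neg (by omega), if_neg (by omega), if_pos (by omega)]
        · rw [← Finset.mul_sum, ← Finset.sum_mul, Finset.range_eq_Ico,
            tele_aux X (γ:ℕ) (γ:ℕ) 0 (Nat.zero_le _) le_rfl, Nat.sub_zero, Nat.sub_self, pow_zero]
      rw [eLow, eMid, eTop]
      trans ((A - N) * (A-N)⁻¹)
      · noncomm_ring
      · exact hD
    · -- γ < α
      rw [if_neg (show α ≠ γ from fun h => by rw [h] at hgt; exact absurd hgt (lt_irrefl _))]
      rw [Finset.range_eq_Ico,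
        ← Finset.sum_Ico_consecutive _ (Nat.zero_le ((γ:ℕ)+1)) (by omega : (γ:ℕ)+1 ≤ n),
        ← Finset.range_eq_Ico, Finset.sum_range_succ]
      have eTop : ∑ b ∈ Finset.Ico ((γ:ℕ)+1) n, (if (α:ℕ) = b then A else if (α:ℕ) < b then M else N) * (if b = (γ:ℕ) then (A-N)⁻¹ else if b < (γ:ℕ) then (X^((γ:ℕ)-b) - X^((γ:ℕ)-b-1)) * (A-N)⁻¹ else 0) = 0 := by
        apply Finset.sum_eq_zero
        intro b hb
        have hb' := Finset.mem_Ico.mp hb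
        rw [if_neg (show ¬(b = (γ:ℕ)) from by omega), if_neg (show ¬(b < (γ:ℕ)) from by omega), mul_zero]
      have eMid : (if (α:ℕ) = (γ:ℕ) then A else if (α:ℕ) < (γ:ℕ) then M else N) * (if (γ:ℕ) = (γ:ℕ) then (A-N)⁻¹ else if (γ:ℕ) < (γ:ℕ) then (X^((γ:ℕ)-(γ:ℕ)) - X^((γ:ℕ)-(γ:ℕ)-1)) * (A-N)⁻¹ else 0) = N * (A-N)⁻¹ := by
        rw [if_neg (by omega), if_neg (by omega), if_pos rfl]
      have eLow : ∑ b ∈ Finset.range (γ:ℕ), (if (α:ℕ) = b then A else if (α:ℕ) < b then M else N) * (if b = (γ:ℕ) then (A-N)⁻¹ else if b < (γ:ℕ) then (X^((γ:ℕ)-b) - X^((γ:ℕ)-b-1)) * (A-N)⁻¹ else 0)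
          = N * ((X^(γ:ℕ) - 1) * (A-N)⁻¹) := by
        trans (∑ b ∈ Finset.range (γ:ℕ), N * ((X^((γ:ℕ)-b) - X^((γ:ℕ)-b-1)) * (A-N)⁻¹))
        · apply Finset.sum_congr rfl
          intro b hb
          have hb' := Finset.mem_range.mp hb
          rw [if_neg (by omega), if_neg (by omega), if_neg (by omega), if_pos (by omega)]
        · rw [← Finset.mul_sum, ← Finset.sum_mul, Finset.range_eq_Ico,
            tele_aux X (γ:ℕ) (γ:ℕ) 0 (Nat.zero_le _) le_rfl, Nat.sub_zero, Nat.sub_self, pow_zero]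
      rw [eLow, eMid, eTop]
      noncomm_ring
  -- right inverse
  have HG : H * (Matrix.of fun pq qq : Fin n × Fin r =>
      ((if pq.1 = qq.1 then (A-N)⁻¹
        else if pq.1 < qq.1 then (X^((qq.1:ℕ)-(pq.1:ℕ)) - X^((qq.1:ℕ)-(pq.1:ℕ)-1)) * (A-N)⁻¹ else 0)
       - X^(n-1-(pq.1:ℕ)) * (F⁻¹ * N * X^(qq.1:ℕ) * (A-N)⁻¹)) pq.2 qq.2) = 1 := by
    funext pq qq
    obtain ⟨α, j⟩ := pq
    obtain ⟨γ, k⟩ := qq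
    rw [Matrix.mul_apply, Fintype.sum_prod_type]
    have e : ∀ β : Fin n, (∑ m : Fin r, H (α,j) (β,m) * (Matrix.of fun pq qq : Fin n × Fin r =>
      ((if pq.1 = qq.1 then (A-N)⁻¹
        else if pq.1 < qq.1 then (X^((qq.1:ℕ)-(pq.1:ℕ)) - X^((qq.1:ℕ)-(pq.1:ℕ)-1)) * (A-N)⁻¹ else 0)
       - X^(n-1-(pq.1:ℕ)) * (F⁻¹ * N * X^(qq.1:ℕ) * (A-N)⁻¹)) pq.2 qq.2) (β,m) (γ,k))
        = ((if α = β then A else if α < β then M else N) *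
            ((if β = γ then (A-N)⁻¹
              else if β < γ then (X^((γ:ℕ)-(β:ℕ)) - X^((γ:ℕ)-(β:ℕ)-1)) * (A-N)⁻¹ else 0)
             - X^(n-1-(β:ℕ)) * (F⁻¹ * N * X^(γ:ℕ) * (A-N)⁻¹))) j k := by
      intro β
      rw [Matrix.mul_apply]
      apply Finset.sum_congr rfl
      intro m _
      rw [hH]
      simp only [Matrix.of_apply]
      split_ifs <;> rfl
    simp only [e]
    rw [← Matrix.sum_apply, blockkey α γ]
    by_cases hag : α = γ
    · subst hag
      rw [if_pos rfl]
      simp [Matrix.one_apply, Prod.ext_iff]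
    · rw [if_neg hag, Matrix.one_apply_ne (show ((α,j) : Fin n × Fin r) ≠ (γ,k) from by
        simp [Prod.ext_iff, hag])]
      simp
  have hHinv : H⁻¹ = (Matrix.of fun pq qq : Fin n × Fin r =>
      ((if pq.1 = qq.1 then (A-N)⁻¹
        else if pq.1 < qq.1 then (X^((qq.1:ℕ)-(pq.1:ℕ)) - X^((qq.1:ℕ)-(pq.1:ℕ)-1)) * (A-N)⁻¹ else 0)
       - X^(n-1-(pq.1:ℕ)) * (F⁻¹ * N * X^(qq.1:ℕ) * (A-N)⁻¹)) pq.2 qq.2) := Matrix.inv_eq_right_inv HG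
  -- skew-symmetry of H and of H⁻¹
  have hHskew : (H⁻¹)ᵀ = -(H⁻¹) := by
    have hA' : ∀ x y : Fin r, A y x = -A x y := by
      intro x y
      have h0 := congrFun (congrFun hA x) y
      simpa [Matrix.transpose_apply, Matrix.neg_apply] using h0
    have hN' : ∀ x y : Fin r, N x y = -M y x := by
      intro x y
      rw [hN]
      simp [Matrix.neg_apply, Matrix.transpose_apply]
    have hHT : Hᵀ = -H := by
      funext p q
      obtain ⟨α, j⟩ := p
      obtain ⟨β, k⟩ := q
      rw [Matrix.transpose_apply, Matrix.neg_apply, hH, hH]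
      rcases lt_trichotomy α β with h | h | h
      · rw [if_neg (show β ≠ α from fun hh => by rw [hh] at h; exact absurd h (lt_irrefl _)),
          if_neg (not_lt.mpr h.le), if_neg (ne_of_lt h), if_pos h]
        exact hN' k j
      · subst h
        rw [if_pos rfl, if_pos rfl]
        exact hA' j k
      · rw [if_neg (show β ≠ α from ne_of_lt h), if_pos h,
          if_neg (show α ≠ β from fun hh => by rw [hh] at h; exact absurd h (lt_irrefl _)),
          if_neg (not_lt.mpr h.le), hN' j k, neg_neg]
    rw [Matrix.transpose_nonsing_inv, hHT]
    refine Matrix.inv_eq_right_inv ?_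
    rw [neg_mul, mul_neg, neg_neg, Matrix.mul_nonsing_inv H hHunit]
  refine ⟨hFdet, fun α β j k => ⟨?_, ?_, ?_⟩⟩
  · intro hab
    subst hab
    have hmat : (1 - X^(n-1-(α:ℕ)) * F⁻¹ * N * X^(α:ℕ)) * (A-N)⁻¹
        = (A-N)⁻¹ - X^(n-1-(α:ℕ)) * (F⁻¹ * N * X^(α:ℕ) * (A-N)⁻¹) := by noncomm_ring
    rw [hHinv, hmat]
    simp only [Matrix.of_apply, if_true, eq_self_iff_true]
  · intro hba
    have hmat : -(X^(n-1-(α:ℕ)) * F⁻¹ * N * X^((β:ℕ))) * (A-N)⁻¹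
        = 0 - X^(n-1-(α:ℕ)) * (F⁻¹ * N * X^((β:ℕ)) * (A-N)⁻¹) := by noncomm_ring
    rw [hHinv, hmat]
    simp only [Matrix.of_apply]
    rw [if_neg (show α ≠ β from fun hh => by rw [hh] at hba; exact absurd hba (lt_irrefl _)),
      if_neg (not_lt.mpr hba.le)]
  · intro _
    have h0 := congrFun (congrFun hHskew (β, k)) (α, j)
    simpa [Matrix.transpose_apply, Matrix.neg_apply] using h0
end

section
/- Let n ≥ 2 and r ≥ 2, and set F_D = N_r·(X_r + X_r² + ⋯ + X_r^(n−1)), an r×r integer matrix. If det F_D ≠ 0, then det F_D = 1. -/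
/-!
Identify `ℤ^r` with the quotient of `ℤ^(ℤ/(r+1))` by the constant vectors, with basis the
images of `δ_0, …, δ_(r-1)` (so that `δ_r = -(δ_0 + ⋯ + δ_(r-1))`). Every permutation of
`ℤ/(r+1)` acts on this quotient, and `X_r` is the action of `t ↦ t + 1`. For `c` a unit
mod `r + 1`, the action of `t ↦ c t` conjugates `X_r` into `X_r^c`; hence
`det (X^m - 1) = det (X - 1) ≠ 0` when `gcd(m, r+1) = 1`, and
`(1 + X + ⋯ + X^(m-1)) (X - 1) = X^m - 1` gives determinant `1`. If `d = gcd(m, r+1) > 1`,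
the image of the indicator of `dℤ/(r+1)ℤ` is a nonzero vector fixed by `X^m`, so that
determinant vanishes. Finally `N_r X_r` is lower unitriangular.
-/

open Matrix Finset

lemma Finset.sum_Icc_one_pow {R : Type*} [Semiring R] (x : R) (m : ℕ) :
    ∑ i ∈ Icc 1 m, x ^ i = x * ∑ i ∈ range m, x ^ i := by
  rw [← Ico_add_one_right_eq_Icc, sum_Ico_eq_sum_range, add_tsub_cancel_right, mul_sum]
  exact sum_congr rfl fun k _ => by rw [add_comm, pow_succ']

namespace Matrix

lemma vecMul_pow_eq_self {n R : Type*} [Fintype n] [DecidableEq n] [Semiring R]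
    {A : Matrix n n R} {v : n → R} (hv : v ᵥ* A = v) (e : ℕ) : v ᵥ* A ^ e = v := by
  induction e with
  | zero => simp
  | succ e ih => rw [pow_succ, ← vecMul_vecMul, ih, hv]

variable {n R : Type*} [Fintype n] [DecidableEq n] [CommRing R]

lemma det_sub_one_eq_of_mul_eq {X Y P : Matrix n n R} (hP : IsUnit P.det) (h : X * P = P * Y) :
    (X - 1).det = (Y - 1).det := by
  have hsemiconj : (X - 1) * P = P * (Y - 1) := by
    rw [sub_mul, mul_sub, h, one_mul, mul_one]
  have := congrArg det hsemiconj
  rw [det_mul, det_mul, mul_comm] at this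
  exact hP.mul_left_cancel this

lemma det_sub_one_ne_zero_of_sum_range_pow_eq_zero [IsDomain R] [CharZero R]
    {X : Matrix n n R} {N : ℕ} (hN : N ≠ 0) (hX : ∑ t ∈ range N, X ^ t = 0) :
    (X - 1).det ≠ 0 := by
  intro hdet
  obtain ⟨v, hv, hXv⟩ := exists_mulVec_eq_zero_iff.mpr hdet
  rw [sub_mulVec, one_mulVec, sub_eq_zero] at hXv
  have hpow (t : ℕ) : X ^ t *ᵥ v = v := by
    induction t with
    | zero => simp
    | succ t ih => rw [pow_succ, ← mulVec_mulVec, hXv, ih]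
  have : N • v = 0 := by
    simpa [sum_mulVec, hpow] using congrArg (· *ᵥ v) hX
  exact hv ((smul_eq_zero.mp this).resolve_left hN)

end Matrix

namespace ReducedRegular

open Fin.CommRing

variable {r : ℕ}

/-- The image of `δ_t` in `ℤ^(r+1) / ℤ(1, …, 1)`, in the basis `δ_0, …, δ_(r-1)`. -/
def redBasis (r : ℕ) (t : Fin (r + 1)) : Fin r → ℤ :=
  Fin.lastCases (-1) (fun i => Pi.single i 1) t

/-- The matrix, acting on row vectors, of the permutation `σ` on `ℤ^(r+1) / ℤ(1, …, 1)`. -/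
def redPermMatrix (σ : Fin (r + 1) → Fin (r + 1)) : Matrix (Fin r) (Fin r) ℤ :=
  of fun i => redBasis r (σ i.castSucc)

@[simp] lemma redBasis_last : redBasis r (Fin.last r) = -1 := Fin.lastCases_last

@[simp] lemma redBasis_castSucc (i : Fin r) : redBasis r i.castSucc = Pi.single i 1 :=
  Fin.lastCases_castSucc i

lemma sum_redBasis_comp {σ : Fin (r + 1) → Fin (r + 1)} (hσ : σ.Bijective) :
    ∑ t, redBasis r (σ t) = 0 := by
  rw [Function.Bijective.sum_comp hσ (redBasis r), Fin.sum_univ_castSucc]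
  ext j
  simp [Finset.sum_apply, Pi.single_apply]

lemma redBasis_vecMul {σ : Fin (r + 1) → Fin (r + 1)} (hσ : σ.Bijective) (t : Fin (r + 1)) :
    redBasis r t ᵥ* redPermMatrix σ = redBasis r (σ t) := by
  induction t using Fin.lastCases with
  | cast i => simp [redPermMatrix]
  | last =>
    have h := sum_redBasis_comp hσ
    rw [Fin.sum_univ_castSucc, add_eq_zero_iff_eq_neg'] at h
    ext j
    simp [h, vecMul, dotProduct, redPermMatrix, Finset.sum_apply]

lemma redPermMatrix_mul {σ τ : Fin (r + 1) → Fin (r + 1)} (hτ : τ.Bijective) :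
    redPermMatrix σ * redPermMatrix τ = redPermMatrix (τ ∘ σ) := by
  funext i
  exact redBasis_vecMul hτ _

@[simp] lemma redPermMatrix_id : redPermMatrix (fun t => t) = (1 : Matrix (Fin r) (Fin r) ℤ) := by
  ext i j
  simp [redPermMatrix, one_apply, Pi.single_apply, eq_comm]

def shift (r : ℕ) : Matrix (Fin r) (Fin r) ℤ := redPermMatrix (· + 1)

lemma shift_apply (i j : Fin r) :
    shift r i j = if (i : ℕ) = r - 1 then -1 else if (i : ℕ) + 1 = j then 1 else 0 := by
  obtain ⟨r, rfl⟩ : ∃ k, r = k + 1 := Nat.exists_eq_add_one_of_ne_zero (Fin.pos i).ne'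
  rw [shift, redPermMatrix, of_apply, Fin.coeSucc_eq_succ]
  induction i using Fin.lastCases with
  | last => simp
  | cast i =>
    rw [Fin.succ_castSucc, redBasis_castSucc]
    simp [Pi.single_apply, i.isLt.ne, Fin.ext_iff, eq_comm]

lemma shift_pow (c : ℕ) : shift r ^ c = redPermMatrix (· + (c : Fin (r + 1))) := by
  induction c with
  | zero => simp
  | succ c ih =>
    rw [pow_succ, ih, shift, redPermMatrix_mul (AddGroup.addRight_bijective 1)]
    congr 1
    ext t
    simp [add_assoc]

lemma sum_range_shift_pow_card : ∑ t ∈ range (r + 1), shift r ^ t = 0 := by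
  ext i j
  rw [Matrix.sum_apply, ← Fin.sum_univ_eq_sum_range (fun t => (shift r ^ t) i j)]
  simp only [shift_pow, Fin.cast_val_eq_self]
  simpa [redPermMatrix, Finset.sum_apply] using
    congrFun (sum_redBasis_comp (AddGroup.addLeft_bijective i.castSucc)) j

lemma isUnit_det_redPermMatrix {σ : Fin (r + 1) → Fin (r + 1)} (hσ : σ.Bijective) :
    IsUnit (redPermMatrix σ).det := by
  obtain ⟨τ, -, hστ⟩ := Function.bijective_iff_has_inverse.mp hσ
  refine isUnit_det_of_left_inverse (B := redPermMatrix τ) ?_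
  rw [redPermMatrix_mul hσ, hστ.comp_eq_id]
  exact redPermMatrix_id

lemma shift_mul_redPermMatrix_mul {c : ℕ} (hc : IsUnit (c : Fin (r + 1))) :
    shift r * redPermMatrix (· * (c : Fin (r + 1))) =
      redPermMatrix (· * (c : Fin (r + 1))) * shift r ^ c := by
  rw [shift_pow, shift, redPermMatrix_mul (IsUnit.isUnit_iff_mulRight_bijective.mp hc),
    redPermMatrix_mul (AddGroup.addRight_bijective _)]
  congr 1
  ext t
  simp [add_mul]

lemma det_shift_pow_sub_one_of_coprime {m : ℕ} (hm : m.Coprime (r + 1)) :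
    (shift r ^ m - 1).det = (shift r - 1).det := by
  have hunit : IsUnit (m : Fin (r + 1)) := (ZMod.isUnit_iff_coprime m (r + 1)).2 hm
  exact (det_sub_one_eq_of_mul_eq
    (isUnit_det_redPermMatrix (IsUnit.isUnit_iff_mulRight_bijective.mp hunit))
    (shift_mul_redPermMatrix_mul hunit)).symm

lemma det_shift_sub_one_ne_zero : (shift r - 1).det ≠ 0 :=
  det_sub_one_ne_zero_of_sum_range_pow_eq_zero r.succ_ne_zero sum_range_shift_pow_card

lemma redBasis_vecMul_shift_pow (t : Fin (r + 1)) (c : ℕ) :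
    redBasis r t ᵥ* shift r ^ c = redBasis r (t + c) := by
  rw [shift_pow, redBasis_vecMul (AddGroup.addRight_bijective _)]

lemma redBasis_natCast {t : ℕ} (ht : t < r) : redBasis r t = Pi.single ⟨t, ht⟩ 1 := by
  rw [← redBasis_castSucc]
  congr 1
  ext
  simp [Nat.mod_eq_of_lt (ht.trans r.lt_succ_self)]

lemma exists_vecMul_shift_pow_eq_self {d : ℕ} (hd : d ∣ r + 1) (hd1 : d ≠ 1) :
    ∃ u ≠ 0, u ᵥ* shift r ^ d = u := by
  obtain ⟨h, hdh⟩ := hd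
  -- `∑ j < h, f j` is the image of the indicator of the subgroup `dℤ/(r+1)ℤ`.
  let f (j : ℕ) : Fin r → ℤ := redBasis r ((d * j : ℕ) : Fin (r + 1))
  refine ⟨∑ j ∈ range h, f j, ?_, ?_⟩
  · have hd2 : 2 ≤ d := by
      rcases d with _ | _ | d
      · simp at hdh
      · exact absurd rfl hd1
      · omega
    have hh : 0 < h := Nat.pos_of_ne_zero (by rintro rfl; simp at hdh)
    have hr : 0 < r := by nlinarith
    have hf (j : ℕ) (hj : j ∈ range h) : f j ⟨0, hr⟩ = if j = 0 then 1 else 0 := by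
      have : d * (j + 1) ≤ d * h := Nat.mul_le_mul_left d (mem_range.mp hj)
      have hlt : d * j < r := by rw [mul_add_one] at this; omega
      rw [show f j = _ from redBasis_natCast hlt, Pi.single_apply]
      have hd0 : d ≠ 0 := by omega
      simp [Fin.ext_iff, eq_comm, hd0]
    intro hu
    have := congrFun hu ⟨0, hr⟩
    rw [Finset.sum_apply, sum_congr rfl hf, sum_ite_eq', if_pos (mem_range.mpr hh)] at this
    exact one_ne_zero this
  · have hf : f h = f 0 := by
      simp only [f, ← hdh, mul_zero]
      simp
    have := sum_range_succ' f h
    rw [sum_range_succ, hf, add_left_inj] at this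
    simp only [sum_vecMul, f, redBasis_vecMul_shift_pow]
    rw [this]
    exact sum_congr rfl fun j _ => by simp [f, mul_add]

lemma det_shift_pow_sub_one_of_not_coprime {m : ℕ} (hm : ¬ m.Coprime (r + 1)) :
    (shift r ^ m - 1).det = 0 := by
  obtain ⟨u, hu, hfix⟩ := exists_vecMul_shift_pow_eq_self (Nat.gcd_dvd_right m (r + 1)) hm
  obtain ⟨e, he⟩ := Nat.gcd_dvd_left m (r + 1)
  refine exists_vecMul_eq_zero_iff.mp ⟨u, hu, ?_⟩
  rw [vecMul_sub, vecMul_one, he, pow_mul, vecMul_pow_eq_self hfix, sub_self]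

lemma det_sum_range_shift_pow (m : ℕ) :
    (∑ i ∈ range m, shift r ^ i).det = if m.Coprime (r + 1) then 1 else 0 := by
  have h := congrArg det (geom_sum_mul (shift r) m)
  rw [det_mul] at h
  split_ifs with hm
  · rw [det_shift_pow_sub_one_of_coprime hm] at h
    exact mul_right_cancel₀ det_shift_sub_one_ne_zero (h.trans (one_mul _).symm)
  · rw [det_shift_pow_sub_one_of_not_coprime hm] at h
    exact (mul_eq_zero.mp h).resolve_right det_shift_sub_one_ne_zero

lemma mul_shift_apply {N : Matrix (Fin r) (Fin r) ℤ}
    (hN : ∀ i j, N i j = if i ≤ j then -1 else 0) (i j : Fin r) :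
    (N * shift r) i j = if j ≤ i then 1 else 0 := by
  have hterm (k : Fin r) : N i k * shift r k j =
      (if (k : ℕ) = r - 1 then 1 else 0) -
        (if (k : ℕ) + 1 = j ∧ (i : ℕ) ≤ k then 1 else 0) := by
    rw [hN, shift_apply]
    have := k.isLt
    split_ifs <;> simp only [Fin.le_def] at * <;> omega
  have hlast : ∑ k : Fin r, (if (k : ℕ) = r - 1 then (1 : ℤ) else 0) = 1 := by
    rw [sum_eq_single ⟨r - 1, Nat.sub_one_lt_of_lt i.pos⟩
      (fun k _ hk => if_neg (mt Fin.ext hk)) (by simp)]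
    simp
  have hprev : ∑ k : Fin r, (if (k : ℕ) + 1 = j ∧ (i : ℕ) ≤ k then (1 : ℤ) else 0) =
      if (i : ℕ) < j then 1 else 0 := by
    split_ifs with hij
    · rw [sum_eq_single ⟨j - 1, by omega⟩
        (fun k _ hk => if_neg fun h => hk (Fin.ext (by simp only; omega))) (by simp)]
      rw [if_pos (by simp only; omega)]
    · exact sum_eq_zero fun k _ => if_neg fun h => hij (by omega)
  rw [mul_apply, sum_congr rfl fun k _ => hterm k, sum_sub_distrib, hlast, hprev]
  split_ifs <;> simp only [Fin.le_def] at * <;> omega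

lemma det_mul_shift {N : Matrix (Fin r) (Fin r) ℤ}
    (hN : ∀ i j, N i j = if i ≤ j then -1 else 0) : (N * shift r).det = 1 := by
  rw [det_of_isLowerTriangular _ fun i j hij => by simpa [mul_shift_apply hN] using hij]
  simp [mul_shift_apply hN]

end ReducedRegular

theorem stmt_7_general (n r : ℕ)
    (Nr Xr : Matrix (Fin r) (Fin r) ℤ)
    (hNr : ∀ i j : Fin r, Nr i j = if i ≤ j then -1 else 0)
    (hXr : ∀ i j : Fin r, Xr i j =
      if (i : ℕ) = r - 1 then -1
      else if (i : ℕ) + 1 = (j : ℕ) then 1 else 0)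
    (hdet : (Nr * ∑ i ∈ Finset.Icc 1 (n - 1), Xr ^ i).det ≠ 0) :
    (Nr * ∑ i ∈ Finset.Icc 1 (n - 1), Xr ^ i).det = 1 := by
  obtain rfl : Xr = ReducedRegular.shift r := by
    ext i j
    rw [hXr, ReducedRegular.shift_apply]
  rw [Finset.sum_Icc_one_pow, ← mul_assoc, det_mul, ReducedRegular.det_mul_shift hNr, one_mul,
    ReducedRegular.det_sum_range_shift_pow] at hdet ⊢
  simpa using hdet

/-- the integer matrix `F_D = N_r·(X_r + ⋯ + X_r^(n-1))` has
determinant 1 whenever its determinant is nonzero. -/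
theorem stmt_7 (n r : ℕ) (hn : 2 ≤ n) (hr : 2 ≤ r)
    (Nr Xr : Matrix (Fin r) (Fin r) ℤ)
    (hNr : ∀ i j : Fin r, Nr i j = if i ≤ j then -1 else 0)
    (hXr : ∀ i j : Fin r, Xr i j =
      if (i : ℕ) = r - 1 then -1
      else if (i : ℕ) + 1 = (j : ℕ) then 1 else 0)
    (hdet : (Nr * ∑ i ∈ Finset.Icc 1 (n - 1), Xr ^ i).det ≠ 0) :
    (Nr * ∑ i ∈ Finset.Icc 1 (n - 1), Xr ^ i).det = 1 :=
  stmt_7_general n r Nr Xr hNr hXr hdet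
end

section
/- Let r ≥ 2 and set F_D = N_r·(X_r + X_r² + ⋯ + X_r^(n−1)). Then: (1) if n = r+1, then F_D = −N_r; (2) if n = r and r is even, then F_D = −N_r·X_rʳ·(I + X_r) (note X_rʳ = X_r⁻¹), and moreover (I + X_r)·(I + X_r² + X_r⁴ + ⋯ + X_rʳ) = I. -/
/-!
`X_r` is the companion matrix of `1 + x + ⋯ + x^r` acting on row vectors: `e₀ X^k = e_k` for
`k < r` and `e₀ X^r = -(e₀ + ⋯ + e_{r-1})`, so `e₀ T = 0` for `T = 1 + X + ⋯ + X^r`. Since `T`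
commutes with `X` and `e₀` is a cyclic vector, `T = 0`; then `X^(r+1) - 1 = T (X - 1) = 0`, and
every claimed identity is a rearrangement of geometric sums of `X`.
-/

open Matrix

open Finset in
theorem one_add_mul_sum_pow_two_mul {R : Type*} [Semiring R] (x : R) (m : ℕ) :
    (1 + x) * ∑ i ∈ range m, x ^ (2 * i) = ∑ k ∈ range (2 * m), x ^ k := by
  induction m with
  | zero => simp
  | succ m ih =>
    rw [mul_add_one 2 m, sum_range_succ, sum_range_succ, sum_range_succ, mul_add, ih,
      add_mul, one_mul, ← pow_succ', add_assoc]

theorem Matrix.eq_zero_of_vecMul_eq_zero_of_commute {n R : Type*} [Fintype n] [DecidableEq n]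
    [Semiring R] {X T : Matrix n n R} (v : n → R) (hv : ∀ i, ∃ k, v ᵥ* X ^ k = Pi.single i 1)
    (hT : v ᵥ* T = 0) (hXT : Commute X T) : T = 0 := by
  ext i j
  obtain ⟨k, hk⟩ := hv i
  have : Pi.single i 1 ᵥ* T = 0 := by
    rw [← hk, vecMul_vecMul, (hXT.pow_left k).eq, ← vecMul_vecMul, hT, zero_vecMul]
  simpa using congrFun this j

namespace GeomSumCompanion

variable {R : Type*} [Ring R] {r : ℕ} {X : Matrix (Fin r) (Fin r) R}
  (hX : ∀ i j : Fin r, X i j = if (i : ℕ) = r - 1 then -1 else if (i : ℕ) + 1 = j then 1 else 0)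
include hX

theorem row_eq_single_succ (i : Fin r) (hi : (i : ℕ) + 1 < r) :
    X i = Pi.single ⟨i + 1, hi⟩ 1 := by
  funext j
  rw [hX, if_neg (by omega), Pi.single_apply]
  exact if_congr (by simp only [Fin.ext_iff]; omega) rfl rfl

theorem row_last_eq_neg_one (hr : 0 < r) : X ⟨r - 1, by omega⟩ = -1 := by
  funext j
  simp [hX]

theorem single_zero_vecMul_pow [NeZero r] (k : ℕ) (hk : k < r) :
    Pi.single 0 1 ᵥ* X ^ k = Pi.single ⟨k, hk⟩ 1 := by
  induction k with
  | zero => simp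
  | succ k ih =>
    rw [pow_succ, ← vecMul_vecMul, ih (by omega), single_one_vecMul]
    exact row_eq_single_succ hX _ hk

theorem single_zero_vecMul_pow_self [NeZero r] : Pi.single 0 1 ᵥ* X ^ r = -1 := by
  obtain ⟨n, rfl⟩ : ∃ n, r = n + 1 := Nat.exists_eq_add_one.mpr (NeZero.pos r)
  rw [pow_succ, ← vecMul_vecMul, single_zero_vecMul_pow hX n (by omega), single_one_vecMul]
  exact row_last_eq_neg_one hX (by omega)

theorem single_zero_vecMul_geom_sum [NeZero r] :
    Pi.single 0 1 ᵥ* ∑ k ∈ Finset.range (r + 1), X ^ k = 0 := by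
  rw [Finset.sum_range_succ, vecMul_add, single_zero_vecMul_pow_self hX, vecMul_sum,
    ← Fin.sum_univ_eq_sum_range (fun k => Pi.single 0 1 ᵥ* X ^ k)]
  simp_rw [fun k : Fin r => single_zero_vecMul_pow hX k k.isLt, Fin.eta,
    Finset.univ_sum_single fun _ => (1 : R)]
  exact add_neg_cancel 1

theorem geom_sum_eq_zero : ∑ k ∈ Finset.range (r + 1), X ^ k = 0 := by
  rcases r.eq_zero_or_pos with rfl | hr
  · exact Subsingleton.elim _ _
  have : NeZero r := ⟨hr.ne'⟩
  refine eq_zero_of_vecMul_eq_zero_of_commute _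
    (fun i => ⟨i, single_zero_vecMul_pow hX i i.isLt⟩) (single_zero_vecMul_geom_sum hX)
    (Commute.sum_right _ _ _ fun k _ => Commute.self_pow X k)

theorem pow_succ_self_eq_one : X ^ (r + 1) = 1 := by
  rw [← sub_eq_zero, ← geom_sum_mul, geom_sum_eq_zero hX, zero_mul]

theorem sum_Icc_one_pow_eq_neg_one : ∑ i ∈ Finset.Icc 1 r, X ^ i = -1 := by
  have h := geom_sum_eq_zero hX
  rw [Finset.range_eq_Ico, Finset.sum_eq_sum_Ico_succ_bot (Nat.zero_lt_succ r), pow_zero,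
    zero_add, Nat.succ_eq_add_one, Finset.Ico_add_one_right_eq_Icc] at h
  exact eq_neg_of_add_eq_zero_right h

end GeomSumCompanion

open GeomSumCompanion

theorem stmt_8_general (r : ℕ) (hr : 2 ≤ r)
    (Nr Xr : Matrix (Fin r) (Fin r) ℤ)
    (hXr : ∀ i j : Fin r, Xr i j =
      if (i : ℕ) = r - 1 then -1
      else if (i : ℕ) + 1 = (j : ℕ) then 1 else 0) :
    (Nr * ∑ i ∈ Finset.Icc 1 ((r + 1) - 1), Xr ^ i = -Nr) ∧
    (Even r →
      (Nr * ∑ i ∈ Finset.Icc 1 (r - 1), Xr ^ i = -(Nr * Xr ^ r * (1 + Xr))) ∧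
      (1 + Xr) * (∑ i ∈ Finset.range (r / 2 + 1), Xr ^ (2 * i)) = 1) := by
  have hsum := sum_Icc_one_pow_eq_neg_one hXr
  have hpow := pow_succ_self_eq_one hXr
  refine ⟨by rw [Nat.add_sub_cancel, hsum, mul_neg_one], fun hev => ⟨?_, ?_⟩⟩
  · obtain ⟨m, rfl⟩ : ∃ m, r = m + 1 := ⟨r - 1, by omega⟩
    rw [Finset.sum_Icc_succ_top (by omega)] at hsum
    rw [Nat.add_sub_cancel, eq_sub_of_add_eq hsum, mul_add, mul_one, mul_assoc, ← pow_succ, hpow,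
      mul_one, mul_sub, mul_neg_one]
    abel
  · have hhalf : 2 * (r / 2 + 1) = r + 1 + 1 := by obtain ⟨m, rfl⟩ := hev; omega
    rw [one_add_mul_sum_pow_two_mul, hhalf, Finset.sum_range_succ, geom_sum_eq_zero hXr, hpow,
      zero_add]

/-- special cases of `F_D = N_r·(X_r + ⋯ + X_r^(n-1))`:
(1) for `n = r+1`, `F_D = -N_r`; (2) for `n = r` even, `F_D = -N_r·X_r⁻¹·(I + X_r)`
(with `X_r⁻¹ = X_rʳ`), and `(I + X_r)(I + X_r² + X_r⁴ + ⋯ + X_rʳ) = I`. -/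
theorem stmt_8 (r : ℕ) (hr : 2 ≤ r)
    (Nr Xr : Matrix (Fin r) (Fin r) ℤ)
    (hNr : ∀ i j : Fin r, Nr i j = if i ≤ j then -1 else 0)
    (hXr : ∀ i j : Fin r, Xr i j =
      if (i : ℕ) = r - 1 then -1
      else if (i : ℕ) + 1 = (j : ℕ) then 1 else 0) :
    (Nr * ∑ i ∈ Finset.Icc 1 ((r + 1) - 1), Xr ^ i = -Nr) ∧
    (Even r →
      (Nr * ∑ i ∈ Finset.Icc 1 (r - 1), Xr ^ i = -(Nr * Xr ^ r * (1 + Xr))) ∧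
      (1 + Xr) * (∑ i ∈ Finset.range (r / 2 + 1), Xr ^ (2 * i)) = 1) :=
  stmt_8_general r hr Nr Xr hXr
end

section
/- Let r ≥ 2. For every i with 1 ≤ i ≤ r, the i-th power of X_r satisfies X_rⁱ = T_rⁱ + (T_rᵗ)^(r−i+1) − Σ_{s=1}^{r} E_{r−i+1, s}, where E_{jk} denotes the r×r matrix unit with a 1 in position (j,k) and zeros elsewhere. -/
open Matrix



-- powers of the shift matrix
lemma tr_pow_aux (r : ℕ) (Tr : Matrix (Fin r) (Fin r) ℤ)
    (hTr : ∀ i j : Fin r, Tr i j = if (i : ℕ) + 1 = (j : ℕ) then 1 else 0) :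
    ∀ k : ℕ, ∀ a b : Fin r, (Tr ^ k) a b = if (a : ℕ) + k = (b : ℕ) then 1 else 0 := by
  intro k
  induction k with
  | zero =>
    intro a b
    simp [Matrix.one_apply, Fin.ext_iff]
  | succ k ih =>
    intro a b
    rw [pow_succ, Matrix.mul_apply]
    by_cases hb : (b : ℕ) = 0
    · rw [Finset.sum_eq_zero, if_neg (by omega)]
      intro c _
      rw [hTr, if_neg (by omega), mul_zero]
    · rw [Finset.sum_eq_single (⟨(b : ℕ) - 1, by omega⟩ : Fin r)]
      · rw [ih, hTr]
        simp only [if_pos (show (((⟨(b : ℕ) - 1, by omega⟩ : Fin r) : ℕ)) + 1 = (b : ℕ) by simp; omega), mul_one]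
        split_ifs <;> simp_all <;> omega
      · intro c _ hc
        rw [hTr, if_neg (by simp [Fin.ext_iff] at hc ⊢; omega), mul_zero]
      · intro h; exact absurd (Finset.mem_univ _) h

-- (M * Tr) a b for b ≥ 1
lemma mul_tr_pos (r : ℕ) (M Tr : Matrix (Fin r) (Fin r) ℤ)
    (hTr : ∀ i j : Fin r, Tr i j = if (i : ℕ) + 1 = (j : ℕ) then 1 else 0)
    (a b : Fin r) (hb : 1 ≤ (b : ℕ)) :
    (M * Tr) a b = M a ⟨(b : ℕ) - 1, by omega⟩ := by
  rw [Matrix.mul_apply, Finset.sum_eq_single (⟨(b : ℕ) - 1, by omega⟩ : Fin r)]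
  · rw [hTr, if_pos (by simp; omega), mul_one]
  · intro c _ hc
    rw [hTr, if_neg (by simp [Fin.ext_iff] at hc ⊢; omega), mul_zero]
  · intro h; exact absurd (Finset.mem_univ _) h

lemma mul_tr_zero (r : ℕ) (M Tr : Matrix (Fin r) (Fin r) ℤ)
    (hTr : ∀ i j : Fin r, Tr i j = if (i : ℕ) + 1 = (j : ℕ) then 1 else 0)
    (a b : Fin r) (hb : (b : ℕ) = 0) :
    (M * Tr) a b = 0 := by
  rw [Matrix.mul_apply, Finset.sum_eq_zero]
  intro c _
  rw [hTr, if_neg (by omega), mul_zero]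

-- (M * C) where C has column of the row-indicator r-1
lemma mul_col (r : ℕ) (hr : 1 ≤ r) (M : Matrix (Fin r) (Fin r) ℤ)
    (a b : Fin r) :
    (M * Matrix.of (fun c _ : Fin r => if (c : ℕ) = r - 1 then (1 : ℤ) else 0)) a b
      = M a ⟨r - 1, by omega⟩ := by
  rw [Matrix.mul_apply, Finset.sum_eq_single (⟨r - 1, by omega⟩ : Fin r)]
  · simp
  · intro c _ hc
    simp only [Matrix.of_apply]
    rw [if_neg (by simp [Fin.ext_iff] at hc ⊢; omega), mul_zero]
  · intro h; exact absurd (Finset.mem_univ _) h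

lemma rhs_apply (r : ℕ) (Tr : Matrix (Fin r) (Fin r) ℤ)
    (hTr : ∀ i j : Fin r, Tr i j = if (i : ℕ) + 1 = (j : ℕ) then 1 else 0)
    (i : ℕ) (a b : Fin r) :
    (Tr ^ i + (Trᵀ) ^ (r - i + 1) -
        Matrix.of (fun j _ : Fin r => if (j : ℕ) = r - i then (1 : ℤ) else 0)) a b
      = (if (a : ℕ) + i = (b : ℕ) then 1 else 0)
        + (if (b : ℕ) + (r - i + 1) = (a : ℕ) then 1 else 0)
        - (if (a : ℕ) = r - i then 1 else 0) := by
  rw [Matrix.sub_apply, Matrix.add_apply, ← Matrix.transpose_pow, Matrix.transpose_apply,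
    tr_pow_aux r Tr hTr, tr_pow_aux r Tr hTr]
  rfl


/-- for `1 ≤ i ≤ r`,
`X_rⁱ = T_rⁱ + (T_rᵗ)^(r-i+1) - Σ_s E_{r-i+1,s}` (1-based row `r-i+1`
corresponds to the 0-based row `r-i`). -/
theorem stmt_9 (r : ℕ) (hr : 2 ≤ r)
    (Xr Tr : Matrix (Fin r) (Fin r) ℤ)
    (hXr : ∀ i j : Fin r, Xr i j =
      if (i : ℕ) = r - 1 then -1
      else if (i : ℕ) + 1 = (j : ℕ) then 1 else 0)
    (hTr : ∀ i j : Fin r, Tr i j = if (i : ℕ) + 1 = (j : ℕ) then 1 else 0) :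
    ∀ i : ℕ, 1 ≤ i → i ≤ r →
      Xr ^ i = Tr ^ i + (Trᵀ) ^ (r - i + 1) -
        Matrix.of (fun j _ : Fin r => if (j : ℕ) = r - i then (1 : ℤ) else 0) := by
  have hXdec : Xr = Tr - Matrix.of (fun c _ : Fin r => if (c : ℕ) = r - 1 then (1 : ℤ) else 0) := by
    ext c b
    rw [hXr, Matrix.sub_apply, hTr]
    simp only [Matrix.of_apply]
    have := b.isLt
    split_ifs <;> omega
  intro i
  induction i with
  | zero => intro h; omega
  | succ i ih =>
    intro _ hir
    rcases Nat.eq_zero_or_pos i with h0 | hpos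
    · subst h0
      ext a b
      rw [pow_one, hXr, rhs_apply r Tr hTr]
      have := a.isLt
      have := b.isLt
      split_ifs <;> omega
    · have key := ih hpos (by omega)
      ext a b
      rw [pow_succ, key, rhs_apply r Tr hTr (i + 1) a b]
      rw [hXdec]
      rw [mul_sub, Matrix.sub_apply, mul_col r (by omega)]
      have ha := a.isLt
      have hbl := b.isLt
      by_cases hb : (b : ℕ) = 0
      · rw [mul_tr_zero r _ Tr hTr a b hb, rhs_apply r Tr hTr]
        simp only [Fin.val_mk]
        split_ifs <;> omega
      · rw [mul_tr_pos r _ Tr hTr a b (by omega), rhs_apply r Tr hTr, rhs_apply r Tr hTr]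
        simp only [Fin.val_mk]
        split_ifs <;> omega
end

section
/- Let r ≥ 2. Then: (1) for every i with 0 ≤ i ≤ r, X_rⁱ·(I − T_r) = T_rⁱ − T_r^(i+1) + (T_rᵗ)^(r−i+1) − (T_rᵗ)^(r−i); and (2) for every i with 1 ≤ i ≤ r, X_r^(r+1−i)·(I − T_r) = −(X_r^(i−1)·(I − T_r))ᵗ (here X_r^(r+1−i) = X_r^(−i) since X_r^(r+1) = I). -/
open Matrix

lemma auxCo {r : ℕ} (m : ℕ) :
    (∑ c : Fin r, if m = (c : ℕ) then (1 : ℤ) else 0) = if m < r then 1 else 0 := by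
  by_cases hm : m < r
  · rw [if_pos hm, Finset.sum_eq_single (⟨m, hm⟩ : Fin r)]
    · rw [if_pos rfl]
    · intro c _ hc
      rw [if_neg fun h => hc (Fin.ext h.symm)]
    · simp
  · rw [if_neg hm]
    apply Finset.sum_eq_zero
    intro c _
    have := c.isLt
    rw [if_neg (by omega)]

lemma auxShift {r : ℕ} (k b : ℕ) (hb : b < r) :
    (∑ c : Fin r, if (c : ℕ) + k = b then (1 : ℤ) else 0) = if k ≤ b then 1 else 0 := by
  by_cases hk : k ≤ b
  · rw [if_pos hk, Finset.sum_eq_single (⟨b - k, by omega⟩ : Fin r)]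
    · rw [if_pos (by simp; omega)]
    · intro c _ hc
      rw [if_neg]
      intro h
      exact hc (Fin.ext (by simp; omega))
    · simp
  · rw [if_neg hk]
    apply Finset.sum_eq_zero
    intro c _
    rw [if_neg (by omega)]

lemma aux2a {r : ℕ} (p k b : ℕ) (hp : p < r) :
    (∑ c : Fin r, (if p = (c : ℕ) then (1 : ℤ) else 0) * (if (c : ℕ) + k = b then 1 else 0))
      = if p + k = b then 1 else 0 := by
  rw [Finset.sum_eq_single (⟨p, hp⟩ : Fin r)]
  · rw [if_pos rfl, one_mul]
  · intro c _ hc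
    rw [if_neg fun h => hc (Fin.ext h.symm), zero_mul]
  · simp

lemma aux2b {r : ℕ} (p m : ℕ) (hp : p < r) :
    (∑ c : Fin r, (if p = (c : ℕ) then (1 : ℤ) else 0) * (if m = (c : ℕ) then 1 else 0))
      = if m = p then 1 else 0 := by
  rw [Finset.sum_eq_single (⟨p, hp⟩ : Fin r)]
  · rw [if_pos rfl, one_mul]
  · intro c _ hc
    rw [if_neg fun h => hc (Fin.ext h.symm), zero_mul]
  · simp

/-- (1) for `0 ≤ i ≤ r`,
`X_rⁱ(I - T_r) = T_rⁱ - T_r^(i+1) + (T_rᵗ)^(r-i+1) - (T_rᵗ)^(r-i)`; and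
(2) for `1 ≤ i ≤ r`, `X_r^(r+1-i)(I - T_r) = -(X_r^(i-1)(I - T_r))ᵗ`
(here `X_r^(r+1-i) = X_r^(-i)` since `X_r^(r+1) = I`). -/
theorem stmt_10 (r : ℕ) (hr : 2 ≤ r)
    (Xr Tr : Matrix (Fin r) (Fin r) ℤ)
    (hXr : ∀ i j : Fin r, Xr i j =
      if (i : ℕ) = r - 1 then -1
      else if (i : ℕ) + 1 = (j : ℕ) then 1 else 0)
    (hTr : ∀ i j : Fin r, Tr i j = if (i : ℕ) + 1 = (j : ℕ) then 1 else 0) :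
    (∀ i : ℕ, i ≤ r →
      Xr ^ i * (1 - Tr) = Tr ^ i - Tr ^ (i + 1) + (Trᵀ) ^ (r - i + 1) - (Trᵀ) ^ (r - i)) ∧
    (∀ i : ℕ, 1 ≤ i → i ≤ r →
      Xr ^ (r + 1 - i) * (1 - Tr) = -(Xr ^ (i - 1) * (1 - Tr))ᵀ) := by
  -- entries of powers of Tr
  have Tpow : ∀ (k : ℕ) (a b : Fin r),
      (Tr ^ k) a b = if (a : ℕ) + k = (b : ℕ) then 1 else 0 := by
    intro k
    induction k with
    | zero =>
      intro a b
      rw [pow_zero, Matrix.one_apply]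
      by_cases h : a = b
      · rw [if_pos h, if_pos (by simp [h])]
      · rw [if_neg h, if_neg (by simp only [Nat.add_zero]; exact fun hh => h (Fin.ext hh))]
    | succ k ih =>
      intro a b
      have hb := b.isLt
      have haa := a.isLt
      rw [pow_succ', Matrix.mul_apply]
      by_cases ha : (a : ℕ) + 1 < r
      · simp only [hTr, ih]
        rw [aux2a _ _ _ ha]
        exact if_congr (by omega) rfl rfl
      · rw [if_neg (by omega)]
        apply Finset.sum_eq_zero
        intro c _
        have := c.isLt
        rw [hTr, if_neg (by omega), zero_mul]
  -- high powers of Tr vanish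
  have Tz : ∀ k : ℕ, r ≤ k → Tr ^ k = 0 := by
    intro k hk
    ext a b
    have hb := b.isLt
    rw [Tpow, Matrix.zero_apply, if_neg (by omega)]
  -- entries of powers of Trᵀ
  have Ttpow : ∀ (k : ℕ) (a b : Fin r),
      ((Trᵀ) ^ k) a b = if (b : ℕ) + k = (a : ℕ) then 1 else 0 := by
    intro k a b
    rw [← Matrix.transpose_pow, Matrix.transpose_apply, Tpow]
  have part1 : ∀ i : ℕ, i ≤ r →
      Xr ^ i * (1 - Tr) = Tr ^ i - Tr ^ (i + 1) + (Trᵀ) ^ (r - i + 1) - (Trᵀ) ^ (r - i) := by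
    intro i
    induction i with
    | zero =>
      intro _
      have h1 : (Trᵀ) ^ (r - 0 + 1) = 0 := by
        rw [← Matrix.transpose_pow, Tz _ (by omega), Matrix.transpose_zero]
      have h2 : (Trᵀ) ^ (r - 0) = 0 := by
        rw [← Matrix.transpose_pow, Tz _ (by omega), Matrix.transpose_zero]
      rw [pow_zero, one_mul, h1, h2, pow_zero, pow_one, add_zero, sub_zero]
    | succ i ih =>
      intro hi
      rw [pow_succ', Matrix.mul_assoc, ih (by omega)]
      ext a b
      have hb := b.isLt
      have haa := a.isLt
      rw [Matrix.mul_apply]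
      simp only [Matrix.sub_apply, Matrix.add_apply, Tpow, Ttpow]
      by_cases ha : (a : ℕ) = r - 1
      · have hXa : ∀ c : Fin r, Xr a c = -1 := fun c => by rw [hXr, if_pos ha]
        simp only [hXa, neg_one_mul]
        rw [Finset.sum_neg_distrib, Finset.sum_sub_distrib, Finset.sum_add_distrib,
          Finset.sum_sub_distrib, auxShift _ _ hb, auxShift _ _ hb, auxCo, auxCo]
        split_ifs <;> omega
      · have har : (a : ℕ) + 1 < r := by omega
        have hXa : ∀ c : Fin r, Xr a c = if (a : ℕ) + 1 = (c : ℕ) then 1 else 0 :=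
          fun c => by rw [hXr, if_neg ha]
        simp only [hXa, mul_sub, mul_add]
        rw [Finset.sum_sub_distrib, Finset.sum_add_distrib, Finset.sum_sub_distrib,
          aux2a _ _ _ har, aux2a _ _ _ har, aux2b _ _ har, aux2b _ _ har]
        split_ifs <;> omega
  refine ⟨part1, ?_⟩
  intro i h1 h2
  rw [part1 (r + 1 - i) (by omega), part1 (i - 1) (by omega)]
  simp only [← Matrix.transpose_pow, Matrix.transpose_sub, Matrix.transpose_add,
    Matrix.transpose_transpose]
  rw [show r - (r + 1 - i) + 1 = i - 1 + 1 from by omega,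
    show r - (r + 1 - i) = i - 1 from by omega,
    show r + 1 - i = r - (i - 1) from by omega]
  abel
end

section
/- Let n = r be even, r ≥ 2. Then H_D is invertible over ℚ and its inverse, with entries indexed by a, b ∈ {1, …, r²}, satisfies: (H_D⁻¹)_{ab} = (H_D⁻¹)_{a+c, b+c} for all admissible c ∈ ℤ (entries are constant along diagonals); (H_D⁻¹)_{aa} = 0; and for b > a, writing m = (b−a) mod (r+1), one has (H_D⁻¹)_{ab} = 0 if m = 1, (H_D⁻¹)_{ab} = 1 if m = 0 or m is odd with m ≥ 3, and (H_D⁻¹)_{ab} = −1 if m is even with m ≥ 2; moreover (H_D⁻¹)_{ba} = −(H_D⁻¹)_{ab}. -/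
/-!
The claimed inverse is the Toeplitz matrix `K a b = g (b - a)` with `g = DipperDonkin.symbol r`,
an odd function whose value at `d > 0` depends only on `d mod (r + 1)`.

Row `a + r` of `H` minus row `a` is minus the indicator of the window `[a, a + r]`, and for
`a < r` row `a` is the indicator of `{b ≥ r | b mod r ≤ a}`. Hence `H * K = 1` reduces to two
summation identities for `g`: window sums `∑_{k ≤ r} g (d - k) = [d = 0] - [d = r]`, and stride
sums `∑_{0 < β < r} g (w - β r) = [w = 0] - [w = -1]` for `1 - r ≤ w < r²`. Both telescope through
explicit primitives of `g` for the steps `1` and `r`, and evaluating those is a residue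
computation in which the evenness of `r` enters.
-/

open Finset

theorem Nat.le_iff_div_lt_or_div_eq_and_mod_le {a b r : ℕ} :
    a ≤ b ↔ a / r < b / r ∨ a / r = b / r ∧ a % r ≤ b % r := by
  have ha := Nat.div_add_mod' a r
  have hb := Nat.div_add_mod' b r
  constructor
  · intro h
    rcases (Nat.div_le_div_right (c := r) h).lt_or_eq with h' | h'
    · exact Or.inl h'
    · refine Or.inr ⟨h', ?_⟩
      rw [h'] at ha
      omega
  · rintro (h | ⟨h, h'⟩)
    · exact (Nat.lt_of_div_lt_div h).le
    · rw [h] at ha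
      omega

theorem Int.emod_eq_cases (P z : ℤ) :
    (-P ≤ z → z < 0 → z % P = z + P) ∧ (0 ≤ z → z < P → z % P = z) ∧
      (P ≤ z → z < 2 * P → z % P = z - P) := by
  refine ⟨fun h1 h2 => ?_, Int.emod_eq_of_lt, fun h1 h2 => ?_⟩
  · rw [← Int.add_emod_right]; exact Int.emod_eq_of_lt (by omega) (by omega)
  · rw [← Int.sub_emod_right]; exact Int.emod_eq_of_lt (by omega) (by omega)

theorem Finset.sum_range_sub_mul_eq {G : Type*} [AddCommGroup G] {f g : ℤ → G} {c : ℤ}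
    (h : ∀ y, f y - f (y - c) = g y) (x : ℤ) (n : ℕ) :
    ∑ k ∈ range n, g (x - k * c) = f x - f (x - n * c) := by
  have := sum_range_sub' (fun k : ℕ => f (x - k * c)) n
  simp only [Nat.cast_zero, zero_mul, sub_zero] at this
  rw [← this]
  refine sum_congr rfl fun k _ => ?_
  rw [← h]
  congr 2
  push_cast
  ring

namespace DipperDonkin

def coeff (m : ℤ) : ℚ := if m = 1 then 0 else if m = 0 ∨ Odd m then 1 else -1

def symbol (r : ℕ) (d : ℤ) : ℚ := d.sign * coeff (|d| % (r + 1))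

def primitiveCoeff (m : ℤ) : ℚ := if m ≠ 0 ∧ Even m then -1 else 0

-- For `d ≥ 0` this is `∑_{0 < x ≤ d} symbol r x`; the negative side mirrors it: `d ↔ -1 - d`.
def primitive (r : ℕ) (d : ℤ) : ℚ :=
  if 0 ≤ d then primitiveCoeff (d % (r + 1)) else primitiveCoeff ((-1 - d) % (r + 1))

def strideCoeff (r : ℕ) (m : ℤ) : ℚ :=
  if 2 ≤ m ∧ m ≤ r + 2 then (if Even m then -1 else 1) else 0

-- The analogue of `primitive` for steps of length `r`, mirrored by `y ↔ -r - y`.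
def stridePrimitive (r : ℕ) (y : ℤ) : ℚ :=
  if 0 ≤ y then strideCoeff r (y % (2 * r + 2)) else strideCoeff r ((-r - y) % (2 * r + 2))

variable {r : ℕ}

theorem symbol_neg (d : ℤ) : symbol r (-d) = -symbol r d := by
  simp [symbol, Int.sign_neg, abs_neg]

theorem symbol_of_pos {d : ℤ} (hd : 0 < d) : symbol r d = coeff (d % (r + 1)) := by
  simp [symbol, Int.sign_eq_one_of_pos hd, abs_of_pos hd]

theorem symbol_of_neg {d : ℤ} (hd : d < 0) : symbol r d = -coeff ((-d) % (r + 1)) := by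
  rw [← neg_neg d, symbol_neg, symbol_of_pos (by omega), neg_neg]

theorem primitiveCoeff_emod_sub_one (hr2 : 2 ≤ r) (hr : Even r) (x : ℤ) :
    primitiveCoeff (x % (r + 1)) - primitiveCoeff ((x - 1) % (r + 1)) = coeff (x % (r + 1)) := by
  obtain ⟨s, hs⟩ := hr
  rw [← ((Int.mod_modEq x _).sub_right 1).eq]
  have := Int.emod_eq_cases (r + 1) (x % (r + 1) - 1)
  have := Int.emod_nonneg x (by omega : (r : ℤ) + 1 ≠ 0)
  have := Int.emod_lt_of_pos x (by omega : (0 : ℤ) < r + 1)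
  generalize x % (r + 1) = m at *
  unfold primitiveCoeff coeff
  simp only [Int.even_iff, Int.odd_iff]
  split_ifs <;> first | omega | norm_num

theorem primitive_sub_primitive_sub_one (hr2 : 2 ≤ r) (hr : Even r) (d : ℤ) :
    primitive r d - primitive r (d - 1) = symbol r d := by
  rcases lt_trichotomy d 0 with hd | rfl | hd
  · have key := primitiveCoeff_emod_sub_one hr2 hr (-d)
    rw [primitive, primitive, if_neg (by omega), if_neg (by omega), symbol_of_neg hd,
      show -1 - d = -d - 1 by ring, show -1 - (d - 1) = -d by ring]
    linarith
  · simp [primitive, symbol]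
  · rw [primitive, primitive, if_pos hd.le, if_pos (by omega), symbol_of_pos hd]
    exact primitiveCoeff_emod_sub_one hr2 hr d

theorem primitive_sub_primitive_sub_succ (hr : Even r) (d : ℤ) :
    primitive r d - primitive r (d - (r + 1)) =
      (if d = 0 then 1 else 0) - (if d = r then 1 else 0) := by
  obtain ⟨s, hs⟩ := hr
  have e1 : (d - (r + 1)) % (r + 1) = d % (r + 1) := Int.sub_emod_right _ _
  have e2 : (-1 - (d - (r + 1))) % (r + 1) = (-1 - d) % (r + 1) := by
    rw [show -1 - (d - (r + 1)) = -1 - d + (r + 1) by ring, Int.add_emod_right]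
  have := (Int.emod_eq_cases (r + 1) d).2.1
  have := (Int.emod_eq_cases (r + 1) (-1 - d)).1
  have := Int.emod_nonneg d (by omega : (r : ℤ) + 1 ≠ 0)
  have := Int.emod_nonneg (-1 - d) (by omega : (r : ℤ) + 1 ≠ 0)
  unfold primitive primitiveCoeff
  rw [e1, e2]
  simp only [Int.even_iff]
  generalize d % (r + 1) = m at *
  generalize (-1 - d) % (r + 1) = m' at *
  split_ifs <;> first | omega | norm_num

theorem strideCoeff_emod_sub (hr2 : 2 ≤ r) (hr : Even r) (x : ℤ) :
    strideCoeff r (x % (2 * r + 2)) - strideCoeff r ((x - r) % (2 * r + 2)) =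
      coeff (x % (r + 1)) := by
  obtain ⟨s, hs⟩ := hr
  rw [← ((Int.mod_modEq x _).sub_right (r : ℤ)).eq,
    ← Int.emod_emod_of_dvd x (⟨2, by ring⟩ : (r : ℤ) + 1 ∣ 2 * r + 2)]
  have := Int.emod_eq_cases (2 * r + 2) (x % (2 * r + 2) - r)
  have := Int.emod_eq_cases (r + 1) (x % (2 * r + 2))
  have := Int.emod_nonneg x (by omega : 2 * (r : ℤ) + 2 ≠ 0)
  have := Int.emod_lt_of_pos x (by omega : (0 : ℤ) < 2 * r + 2)
  generalize x % (2 * r + 2) = m at *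
  unfold strideCoeff coeff
  simp only [Int.even_iff, Int.odd_iff]
  split_ifs <;> first | omega | norm_num

theorem stridePrimitive_sub_stridePrimitive_sub (hr2 : 2 ≤ r) (hr : Even r) (y : ℤ) :
    stridePrimitive r y - stridePrimitive r (y - r) = symbol r y := by
  rcases lt_trichotomy y 0 with hy | rfl | hy
  · have key := strideCoeff_emod_sub hr2 hr (-y)
    rw [stridePrimitive, stridePrimitive, if_neg (by omega), if_neg (by omega), symbol_of_neg hy,
      show -(r : ℤ) - y = -y - r by ring, show -(r : ℤ) - (y - r) = -y by ring]
    linarith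
  · simp [stridePrimitive, symbol, show r ≠ 0 by omega]
  · rcases le_or_gt (r : ℤ) y with hyr | hyr
    · rw [stridePrimitive, stridePrimitive, if_pos hy.le, if_pos (by omega), symbol_of_pos hy]
      exact strideCoeff_emod_sub hr2 hr y
    · obtain ⟨s, hs⟩ := hr
      rw [stridePrimitive, stridePrimitive, if_pos hy.le, if_neg (by omega), symbol_of_pos hy,
        show -(r : ℤ) - (y - r) = -y by ring]
      have := (Int.emod_eq_cases (2 * r + 2) y).2.1
      have := (Int.emod_eq_cases (2 * r + 2) (-y)).1
      have := (Int.emod_eq_cases (r + 1) y).2.1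
      unfold strideCoeff coeff
      simp only [Int.even_iff, Int.odd_iff]
      generalize y % (2 * r + 2) = m at *
      generalize (-y) % (2 * r + 2) = m' at *
      generalize y % (r + 1) = m'' at *
      split_ifs <;> first | omega | norm_num

theorem stridePrimitive_sub_sub_sq (hr2 : 2 ≤ r) (hr : Even r) {w : ℤ} (hw1 : 1 - r ≤ w)
    (hw2 : w ≤ r * r - 1) :
    stridePrimitive r (w - r) - stridePrimitive r (w - r * r) =
      (if w = 0 then 1 else 0) - (if w = -1 then 1 else 0) := by
  obtain ⟨s, hs⟩ := hr
  have hs' : (r : ℤ) = s + s := by exact_mod_cast hs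
  have e1 : (-r - (w - r * r)) % (2 * r + 2) = (2 - w) % (2 * r + 2) := by
    rw [show -r - (w - r * r) = 2 - w + (s - 1) * (2 * r + 2) by rw [hs']; ring,
      Int.add_mul_emod_self_right]
  have e2 : (r + 4 - (w - r) % (2 * r + 2)) % (2 * r + 2) = (2 - w) % (2 * r + 2) := by
    rw [((Int.mod_modEq (w - r) _).sub_left _).eq,
      show (r : ℤ) + 4 - (w - r) = 2 - w + (2 * r + 2) by ring, Int.add_emod_right]
  have := Int.emod_eq_cases (2 * r + 2) (r + 4 - (w - r) % (2 * r + 2))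
  have := Int.emod_eq_cases (2 * r + 2) (-r - (w - r))
  have := Int.emod_eq_cases (2 * r + 2) (2 - w)
  have := Int.emod_nonneg (w - r) (by omega : 2 * (r : ℤ) + 2 ≠ 0)
  have := Int.emod_lt_of_pos (w - r) (by omega : (0 : ℤ) < 2 * r + 2)
  unfold stridePrimitive strideCoeff
  rw [if_neg (show ¬0 ≤ w - r * r by nlinarith), e1]
  simp only [Int.even_iff]
  generalize (w - r) % (2 * r + 2) = m at *
  generalize (2 - w) % (2 * r + 2) = m' at *
  generalize (-r - (w - r)) % (2 * r + 2) = m'' at *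
  split_ifs <;> first | omega | norm_num

theorem sum_range_symbol_sub (hr2 : 2 ≤ r) (hr : Even r) (d : ℤ) :
    ∑ k ∈ range (r + 1), symbol r (d - k) =
      (if d = 0 then 1 else 0) - (if d = r then 1 else 0) := by
  have := sum_range_sub_mul_eq (primitive_sub_primitive_sub_one hr2 hr) d (r + 1)
  simp only [mul_one, Nat.cast_add, Nat.cast_one] at this
  rw [this, primitive_sub_primitive_sub_succ hr]

theorem sum_Ico_symbol_sub_mul (hr2 : 2 ≤ r) (hr : Even r) {w : ℤ} (hw1 : 1 - r ≤ w)
    (hw2 : w ≤ r * r - 1) :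
    ∑ β ∈ Ico 1 r, symbol r (w - β * r) =
      (if w = 0 then 1 else 0) - (if w = -1 then 1 else 0) := by
  have := sum_range_sub_mul_eq (stridePrimitive_sub_stridePrimitive_sub hr2 hr) (w - r) (r - 1)
  rw [sum_Ico_eq_sum_range, ← stridePrimitive_sub_sub_sq hr2 hr hw1 hw2,
    show w - r * r = w - r - ((r - 1 : ℕ) : ℤ) * r by
      push_cast [Nat.cast_sub (by omega : 1 ≤ r)]; ring,
    ← this]
  refine sum_congr rfl fun k _ => ?_
  congr 1
  push_cast
  ring

def entry (r a b : ℕ) : ℚ :=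
  if a / r = b / r then 0
  else if a / r < b / r then (if b % r ≤ a % r then 1 else 0)
  else (if a % r ≤ b % r then -1 else 0)

theorem entry_add_right (hr : 0 < r) (a b : ℕ) :
    entry r (a + r) b = entry r a b - if b ∈ Icc a (a + r) then 1 else 0 := by
  have h2 := Nat.le_iff_div_lt_or_div_eq_and_mod_le (a := b) (b := a + r) (r := r)
  rw [Nat.add_div_right a hr, Nat.add_mod_right] at h2
  unfold entry
  simp only [Nat.add_div_right a hr, Nat.add_mod_right, mem_Icc,
    Nat.le_iff_div_lt_or_div_eq_and_mod_le (a := a) (b := b) (r := r), h2]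
  generalize a / r = α, b / r = β
  split_ifs <;> first | omega | norm_num

theorem entry_of_lt {i : ℕ} (hi : i < r) (b : ℕ) :
    entry r i b = if r ≤ b ∧ b % r ≤ i then 1 else 0 := by
  have h := Nat.div_pos_iff (a := b) (b := r)
  unfold entry
  rw [Nat.div_eq_of_lt hi, Nat.mod_eq_of_lt hi]
  generalize b / r = β at *
  split_ifs <;> first | omega | norm_num

def rowSum (r a c : ℕ) : ℚ := ∑ b ∈ range (r * r), entry r a b * symbol r (c - b)

theorem rowSum_add_right (hr2 : 2 ≤ r) (hr : Even r) {a : ℕ} (ha : a + r < r * r) (c : ℕ) :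
    rowSum r (a + r) c =
      rowSum r a c - ((if a = c then 1 else 0) - (if a + r = c then 1 else 0)) := by
  have hsub : Icc a (a + r) ⊆ range (r * r) := fun b hb => mem_range.2 (by simp at hb; omega)
  simp only [rowSum, entry_add_right (by omega : 0 < r), sub_mul, sum_sub_distrib, ite_mul,
    one_mul, zero_mul, sum_ite_mem, inter_eq_right.2 hsub]
  rw [← Finset.Ico_add_one_right_eq_Icc, sum_Ico_eq_sum_range,
    show a + r + 1 - a = r + 1 by omega]
  have hwindow : ∑ k ∈ range (r + 1), symbol r (c - (a + k : ℕ)) =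
      ∑ k ∈ range (r + 1), symbol r ((c - a : ℤ) - k) :=
    sum_congr rfl fun k _ => by push_cast; ring_nf
  have e1 : ((c : ℤ) - a = 0) ↔ a = c := by omega
  have e2 : ((c : ℤ) - a = r) ↔ a + r = c := by omega
  rw [hwindow, sum_range_symbol_sub hr2 hr]
  simp only [e1, e2]

theorem sum_range_mul_self_ite {M : Type*} [AddCommMonoid M] (f : ℕ → M) {i : ℕ}
    (hi : i < r) :
    ∑ b ∈ range (r * r), (if r ≤ b ∧ b % r ≤ i then f b else 0) =
      ∑ j ∈ range (i + 1), ∑ β ∈ Ico 1 r, f (β * r + j) := by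
  have hr : 0 < r := by omega
  rw [← sum_filter, ← sum_product']
  refine sum_nbij' (fun b => (b % r, b / r)) (fun x => x.2 * r + x.1) ?_ ?_ ?_ ?_ ?_
  · intro b hb
    simp only [mem_filter, mem_product, mem_range, mem_Ico] at hb ⊢
    rw [Nat.one_le_div_iff hr, Nat.div_lt_iff_lt_mul hr]
    omega
  · rintro ⟨j, β⟩ hx
    simp only [mem_filter, mem_product, mem_range, mem_Ico] at hx ⊢
    rw [Nat.mul_add_mod_self_right, Nat.mod_eq_of_lt (by omega)]
    refine ⟨?_, ?_, by omega⟩ <;> nlinarith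
  · intro b _
    exact Nat.div_add_mod' b r
  · rintro ⟨j, β⟩ hx
    simp only [mem_product, mem_range, mem_Ico] at hx
    rw [Nat.mul_add_mod_self_right, Nat.mod_eq_of_lt (by omega), mul_comm, Nat.mul_add_div hr,
      Nat.div_eq_of_lt (by omega), add_zero]
  · intro b _
    rw [Nat.div_add_mod']

theorem rowSum_of_lt (hr2 : 2 ≤ r) (hr : Even r) {i c : ℕ} (hi : i < r) (hc : c < r * r) :
    rowSum r i c = if i = c then 1 else 0 := by
  simp only [rowSum, entry_of_lt hi, ite_mul, one_mul, zero_mul]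
  rw [sum_range_mul_self_ite _ hi]
  have hc' : (c : ℤ) < r * r := by exact_mod_cast hc
  have hstride : ∀ j ∈ range (i + 1), ∑ β ∈ Ico 1 r, symbol r (c - (β * r + j : ℕ)) =
      (if c + 1 = j + 1 then 1 else 0) - (if c + 1 = j then 1 else 0) := by
    intro j hj
    have hj := mem_range.1 hj
    have e1 : ((c : ℤ) - j = 0) ↔ c + 1 = j + 1 := by omega
    have e2 : ((c : ℤ) - j = -1) ↔ c + 1 = j := by omega
    simp only [← e1, ← e2, ← sum_Ico_symbol_sub_mul hr2 hr (w := c - j) (by omega) (by omega)]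
    refine sum_congr rfl fun β _ => ?_
    push_cast
    ring_nf
  rw [sum_congr rfl hstride, sum_range_sub (fun j => if c + 1 = j then (1 : ℚ) else 0)]
  simp [eq_comm]

theorem rowSum_eq_ite (hr2 : 2 ≤ r) (hr : Even r) {a c : ℕ} (ha : a < r * r) (hc : c < r * r) :
    rowSum r a c = if a = c then 1 else 0 := by
  suffices ∀ q i, i < r → q * r + i < r * r →
      rowSum r (q * r + i) c = if q * r + i = c then 1 else 0 by
    simpa only [Nat.div_add_mod'] using
      this (a / r) (a % r) (Nat.mod_lt a (by omega)) (by rwa [Nat.div_add_mod'])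
  intro q
  induction q with
  | zero =>
    intro i hi _
    simpa using rowSum_of_lt hr2 hr hi hc
  | succ q ih =>
    intro i hi hq
    rw [Nat.succ_mul] at hq ⊢
    rw [show q * r + r + i = q * r + i + r by ring, rowSum_add_right hr2 hr (by omega),
      ih i hi (by omega)]
    split_ifs <;> first | omega | norm_num

def symbolMatrix (r : ℕ) : Matrix (Fin (r * r)) (Fin (r * r)) ℚ :=
  Matrix.of fun a b => symbol r ((b : ℕ) - (a : ℕ) : ℤ)

theorem mul_symbolMatrix_eq_one (hr2 : 2 ≤ r) (hr : Even r)
    {H : Matrix (Fin (r * r)) (Fin (r * r)) ℚ} (hH : ∀ a b, H a b = entry r a b) :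
    H * symbolMatrix r = 1 := by
  ext a c
  simp only [Matrix.mul_apply, Matrix.one_apply, hH, symbolMatrix, Matrix.of_apply]
  rw [Fin.sum_univ_eq_sum_range (fun b => entry r a b * symbol r (c - b)), ← rowSum,
    rowSum_eq_ite hr2 hr a.isLt c.isLt]
  simp only [Fin.val_inj]

theorem symbol_natCast_sub {a b : ℕ} (h : a < b) :
    symbol r ((b : ℤ) - a) =
      if (b - a) % (r + 1) = 1 then 0
      else if (b - a) % (r + 1) = 0 ∨ Odd ((b - a) % (r + 1)) then 1 else -1 := by
  rw [symbol_of_pos (by omega),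
    show ((b : ℤ) - a) % (r + 1) = (((b - a) % (r + 1) : ℕ) : ℤ) by
      push_cast [Nat.cast_sub h.le]; rfl]
  simp only [coeff, Nat.cast_eq_one, Nat.cast_eq_zero, Int.odd_coe_nat]

end DipperDonkin

open DipperDonkin Matrix

/-- for `n = r` even, `H_D` is invertible, its inverse is constant
along diagonals, has zero diagonal, and for `b > a` the entry depends only on
`(b - a) mod (r+1)`: it is `0` for residue `1`, `1` for residue `0` or odd
residues `≥ 3`, and `-1` for even residues `≥ 2`.
Scalar indices `a : Fin (r*r)` decompose as block index `a / r` and in-block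
index `a % r` (0-based versions of the paper's 1-based indices). -/
theorem stmt_11 (r : ℕ) (hr : 2 ≤ r) (hre : Even r)
    (H : Matrix (Fin (r * r)) (Fin (r * r)) ℚ)
    (hH : ∀ a b : Fin (r * r), H a b =
      if (a : ℕ) / r = (b : ℕ) / r then 0
      else if (a : ℕ) / r < (b : ℕ) / r then
        (if (b : ℕ) % r ≤ (a : ℕ) % r then 1 else 0)
      else (if (a : ℕ) % r ≤ (b : ℕ) % r then -1 else 0)) :
    IsUnit H.det ∧
    (∀ a b a' b' : Fin (r * r),
      ((a' : ℕ) : ℤ) - ((a : ℕ) : ℤ) = ((b' : ℕ) : ℤ) - ((b : ℕ) : ℤ) →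
      H⁻¹ a b = H⁻¹ a' b') ∧
    (∀ a : Fin (r * r), H⁻¹ a a = 0) ∧
    (∀ a b : Fin (r * r), a < b →
      (H⁻¹ a b =
        if ((b : ℕ) - (a : ℕ)) % (r + 1) = 1 then 0
        else if ((b : ℕ) - (a : ℕ)) % (r + 1) = 0 ∨ Odd (((b : ℕ) - (a : ℕ)) % (r + 1))
          then 1 else -1) ∧
      H⁻¹ b a = - H⁻¹ a b) := by
  have hinv := mul_symbolMatrix_eq_one hr hre hH
  rw [inv_eq_right_inv hinv]
  refine ⟨isUnit_det_of_right_inverse hinv, fun a b a' b' h => ?_, fun a => ?_,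
    fun a b hab => ⟨symbol_natCast_sub hab, ?_⟩⟩
  · simp only [symbolMatrix, of_apply]
    congr 1
    omega
  · simp [symbolMatrix, symbol]
  · simp only [symbolMatrix, of_apply]
    rw [← symbol_neg, neg_sub]
end
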